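/- arXiv:2309.06211 — 3 statements merged into one kernel-verified Lean document; each statement's English description precedes it below -/
import Mathlib

section
/- The series Σ_{n=0}^∞ (2α)^n u^n(x) converges for every x ∈ [0,r), and the resulting function u is positive and strictly increasing on [0,r), satisfies u(0) = 1, and is a solution of (1/2)D_m D_x u = αu with parameters (a,b) = (1,0); that is, u(x) = 1 + 2α ∫_{[0,x)} (x−z) u(z) m(dz) for all x ∈ [0,r). In particular lim_{x↓0} (u(x)−1)/x = 0. -/
open MeasureTheory Set Filter ENNReal

/-- `u⁰ ≡ 1`, `u^{n+1}(x) = ∫_0^x (∫_{[0,y]} u^n dm) dy`. -/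
noncomputable def useq (m : Measure ℝ) : ℕ → ℝ → ℝ
  | 0 => fun _ => 1
  | n + 1 => fun x => ∫ y in Set.Ioc 0 x, (∫ z in Set.Icc 0 y, useq m n z ∂m)

/-- `u(x) = Σ_{n=0}^∞ (2α)^n u^n(x)`. -/
noncomputable def ufun (m : Measure ℝ) (α : ℝ) (x : ℝ) : ℝ :=
  ∑' n : ℕ, (2 * α) ^ n * useq m n x

/-- `f` is a solution of `(1/2) D_m D_x f = α f` on `[0,r)` with parameters `(a, b)`,
i.e. `f(x) = a + b·x + 2α ∫_{[0,x)} (x−z) f(z) m(dz)` for all `x ∈ [0,r)`. -/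
def IsSol (m : Measure ℝ) (r : EReal) (α a b : ℝ) (f : ℝ → ℝ) : Prop :=
  ∀ x : ℝ, 0 ≤ x → (x : EReal) < r →
    f x = a + b * x + 2 * α * ∫ z in Set.Ico 0 x, (x - z) * f z ∂m

section aux

variable {r : EReal} {m : Measure ℝ} {α : ℝ}

lemma useq_succ (n : ℕ) (x : ℝ) :
    useq m (n + 1) x = ∫ y in Set.Ioc 0 x, (∫ z in Set.Icc 0 y, useq m n z ∂m) := rfl

lemma useq_nonneg : ∀ (n : ℕ) (x : ℝ), 0 ≤ useq m n x := by
  intro n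
  induction n with
  | zero => intro x; exact zero_le_one
  | succ n ih =>
    intro x
    rw [useq_succ]
    exact setIntegral_nonneg measurableSet_Ioc fun y _ =>
      setIntegral_nonneg measurableSet_Icc fun z _ => ih z

lemma useq_nonpos (n : ℕ) {x : ℝ} (hx : x ≤ 0) : useq m (n + 1) x = 0 := by
  rw [useq_succ, Set.Ioc_eq_empty (by exact fun h => absurd (h.trans_le hx) (lt_irrefl 0)),
    Measure.restrict_empty, integral_zero_measure]

/-- Monotone global extension of `useq m n` agreeing with it on `Iic b`. -/
lemma useq_ext (hfin : ∀ x : ℝ, 0 ≤ x → (x : EReal) < r → m (Set.Icc 0 x) < ⊤) :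
    ∀ (n : ℕ) (b : ℝ), 0 ≤ b → (b : EReal) < r →
      ∃ h : ℝ → ℝ, Monotone h ∧ (∀ x, 0 ≤ h x) ∧ (∀ x, x ≤ b → h x = useq m n x) ∧
        (∀ x, h x ≤ useq m n b) := by
  intro n
  induction n with
  | zero =>
    intro b _ _
    exact ⟨fun _ => 1, monotone_const, fun _ => zero_le_one, fun _ _ => rfl, fun _ => le_rfl⟩
  | succ n ih =>
    intro b hb hbr
    obtain ⟨h, hmono, hpos, heq, hle⟩ := ih b hb hbr
    have hfb : IsFiniteMeasure (m.restrict (Set.Icc 0 b)) :=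
      ⟨by rw [Measure.restrict_apply_univ]; exact hfin b hb hbr⟩
    have hInt : IntegrableOn h (Set.Icc 0 b) m := by
      refine Integrable.mono' (integrable_const (useq m n b))
        hmono.measurable.stronglyMeasurable.aestronglyMeasurable
        (Filter.Eventually.of_forall fun z => ?_)
      rw [Real.norm_eq_abs, abs_of_nonneg (hpos z)]
      exact hle z
    set G : ℝ → ℝ := fun y => ∫ z in Set.Icc 0 (min y b), h z ∂m with hG
    have hGpos : ∀ y, 0 ≤ G y := fun y =>
      setIntegral_nonneg measurableSet_Icc fun z _ => hpos z
    have hGmono : Monotone G := by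
      intro y1 y2 h12
      exact setIntegral_mono_set
        (hInt.mono_set (Set.Icc_subset_Icc_right (min_le_right _ _)))
        (ae_of_all _ hpos)
        (HasSubset.Subset.eventuallyLE
          (Set.Icc_subset_Icc_right (min_le_min_right b h12)))
    have hGeq : ∀ y, y ≤ b → G y = ∫ z in Set.Icc 0 y, useq m n z ∂m := by
      intro y hy
      rw [hG]
      simp only [min_eq_left hy]
      exact setIntegral_congr_fun measurableSet_Icc fun z hz => heq z (hz.2.trans hy)
    have hGle : ∀ y, G y ≤ G b := by
      intro y
      have : min y b ≤ b := min_le_right _ _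
      calc G y = G (min y b) := by rw [hG]; simp [min_eq_left, min_le_right, min_assoc]
        _ ≤ G b := hGmono this
    -- now build H
    have hvol : IsFiniteMeasure (volume.restrict (Set.Ioc (0:ℝ) b)) :=
      ⟨by rw [Measure.restrict_apply_univ, Real.volume_Ioc]; exact ENNReal.ofReal_lt_top⟩
    have hGInt : IntegrableOn G (Set.Ioc 0 b) volume := by
      refine Integrable.mono' (integrable_const (G b))
        hGmono.measurable.stronglyMeasurable.aestronglyMeasurable
        (Filter.Eventually.of_forall fun y => ?_)
      rw [Real.norm_eq_abs, abs_of_nonneg (hGpos y)]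
      exact hGle y
    set H : ℝ → ℝ := fun x => ∫ y in Set.Ioc 0 (min x b), G y with hH
    have hHeq : ∀ x, x ≤ b → H x = useq m (n + 1) x := by
      intro x hx
      rw [hH, useq_succ]
      simp only [min_eq_left hx]
      exact setIntegral_congr_fun measurableSet_Ioc fun y hy => hGeq y (hy.2.trans hx)
    have hHmono : Monotone H := by
      intro x1 x2 h12
      exact setIntegral_mono_set
        (hGInt.mono_set (Set.Ioc_subset_Ioc_right (min_le_right _ _)))
        (ae_of_all _ hGpos)
        (HasSubset.Subset.eventuallyLE (Set.Ioc_subset_Ioc_right (min_le_min_right b h12)))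
    have hHpos : ∀ x, 0 ≤ H x := fun x => setIntegral_nonneg measurableSet_Ioc fun y _ => hGpos y
    have hHle : ∀ x, H x ≤ useq m (n + 1) b := by
      intro x
      rw [← hHeq b le_rfl]
      calc H x = H (min x b) := by rw [hH]; simp [min_eq_left, min_le_right, min_assoc]
        _ ≤ H b := hHmono (min_le_right _ _)
    exact ⟨H, hHmono, hHpos, hHeq, hHle⟩

/-- useq is integrable on `Icc 0 b` w.r.t. `m`. -/
lemma useq_intOn (hfin : ∀ x : ℝ, 0 ≤ x → (x : EReal) < r → m (Set.Icc 0 x) < ⊤)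
    (n : ℕ) {b : ℝ} (hb : 0 ≤ b) (hbr : (b : EReal) < r) :
    IntegrableOn (useq m n) (Set.Icc 0 b) m := by
  obtain ⟨h, hmono, hpos, heq, hle⟩ := useq_ext hfin n b hb hbr
  have hfb : IsFiniteMeasure (m.restrict (Set.Icc 0 b)) :=
    ⟨by rw [Measure.restrict_apply_univ]; exact hfin b hb hbr⟩
  have hInt : IntegrableOn h (Set.Icc 0 b) m := by
    refine Integrable.mono' (integrable_const (useq m n b))
      hmono.measurable.stronglyMeasurable.aestronglyMeasurable
      (Filter.Eventually.of_forall fun z => ?_)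
    rw [Real.norm_eq_abs, abs_of_nonneg (hpos z)]
    exact hle z
  exact hInt.congr ((ae_restrict_iff' measurableSet_Icc).2
    (ae_of_all _ fun z hz => heq z hz.2))

lemma useq_mono (hfin : ∀ x : ℝ, 0 ≤ x → (x : EReal) < r → m (Set.Icc 0 x) < ⊤)
    (n : ℕ) {x y : ℝ} (hx : 0 ≤ x) (hxy : x ≤ y) (hyr : (y : EReal) < r) :
    useq m n x ≤ useq m n y := by
  obtain ⟨h, hmono, _, heq, _⟩ := useq_ext hfin n y (hx.trans hxy) hyr
  rw [← heq x hxy, ← heq y le_rfl]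
  exact hmono hxy

/-- Monotone extension of `y ↦ ∫ z in Icc 0 y, useq m n z ∂m`. -/
lemma gfun_ext (hfin : ∀ x : ℝ, 0 ≤ x → (x : EReal) < r → m (Set.Icc 0 x) < ⊤)
    (n : ℕ) {b : ℝ} (hb : 0 ≤ b) (hbr : (b : EReal) < r) :
    ∃ G : ℝ → ℝ, Monotone G ∧ (∀ y, 0 ≤ G y) ∧
      (∀ y, y ≤ b → G y = ∫ z in Set.Icc 0 y, useq m n z ∂m) ∧ (∀ y, G y ≤ G b) := by
  obtain ⟨h, hmono, hpos, heq, hle⟩ := useq_ext hfin n b hb hbr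
  have hfb : IsFiniteMeasure (m.restrict (Set.Icc 0 b)) :=
    ⟨by rw [Measure.restrict_apply_univ]; exact hfin b hb hbr⟩
  have hInt : IntegrableOn h (Set.Icc 0 b) m := by
    refine Integrable.mono' (integrable_const (useq m n b))
      hmono.measurable.stronglyMeasurable.aestronglyMeasurable
      (Filter.Eventually.of_forall fun z => ?_)
    rw [Real.norm_eq_abs, abs_of_nonneg (hpos z)]
    exact hle z
  refine ⟨fun y => ∫ z in Set.Icc 0 (min y b), h z ∂m, ?_, ?_, ?_, ?_⟩
  · intro y1 y2 h12
    exact setIntegral_mono_set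
      (hInt.mono_set (Set.Icc_subset_Icc_right (min_le_right _ _)))
      (ae_of_all _ hpos)
      (HasSubset.Subset.eventuallyLE (Set.Icc_subset_Icc_right (min_le_min_right b h12)))
  · exact fun y => setIntegral_nonneg measurableSet_Icc fun z _ => hpos z
  · intro y hy
    simp only [min_eq_left hy]
    exact setIntegral_congr_fun measurableSet_Icc fun z hz => heq z (hz.2.trans hy)
  · intro y
    simp only [min_self]
    exact setIntegral_mono_set hInt (ae_of_all _ hpos)
      (HasSubset.Subset.eventuallyLE (Set.Icc_subset_Icc_right (min_le_right _ _)))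

/-- The inner function is Lebesgue-integrable on `Ioc 0 b`. -/
lemma gfun_intOn (hfin : ∀ x : ℝ, 0 ≤ x → (x : EReal) < r → m (Set.Icc 0 x) < ⊤)
    (n : ℕ) {b : ℝ} (hb : 0 ≤ b) (hbr : (b : EReal) < r) :
    IntegrableOn (fun y => ∫ z in Set.Icc 0 y, useq m n z ∂m) (Set.Ioc 0 b) volume := by
  obtain ⟨G, hGmono, hGpos, hGeq, hGle⟩ := gfun_ext hfin n hb hbr
  have hvol : IsFiniteMeasure (volume.restrict (Set.Ioc (0:ℝ) b)) :=
    ⟨by rw [Measure.restrict_apply_univ, Real.volume_Ioc]; exact ENNReal.ofReal_lt_top⟩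
  have hGInt : IntegrableOn G (Set.Ioc 0 b) volume := by
    refine Integrable.mono' (integrable_const (G b))
      hGmono.measurable.stronglyMeasurable.aestronglyMeasurable
      (Filter.Eventually.of_forall fun y => ?_)
    rw [Real.norm_eq_abs, abs_of_nonneg (hGpos y)]
    exact hGle y
  exact hGInt.congr ((ae_restrict_iff' measurableSet_Ioc).2
    (ae_of_all _ fun y hy => hGeq y hy.2))

/-- Quantitative bound `useq m n y ≤ y^n M^n / n!` for `y ∈ [0,x]`, `M = m(Icc 0 x)`. -/
lemma useq_le (hfin : ∀ x : ℝ, 0 ≤ x → (x : EReal) < r → m (Set.Icc 0 x) < ⊤)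
    {x : ℝ} (hx : 0 ≤ x) (hxr : (x : EReal) < r) :
    ∀ (n : ℕ) (y : ℝ), 0 ≤ y → y ≤ x →
      useq m n y ≤ y ^ n * (m (Set.Icc 0 x)).toReal ^ n / n.factorial := by
  set M : ℝ := (m (Set.Icc 0 x)).toReal with hM
  have hM0 : 0 ≤ M := ENNReal.toReal_nonneg
  intro n
  induction n with
  | zero => intro y _ _; simp [useq]
  | succ n ih =>
    intro y hy hyx
    have hyr : (y : EReal) < r := lt_of_le_of_lt (EReal.coe_le_coe_iff.2 hyx) hxr
    rw [useq_succ]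
    -- bound the inner integral
    have key : ∀ t ∈ Set.Ioc (0:ℝ) y,
        (∫ z in Set.Icc 0 t, useq m n z ∂m) ≤ t ^ n * M ^ (n+1) / n.factorial := by
      intro t ht
      have ht0 : (0:ℝ) ≤ t := ht.1.le
      have htx : t ≤ x := ht.2.trans hyx
      have htr : (t : EReal) < r := lt_of_le_of_lt (EReal.coe_le_coe_iff.2 htx) hxr
      have : IsFiniteMeasure (m.restrict (Set.Icc 0 t)) :=
        ⟨by rw [Measure.restrict_apply_univ]; exact hfin t ht0 htr⟩
      have h1 : (∫ z in Set.Icc 0 t, useq m n z ∂m)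
          ≤ ∫ z in Set.Icc 0 t, t ^ n * M ^ n / n.factorial ∂m := by
        refine setIntegral_mono_on (useq_intOn hfin n ht0 htr) (integrable_const _)
          measurableSet_Icc fun z hz => ?_
        calc useq m n z ≤ z ^ n * M ^ n / n.factorial := ih z hz.1 (hz.2.trans htx)
          _ ≤ t ^ n * M ^ n / n.factorial := by
              gcongr
              exacts [hz.1, hz.2]
      have h2 : (∫ z in Set.Icc 0 t, t ^ n * M ^ n / n.factorial ∂m)
          = (m (Set.Icc 0 t)).toReal * (t ^ n * M ^ n / n.factorial) := by
        rw [setIntegral_const, smul_eq_mul]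
        rfl
      have h3 : (m (Set.Icc 0 t)).toReal ≤ M := by
        rw [hM]
        exact ENNReal.toReal_mono (hfin x hx hxr).ne
          (measure_mono (Set.Icc_subset_Icc_right htx))
      calc (∫ z in Set.Icc 0 t, useq m n z ∂m)
          ≤ (m (Set.Icc 0 t)).toReal * (t ^ n * M ^ n / n.factorial) := h1.trans_eq h2
        _ ≤ M * (t ^ n * M ^ n / n.factorial) := by
            apply mul_le_mul_of_nonneg_right h3
            positivity
        _ = t ^ n * M ^ (n+1) / n.factorial := by ring
    have hInt1 : IntegrableOn (fun t => ∫ z in Set.Icc 0 t, useq m n z ∂m)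
        (Set.Ioc 0 y) volume := gfun_intOn hfin n hy hyr
    have hInt2 : IntegrableOn (fun t : ℝ => t ^ n * M ^ (n+1) / n.factorial)
        (Set.Ioc 0 y) volume :=
      (Continuous.integrableOn_Ioc (by continuity))
    have step : (∫ t in Set.Ioc 0 y, (∫ z in Set.Icc 0 t, useq m n z ∂m))
        ≤ ∫ t in Set.Ioc 0 y, t ^ n * M ^ (n+1) / n.factorial := by
      exact setIntegral_mono_on hInt1 hInt2 measurableSet_Ioc key
    have comp : (∫ t in Set.Ioc 0 y, t ^ n * M ^ (n+1) / n.factorial)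
        = y ^ (n+1) * M ^ (n+1) / (n+1).factorial := by
      rw [← intervalIntegral.integral_of_le hy]
      have : ∫ t in (0:ℝ)..y, t ^ n * M ^ (n+1) / n.factorial
          = (∫ t in (0:ℝ)..y, t ^ n) * (M ^ (n+1) / n.factorial) := by
        rw [← intervalIntegral.integral_mul_const]
        apply intervalIntegral.integral_congr
        intro t _
        ring
      rw [this, integral_pow]
      rw [Nat.factorial_succ]
      push_cast
      field_simp
      simp
    exact step.trans_eq comp

lemma useq_summable (hα : 0 < α) (hfin : ∀ x : ℝ, 0 ≤ x → (x : EReal) < r → m (Set.Icc 0 x) < ⊤)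
    {x : ℝ} (hx : 0 ≤ x) (hxr : (x : EReal) < r) :
    Summable (fun n : ℕ => (2 * α) ^ n * useq m n x) := by
  set M : ℝ := (m (Set.Icc 0 x)).toReal
  refine Summable.of_nonneg_of_le
    (fun n => mul_nonneg (pow_nonneg (by positivity) n) (useq_nonneg n x))
    (fun n => ?_) (Real.summable_pow_div_factorial (2 * α * (x * M)))
  calc (2 * α) ^ n * useq m n x ≤ (2 * α) ^ n * (x ^ n * M ^ n / n.factorial) := by
        apply mul_le_mul_of_nonneg_left (useq_le hfin hx hxr n x hx le_rfl)
        positivity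
    _ = (2 * α * (x * M)) ^ n / n.factorial := by
        rw [mul_pow, mul_pow]
        ring

lemma ufun_of_nonpos {z : ℝ} (hz : z ≤ 0) : ufun m α z = 1 := by
  rw [ufun, tsum_eq_single 0]
  · simp [useq]
  · intro n hn
    obtain ⟨k, rfl⟩ := Nat.exists_eq_succ_of_ne_zero hn
    rw [useq_nonpos k hz, mul_zero]

lemma ufun_zero : ufun m α 0 = 1 := ufun_of_nonpos le_rfl

lemma ufun_ge_one (hα : 0 < α) (hfin : ∀ x : ℝ, 0 ≤ x → (x : EReal) < r → m (Set.Icc 0 x) < ⊤)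
    {x : ℝ} (hx : 0 ≤ x) (hxr : (x : EReal) < r) : 1 ≤ ufun m α x := by
  have h0 : (2 * α) ^ 0 * useq m 0 x = 1 := by simp [useq]
  rw [ufun, ← h0]
  exact Summable.le_tsum (useq_summable hα hfin hx hxr) 0 fun n _ =>
    mul_nonneg (pow_nonneg (by positivity) n) (useq_nonneg n x)

lemma ufun_pos (hα : 0 < α) (hfin : ∀ x : ℝ, 0 ≤ x → (x : EReal) < r → m (Set.Icc 0 x) < ⊤)
    {x : ℝ} (hx : 0 ≤ x) (hxr : (x : EReal) < r) : 0 < ufun m α x :=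
  lt_of_lt_of_le one_pos (ufun_ge_one hα hfin hx hxr)

lemma ufun_mono (hα : 0 < α) (hfin : ∀ x : ℝ, 0 ≤ x → (x : EReal) < r → m (Set.Icc 0 x) < ⊤)
    {x y : ℝ} (hxy : x ≤ y) (hyr : (y : EReal) < r) :
    ufun m α x ≤ ufun m α y := by
  rcases le_or_gt x 0 with hx0 | hx0
  · rw [ufun_of_nonpos hx0]
    rcases le_or_gt y 0 with hy0 | hy0
    · rw [ufun_of_nonpos hy0]
    · exact ufun_ge_one hα hfin hy0.le hyr
  · refine Summable.tsum_le_tsum (fun n => ?_) (useq_summable hα hfin hx0.le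
      (lt_of_le_of_lt (EReal.coe_le_coe_iff.2 hxy) hyr)) (useq_summable hα hfin (hx0.le.trans hxy) hyr)
    exact mul_le_mul_of_nonneg_left (useq_mono hfin n hx0.le hxy hyr)
      (pow_nonneg (by positivity) n)

/-- Monotone extension of `ufun` agreeing with it on `Iic b`. -/
lemma ufun_ext (hα : 0 < α) (hfin : ∀ x : ℝ, 0 ≤ x → (x : EReal) < r → m (Set.Icc 0 x) < ⊤)
    {b : ℝ} (hb : 0 ≤ b) (hbr : (b : EReal) < r) :
    ∃ H : ℝ → ℝ, Monotone H ∧ (∀ x, 0 ≤ H x) ∧ (∀ x, x ≤ b → H x = ufun m α x) ∧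
      (∀ x, H x ≤ ufun m α b) := by
  have key : ∀ x y, x ≤ y → y ≤ b → ufun m α x ≤ ufun m α y := fun x y hxy hyb =>
    ufun_mono hα hfin hxy (lt_of_le_of_lt (EReal.coe_le_coe_iff.2 hyb) hbr)
  refine ⟨fun x => ufun m α (min x b), ?_, ?_, ?_, ?_⟩
  · exact fun x1 x2 h12 => key _ _ (min_le_min_right b h12) (min_le_right _ _)
  · intro x
    show 0 ≤ ufun m α (min x b)
    rcases le_or_gt (min x b) 0 with h | h
    · rw [ufun_of_nonpos h]; exact zero_le_one
    · exact le_trans zero_le_one (ufun_ge_one hα hfin h.le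
        (lt_of_le_of_lt (EReal.coe_le_coe_iff.2 (min_le_right x b)) hbr))
  · intro x hx; show ufun m α (min x b) = ufun m α x; rw [min_eq_left hx]
  · exact fun x => key _ _ (min_le_right _ _) le_rfl

lemma ufun_intOn (hα : 0 < α) (hfin : ∀ x : ℝ, 0 ≤ x → (x : EReal) < r → m (Set.Icc 0 x) < ⊤)
    {b : ℝ} (hb : 0 ≤ b) (hbr : (b : EReal) < r) :
    IntegrableOn (ufun m α) (Set.Icc 0 b) m := by
  obtain ⟨H, hmono, hpos, heq, hle⟩ := ufun_ext hα hfin hb hbr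
  have hfb : IsFiniteMeasure (m.restrict (Set.Icc 0 b)) :=
    ⟨by rw [Measure.restrict_apply_univ]; exact hfin b hb hbr⟩
  have hInt : IntegrableOn H (Set.Icc 0 b) m := by
    refine Integrable.mono' (integrable_const (ufun m α b))
      hmono.measurable.stronglyMeasurable.aestronglyMeasurable
      (Filter.Eventually.of_forall fun z => ?_)
    rw [Real.norm_eq_abs, abs_of_nonneg (hpos z)]
    exact hle z
  exact hInt.congr ((ae_restrict_iff' measurableSet_Icc).2
    (ae_of_all _ fun z hz => heq z hz.2))

lemma integrableOn_sub_mul_useq (hfin : ∀ x : ℝ, 0 ≤ x → (x : EReal) < r → m (Set.Icc 0 x) < ⊤)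
    (n : ℕ) {x : ℝ} (hx : 0 ≤ x) (hxr : (x : EReal) < r) :
    IntegrableOn (fun z => (x - z) * useq m n z) (Set.Icc 0 x) m := by
  obtain ⟨h, hmono, hpos, heq, hle⟩ := useq_ext hfin n x hx hxr
  have hν : IsFiniteMeasure (m.restrict (Set.Icc 0 x)) :=
    ⟨by rw [Measure.restrict_apply_univ]; exact hfin x hx hxr⟩
  have hInt : IntegrableOn (fun z => (x - z) * h z) (Set.Icc 0 x) m := by
    refine Integrable.mono' (integrable_const (x * useq m n x))
      ((measurable_const.sub measurable_id).mul hmono.measurable).stronglyMeasurable.aestronglyMeasurable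
      ((ae_restrict_iff' measurableSet_Icc).2 (ae_of_all _ fun z hz => ?_))
    rw [Real.norm_eq_abs, abs_mul, abs_of_nonneg (sub_nonneg.2 hz.2), abs_of_nonneg (hpos z)]
    exact mul_le_mul (by linarith [hz.1]) (hle z) (hpos z) hx
  exact hInt.congr ((ae_restrict_iff' measurableSet_Icc).2
    (ae_of_all _ fun z hz => by
      show (x - z) * h z = (x - z) * useq m n z
      rw [heq z hz.2]))

lemma useq_succ_eq (hfin : ∀ x : ℝ, 0 ≤ x → (x : EReal) < r → m (Set.Icc 0 x) < ⊤)
    (n : ℕ) {x : ℝ} (hx : 0 ≤ x) (hxr : (x : EReal) < r) :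
    useq m (n + 1) x = ∫ z in Set.Ico 0 x, (x - z) * useq m n z ∂m := by
  obtain ⟨h, hmono, hpos, heq, hle⟩ := useq_ext hfin n x hx hxr
  set μ := volume.restrict (Set.Ioc (0:ℝ) x) with hμdef
  set ν := m.restrict (Set.Icc (0:ℝ) x) with hνdef
  have hμ : IsFiniteMeasure μ :=
    ⟨by rw [Measure.restrict_apply_univ, Real.volume_Ioc]; exact ENNReal.ofReal_lt_top⟩
  have hν : IsFiniteMeasure ν := ⟨by rw [Measure.restrict_apply_univ]; exact hfin x hx hxr⟩
  set f : ℝ → ℝ → ℝ := fun y z => if z ≤ y then h z else 0 with hf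
  have hFmeas : Measurable (Function.uncurry f) := by
    exact Measurable.ite (measurableSet_le measurable_snd measurable_fst)
      (hmono.measurable.comp measurable_snd) measurable_const
  have hFint : Integrable (Function.uncurry f) (μ.prod ν) := by
    refine Integrable.mono' (integrable_const (useq m n x))
      hFmeas.stronglyMeasurable.aestronglyMeasurable ?_
    have hnull : ∀ᵐ p : ℝ × ℝ ∂(μ.prod ν), p.2 ∈ Set.Icc (0:ℝ) x := by
      rw [ae_iff]
      have hset : {p : ℝ × ℝ | ¬ p.2 ∈ Set.Icc (0:ℝ) x} = Set.univ ×ˢ (Set.Icc (0:ℝ) x)ᶜ := by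
        ext p; simp
      have hν0 : ν (Set.Icc (0:ℝ) x)ᶜ = 0 := by
        rw [hνdef, Measure.restrict_apply measurableSet_Icc.compl]
        simp
      rw [hset, Measure.prod_prod, hν0, mul_zero]
    refine hnull.mono ?_
    rintro ⟨y, z⟩ hz
    simp only [Function.uncurry, hf]
    rcases le_or_gt z y with hzy | hzy
    · rw [if_pos hzy, Real.norm_eq_abs, abs_of_nonneg (hpos z)]
      exact hle z
    · rw [if_neg (not_le.2 hzy)]
      simp [useq_nonneg n x]
  have swap : (∫ y, (∫ z, f y z ∂ν) ∂μ) = ∫ z, (∫ y, f y z ∂μ) ∂ν :=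
    integral_integral_swap hFint
  have lhs : (∫ y, (∫ z, f y z ∂ν) ∂μ) = useq m (n + 1) x := by
    rw [useq_succ]
    refine setIntegral_congr_fun measurableSet_Ioc fun y hy => ?_
    have step1 : f y = (Set.Iic y).indicator h := by
      funext z
      simp [hf, Set.indicator_apply, Set.mem_Iic]
    rw [step1, integral_indicator measurableSet_Iic, hνdef,
      Measure.restrict_restrict measurableSet_Iic]
    have step2 : Set.Iic y ∩ Set.Icc 0 x = Set.Icc 0 y := by
      ext z
      simp only [Set.mem_inter_iff, Set.mem_Iic, Set.mem_Icc]
      exact ⟨fun hh => ⟨hh.2.1, hh.1⟩, fun hh => ⟨hh.2, hh.1, hh.2.trans hy.2⟩⟩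
    rw [step2]
    exact setIntegral_congr_fun measurableSet_Icc fun z hz => heq z (hz.2.trans hy.2)
  have rhs : (∫ z, (∫ y, f y z ∂μ) ∂ν) = ∫ z in Set.Icc 0 x, (x - z) * useq m n z ∂m := by
    rw [hνdef]
    refine setIntegral_congr_fun measurableSet_Icc fun z hz => ?_
    have step1 : (fun y => f y z) = (Set.Ici z).indicator (fun _ => h z) := by
      funext y
      simp [hf, Set.indicator_apply, Set.mem_Ici]
    rw [step1, integral_indicator measurableSet_Ici, setIntegral_const, hμdef,
      Measure.real, Measure.restrict_apply measurableSet_Ici]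
    have step2 : volume (Set.Ici z ∩ Set.Ioc 0 x) = ENNReal.ofReal (x - z) := by
      rcases eq_or_lt_of_le hz.1 with hz0 | hz0
      · have : Set.Ici z ∩ Set.Ioc 0 x = Set.Ioc 0 x := by
          apply Set.inter_eq_right.2
          intro y hy
          exact le_trans hz0.symm.le hy.1.le
        rw [this, Real.volume_Ioc, ← hz0]
      · have : Set.Ici z ∩ Set.Ioc 0 x = Set.Icc z x := by
          ext y
          simp only [Set.mem_inter_iff, Set.mem_Ici, Set.mem_Ioc, Set.mem_Icc]
          exact ⟨fun hh => ⟨hh.1, hh.2.2⟩, fun hh => ⟨hh.1, lt_of_lt_of_le hz0 hh.1, hh.2⟩⟩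
        rw [this, Real.volume_Icc]
      -- done
    rw [step2, ENNReal.toReal_ofReal (sub_nonneg.2 hz.2), smul_eq_mul, heq z hz.2]
  have main : useq m (n + 1) x = ∫ z in Set.Icc 0 x, (x - z) * useq m n z ∂m := by
    rw [← lhs, swap, rhs]
  rw [main]
  -- Icc → Ico
  have hIcc : Set.Icc 0 x = Set.Ico 0 x ∪ {x} := (Set.Ico_union_right hx).symm
  have hIccInt := integrableOn_sub_mul_useq hfin n hx hxr
  have hdisj : Disjoint (Set.Ico (0:ℝ) x) {x} :=
    Set.disjoint_singleton_right.2 fun hh => lt_irrefl x hh.2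
  rw [hIcc, setIntegral_union hdisj (measurableSet_singleton x)
    (hIccInt.mono_set (by rw [hIcc]; exact Set.subset_union_left))
    (hIccInt.mono_set (by rw [hIcc]; exact Set.subset_union_right))]
  have hzero : (∫ z in ({x} : Set ℝ), (x - z) * useq m n z ∂m)
      = ∫ _ in ({x} : Set ℝ), (0:ℝ) ∂m := by
    refine setIntegral_congr_fun (measurableSet_singleton x) fun z hz => ?_
    rw [Set.mem_singleton_iff] at hz
    show (x - z) * useq m n z = 0
    rw [hz, sub_self, zero_mul]
  rw [hzero, integral_zero, add_zero]

lemma ufun_solution (hα : 0 < α)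
    (hfin : ∀ x : ℝ, 0 ≤ x → (x : EReal) < r → m (Set.Icc 0 x) < ⊤)
    {x : ℝ} (hx : 0 ≤ x) (hxr : (x : EReal) < r) :
    ufun m α x = 1 + 2 * α * ∫ z in Set.Ico 0 x, (x - z) * ufun m α z ∂m := by
  set M : ℝ := (m (Set.Icc 0 x)).toReal with hM
  have hM0 : 0 ≤ M := ENNReal.toReal_nonneg
  have hsum := useq_summable hα hfin hx hxr
  set F : ℕ → ℝ → ℝ := fun n z => (2 * α) ^ n * ((x - z) * useq m n z) with hF
  have hterm : ∀ n : ℕ, (2 * α) ^ (n + 1) * useq m (n + 1) x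
      = 2 * α * ∫ z in Set.Ico 0 x, F n z ∂m := by
    intro n
    rw [useq_succ_eq hfin n hx hxr, pow_succ, hF]
    rw [integral_const_mul]
    ring
  have hmeas : ∀ n : ℕ, AEStronglyMeasurable (F n) (m.restrict (Set.Ico 0 x)) := by
    intro n
    obtain ⟨h, hmono, hpos, heq, hle⟩ := useq_ext hfin n x hx hxr
    have hm' : Measurable (fun z => (2 * α) ^ n * ((x - z) * h z)) :=
      measurable_const.mul ((measurable_const.sub measurable_id).mul hmono.measurable)
    refine AEStronglyMeasurable.congr hm'.stronglyMeasurable.aestronglyMeasurable ?_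
    refine (ae_restrict_iff' measurableSet_Ico).2 (ae_of_all _ fun z hz => ?_)
    show (2 * α) ^ n * ((x - z) * h z) = F n z
    rw [hF, heq z hz.2.le]
  have hptbd : ∀ (n : ℕ) (z : ℝ), z ∈ Set.Ico (0:ℝ) x →
      (‖F n z‖₊ : ℝ≥0∞) ≤ ENNReal.ofReal (x * ((2 * α * (x * M)) ^ n / n.factorial)) := by
    intro n z hz
    rw [← ENNReal.ofReal_coe_nnreal, coe_nnnorm]
    apply ENNReal.ofReal_le_ofReal
    rw [Real.norm_eq_abs, hF]
    have h1 : (0:ℝ) ≤ (2 * α) ^ n := by positivity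
    have h2 : (0:ℝ) ≤ x - z := sub_nonneg.2 hz.2.le
    rw [abs_of_nonneg (mul_nonneg h1 (mul_nonneg h2 (useq_nonneg n z)))]
    calc (2 * α) ^ n * ((x - z) * useq m n z)
        ≤ (2 * α) ^ n * (x * (x ^ n * M ^ n / n.factorial)) := by
          have hu := useq_le hfin hx hxr n z hz.1 hz.2.le
          have hu2 : useq m n z ≤ x ^ n * M ^ n / n.factorial := by
            refine hu.trans ?_
            gcongr
            exacts [hz.1, hz.2.le]
          gcongr
          · exact useq_nonneg n z
          · linarith [hz.1]
      _ = x * ((2 * α * (x * M)) ^ n / n.factorial) := by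
          rw [mul_pow, mul_pow]
          ring
  have hlint : ∀ n : ℕ, (∫⁻ z, ‖F n z‖₊ ∂(m.restrict (Set.Ico 0 x)))
      ≤ ENNReal.ofReal (x * ((2 * α * (x * M)) ^ n / n.factorial)) * m (Set.Icc 0 x) := by
    intro n
    calc (∫⁻ z, ‖F n z‖₊ ∂(m.restrict (Set.Ico 0 x)))
        ≤ ∫⁻ _, ENNReal.ofReal (x * ((2 * α * (x * M)) ^ n / n.factorial))
            ∂(m.restrict (Set.Ico 0 x)) := by
          refine lintegral_mono_ae ((ae_restrict_iff' measurableSet_Ico).2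
            (ae_of_all _ fun z hz => hptbd n z hz))
      _ = ENNReal.ofReal (x * ((2 * α * (x * M)) ^ n / n.factorial)) * m (Set.Ico 0 x) := by
          rw [lintegral_const, Measure.restrict_apply_univ]
      _ ≤ _ := by
          exact mul_le_mul_right (measure_mono Set.Ico_subset_Icc_self) _
  have hCsum : Summable (fun n : ℕ => x * ((2 * α * (x * M)) ^ n / n.factorial)) :=
    (Real.summable_pow_div_factorial (2 * α * (x * M))).mul_left x
  have hfin' : (∑' n : ℕ, ∫⁻ z, ‖F n z‖₊ ∂(m.restrict (Set.Ico 0 x))) ≠ ⊤ := by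
    refine ne_top_of_le_ne_top ?_ (ENNReal.tsum_le_tsum hlint)
    rw [ENNReal.tsum_mul_right, ← ENNReal.ofReal_tsum_of_nonneg (fun n => by positivity) hCsum]
    exact ENNReal.mul_ne_top ENNReal.ofReal_ne_top (hfin x hx hxr).ne
  have hswap := integral_tsum hmeas hfin'
  have hpt : ∀ z : ℝ, (∑' n : ℕ, F n z) = (x - z) * ufun m α z := by
    intro z
    rw [ufun, ← tsum_mul_left]
    exact tsum_congr fun n => by rw [hF]; ring
  calc ufun m α x = (2 * α) ^ 0 * useq m 0 x + ∑' n : ℕ, (2 * α) ^ (n + 1) * useq m (n + 1) x := by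
        rw [ufun]
        exact Summable.tsum_eq_zero_add hsum
    _ = 1 + ∑' n : ℕ, 2 * α * ∫ z in Set.Ico 0 x, F n z ∂m := by
        rw [tsum_congr hterm]
        norm_num [useq]
    _ = 1 + 2 * α * ∑' n : ℕ, ∫ z in Set.Ico 0 x, F n z ∂m := by rw [tsum_mul_left]
    _ = 1 + 2 * α * ∫ z in Set.Ico 0 x, (∑' n : ℕ, F n z) ∂m := by rw [← hswap]
    _ = 1 + 2 * α * ∫ z in Set.Ico 0 x, (x - z) * ufun m α z ∂m := by
        congr 1
        congr 1
        exact setIntegral_congr_fun measurableSet_Ico fun z _ => hpt z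

lemma integrableOn_sub_mul_ufun (hα : 0 < α)
    (hfin : ∀ x : ℝ, 0 ≤ x → (x : EReal) < r → m (Set.Icc 0 x) < ⊤)
    {b c : ℝ} (hb : 0 ≤ b) (hbr : (b : EReal) < r) (hbc : b ≤ c) :
    IntegrableOn (fun z => (c - z) * ufun m α z) (Set.Icc 0 b) m := by
  obtain ⟨H, hmono, hpos, heq, hle⟩ := ufun_ext hα hfin hb hbr
  have hν : IsFiniteMeasure (m.restrict (Set.Icc 0 b)) :=
    ⟨by rw [Measure.restrict_apply_univ]; exact hfin b hb hbr⟩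
  have hInt : IntegrableOn (fun z => (c - z) * H z) (Set.Icc 0 b) m := by
    refine Integrable.mono' (integrable_const (c * ufun m α b))
      ((measurable_const.sub measurable_id).mul hmono.measurable).stronglyMeasurable.aestronglyMeasurable
      ((ae_restrict_iff' measurableSet_Icc).2 (ae_of_all _ fun z hz => ?_))
    rw [Real.norm_eq_abs, abs_mul, abs_of_nonneg (sub_nonneg.2 (hz.2.trans hbc)),
      abs_of_nonneg (hpos z)]
    exact mul_le_mul (by linarith [hz.1]) (hle z) (hpos z) (hb.trans hbc)
  exact hInt.congr ((ae_restrict_iff' measurableSet_Icc).2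
    (ae_of_all _ fun z hz => by
      show (c - z) * H z = (c - z) * ufun m α z
      rw [heq z hz.2]))

lemma ufun_strict (hα : 0 < α)
    (hfin : ∀ x : ℝ, 0 ≤ x → (x : EReal) < r → m (Set.Icc 0 x) < ⊤)
    (hm1 : ∀ ε : ℝ, 0 < ε → (ε : EReal) < r → 0 < m (Set.Ioo 0 ε))
    {x1 x2 : ℝ} (hx1 : 0 ≤ x1) (h12 : x1 < x2) (hx2r : (x2 : EReal) < r) :
    ufun m α x1 < ufun m α x2 := by
  have hx2 : 0 ≤ x2 := hx1.trans h12.le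
  have hx1r : (x1 : EReal) < r := lt_of_le_of_lt (EReal.coe_le_coe_iff.2 h12.le) hx2r
  have hsol1 := ufun_solution hα hfin hx1 hx1r
  have hsol2 := ufun_solution hα hfin hx2 hx2r
  set I1 := ∫ z in Set.Ico 0 x1, (x1 - z) * ufun m α z ∂m with hI1
  set I2 := ∫ z in Set.Ico 0 x2, (x2 - z) * ufun m α z ∂m with hI2
  have hInt2 : IntegrableOn (fun z => (x2 - z) * ufun m α z) (Set.Icc 0 x2) m :=
    integrableOn_sub_mul_ufun hα hfin hx2 hx2r le_rfl
  have hkey : I1 < I2 := by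
    have hge1 : ∀ z ∈ Set.Ico (0:ℝ) x2, (1:ℝ) ≤ ufun m α z := fun z hz =>
      ufun_ge_one hα hfin hz.1 (lt_of_le_of_lt (EReal.coe_le_coe_iff.2 hz.2.le) hx2r)
    have hnn : 0 ≤ᵐ[m.restrict (Set.Ico 0 x2)] fun z => (x2 - z) * ufun m α z :=
      (ae_restrict_iff' measurableSet_Ico).2 (ae_of_all _ fun z hz =>
        mul_nonneg (sub_nonneg.2 hz.2.le) (zero_le_one.trans (hge1 z hz)))
    rcases eq_or_lt_of_le hx1 with h10 | h10
    · -- x1 = 0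
      have hI10 : I1 = 0 := by
        rw [hI1, ← h10, Set.Ico_self, Measure.restrict_empty, integral_zero_measure]
      rw [hI10]
      have hx2p : 0 < x2 := h10.trans_lt h12
      set c := x2 / 2 with hc
      have hc0 : 0 < c := by rw [hc]; linarith
      have hcx : c < x2 := by
        rw [hc]; linarith
      have hcr : (c : EReal) < r := lt_of_le_of_lt (EReal.coe_le_coe_iff.2 hcx.le) hx2r
      have hfms : IsFiniteMeasure (m.restrict (Set.Ioo 0 c)) :=
        ⟨by rw [Measure.restrict_apply_univ]
            exact ((measure_mono (Set.Ioo_subset_Icc_self.trans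
              (Set.Icc_subset_Icc_right hcx.le))).trans_lt (hfin x2 hx2 hx2r))⟩
      have step1 : (∫ z in Set.Ioo 0 c, (x2 - c) * (1:ℝ) ∂m)
          ≤ ∫ z in Set.Ioo 0 c, (x2 - z) * ufun m α z ∂m := by
        refine setIntegral_mono_on (integrable_const _)
          (hInt2.mono_set fun z hz => ⟨hz.1.le, hz.2.le.trans hcx.le⟩)
          measurableSet_Ioo fun z hz => ?_
        have := hge1 z ⟨hz.1.le, hz.2.trans hcx⟩
        have hzc : z < c := hz.2
        nlinarith
      have step2 : (∫ z in Set.Ioo 0 c, (x2 - z) * ufun m α z ∂m) ≤ I2 := by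
        rw [hI2]
        exact setIntegral_mono_set
          (hInt2.mono_set Set.Ico_subset_Icc_self) hnn
          (HasSubset.Subset.eventuallyLE fun z hz => ⟨hz.1.le, hz.2.trans hcx⟩)
      have hpos : 0 < ∫ z in Set.Ioo 0 c, (x2 - c) * (1:ℝ) ∂m := by
        rw [setIntegral_const, smul_eq_mul, mul_one]
        have hμpos : 0 < (m (Set.Ioo 0 c)).toReal := by
          refine ENNReal.toReal_pos (hm1 c hc0 hcr).ne' ?_
          exact ((measure_mono (fun z hz => ⟨hz.1.le, hz.2.le.trans hcx.le⟩ :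
            Set.Ioo (0:ℝ) c ⊆ Set.Icc 0 x2)).trans_lt (hfin x2 hx2 hx2r)).ne
        have : 0 < x2 - c := by linarith
        positivity
      linarith
    · -- 0 < x1
      have hInt1a : IntegrableOn (fun z => (x1 - z) * ufun m α z) (Set.Ico 0 x1) m :=
        (integrableOn_sub_mul_ufun hα hfin hx1 hx1r le_rfl).mono_set Set.Ico_subset_Icc_self
      have hInt1b : IntegrableOn (fun z => (x2 - z) * ufun m α z) (Set.Ico 0 x1) m :=
        (integrableOn_sub_mul_ufun hα hfin hx1 hx1r h12.le).mono_set Set.Ico_subset_Icc_self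
      have step1 : (∫ z in Set.Ico 0 x1, (x2 - z) * ufun m α z ∂m) ≤ I2 := by
        rw [hI2]
        exact setIntegral_mono_set (hInt2.mono_set Set.Ico_subset_Icc_self) hnn
          (HasSubset.Subset.eventuallyLE (Set.Ico_subset_Ico_right h12.le))
      have step2 : (∫ z in Set.Ico 0 x1, (x2 - z) * ufun m α z ∂m) - I1
          = ∫ z in Set.Ico 0 x1, (x2 - x1) * ufun m α z ∂m := by
        rw [hI1, ← integral_sub hInt1b hInt1a]
        refine setIntegral_congr_fun measurableSet_Ico fun z _ => ?_
        show (x2 - z) * ufun m α z - (x1 - z) * ufun m α z = (x2 - x1) * ufun m α z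
        ring
      have hIntc : IntegrableOn (fun z => (x2 - x1) * ufun m α z) (Set.Ico 0 x1) m :=
        (((ufun_intOn hα hfin hx1 hx1r).mono_set Set.Ico_subset_Icc_self).const_mul (x2 - x1))
      have step3 : (∫ z in Set.Ioo 0 x1, (x2 - x1) * (1:ℝ) ∂m)
          ≤ ∫ z in Set.Ico 0 x1, (x2 - x1) * ufun m α z ∂m := by
        have hfms : IsFiniteMeasure (m.restrict (Set.Ioo 0 x1)) :=
          ⟨by rw [Measure.restrict_apply_univ]
              exact ((measure_mono Set.Ioo_subset_Icc_self).trans_lt (hfin x1 hx1 hx1r))⟩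
        have h1 : (∫ z in Set.Ioo 0 x1, (x2 - x1) * (1:ℝ) ∂m)
            ≤ ∫ z in Set.Ioo 0 x1, (x2 - x1) * ufun m α z ∂m := by
          refine setIntegral_mono_on (integrable_const _)
            (hIntc.mono_set Set.Ioo_subset_Ico_self)
            measurableSet_Ioo fun z hz => ?_
          have := hge1 z ⟨hz.1.le, hz.2.trans h12⟩
          nlinarith
        refine h1.trans (setIntegral_mono_set hIntc ?_
          (HasSubset.Subset.eventuallyLE Set.Ioo_subset_Ico_self))
        exact (ae_restrict_iff' measurableSet_Ico).2 (ae_of_all _ fun z hz =>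
          mul_nonneg (by linarith) (zero_le_one.trans (hge1 z ⟨hz.1, hz.2.trans h12⟩)))
      have hpos : 0 < ∫ z in Set.Ioo 0 x1, (x2 - x1) * (1:ℝ) ∂m := by
        rw [setIntegral_const, smul_eq_mul, mul_one]
        have hμpos : 0 < (m (Set.Ioo 0 x1)).toReal := by
          refine ENNReal.toReal_pos (hm1 x1 h10 hx1r).ne' ?_
          exact ((measure_mono (fun z hz => ⟨hz.1.le, hz.2.le⟩ :
            Set.Ioo (0:ℝ) x1 ⊆ Set.Icc 0 x1)).trans_lt (hfin x1 hx1 hx1r)).ne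
        have : 0 < x2 - x1 := by linarith
        positivity
      linarith
  rw [hsol1, hsol2]
  have h2a : 0 < 2 * α := by positivity
  nlinarith

lemma ufun_deriv_zero (hα : 0 < α) (hr : 0 < r)
    (hfin : ∀ x : ℝ, 0 ≤ x → (x : EReal) < r → m (Set.Icc 0 x) < ⊤)
    (hm0 : m ({0} : Set ℝ) = 0) :
    Filter.Tendsto (fun x : ℝ => (ufun m α x - 1) / x)
      (nhdsWithin 0 (Set.Ioi 0)) (nhds 0) := by
  obtain ⟨c, hc0, hcr⟩ := exists_between hr
  have hcT : c ≠ ⊤ := fun h => absurd (h ▸ hcr) (not_lt.2 le_top)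
  have hcB : c ≠ ⊥ := fun h => absurd (h ▸ hc0) (not_lt.2 bot_le)
  set x0 : ℝ := c.toReal with hx0def
  have hx0c : (x0 : EReal) = c := EReal.coe_toReal hcT hcB
  have hx0pos : 0 < x0 := by
    have h : ((0:ℝ) : EReal) < (x0 : EReal) := by
      rw [hx0c]
      exact_mod_cast hc0
    exact_mod_cast h
  have hx0r : (x0 : EReal) < r := hx0c ▸ hcr
  have hu0 : 1 ≤ ufun m α x0 := ufun_ge_one hα hfin hx0pos.le hx0r
  set K : ℝ := 2 * α * ufun m α x0 with hK
  have hKpos : 0 < K := by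
    rw [hK]
    nlinarith
  -- small measure of Ioo 0 δ
  set s : ℕ → Set ℝ := fun k => Set.Ioo 0 (x0 / (k + 1)) with hs
  have hanti : Antitone s := by
    intro k l hkl
    apply Set.Ioo_subset_Ioo_right
    apply div_le_div_of_nonneg_left hx0pos.le (by positivity)
    push_cast
    linarith [(Nat.cast_le (α := ℝ)).2 hkl]
  have hIoo_sub : ∀ k : ℕ, s k ⊆ Set.Icc 0 x0 := by
    intro k z hz
    refine ⟨hz.1.le, hz.2.le.trans ?_⟩
    apply div_le_self hx0pos.le
    push_cast
    linarith [Nat.cast_nonneg (α := ℝ) k]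
  have hInter : (⋂ k, s k) = ∅ := by
    ext y
    simp only [Set.mem_iInter, Set.mem_empty_iff_false, iff_false]
    intro hall
    have hy0 : 0 < y := (hall 0).1
    obtain ⟨k, hk⟩ := exists_nat_gt (x0 / y)
    have h1 : y < x0 / (k + 1) := (hall k).2
    have h2 : y * (k + 1) < x0 := (lt_div_iff₀ (by positivity)).1 h1
    have h3 : x0 < (k : ℝ) * y := (div_lt_iff₀ hy0).1 hk
    nlinarith [hy0]
  have htend : Filter.Tendsto (fun k => m (s k)) atTop (nhds 0) := by
    have := tendsto_measure_iInter_atTop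
      (fun k => measurableSet_Ioo.nullMeasurableSet) hanti
      ⟨0, ((measure_mono (hIoo_sub 0)).trans_lt (hfin x0 hx0pos.le hx0r)).ne⟩
    rwa [hInter, measure_empty] at this
  rw [Metric.tendsto_nhdsWithin_nhds]
  intro ε hε
  have hεK : 0 < ε / K := by positivity
  obtain ⟨k, hk⟩ := (htend.eventually_lt_const (ENNReal.ofReal_pos.2 hεK)).exists
  set δ : ℝ := x0 / (k + 1) with hδ
  have hδpos : 0 < δ := by positivity
  have hδx0 : δ ≤ x0 := by
    apply div_le_self hx0pos.le
    push_cast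
    linarith [Nat.cast_nonneg (α := ℝ) k]
  refine ⟨δ, hδpos, fun {x} hx hxd => ?_⟩
  have hx0' : 0 < x := hx
  rw [Real.dist_eq, sub_zero, abs_of_pos hx0'] at hxd
  have hxx0 : x ≤ x0 := hxd.le.trans hδx0
  have hxr : (x : EReal) < r := lt_of_le_of_lt (EReal.coe_le_coe_iff.2 hxx0) hx0r
  have hsol := ufun_solution hα hfin hx0'.le hxr
  set I := ∫ z in Set.Ico 0 x, (x - z) * ufun m α z ∂m with hI
  have hfms : IsFiniteMeasure (m.restrict (Set.Ico 0 x)) :=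
    ⟨by rw [Measure.restrict_apply_univ]
        exact (measure_mono Set.Ico_subset_Icc_self).trans_lt (hfin x hx0'.le hxr)⟩
  have hIpos : 0 ≤ I := by
    rw [hI]
    refine setIntegral_nonneg measurableSet_Ico fun z hz => ?_
    have := ufun_ge_one hα hfin hz.1 (lt_of_le_of_lt (EReal.coe_le_coe_iff.2 hz.2.le) hxr)
    nlinarith [sub_nonneg.2 hz.2.le]
  set T : ℝ := (m (Set.Ico 0 x)).toReal with hT
  have hIle : I ≤ x * ufun m α x0 * T := by
    have step : I ≤ ∫ _ in Set.Ico 0 x, x * ufun m α x0 ∂m := by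
      rw [hI]
      refine setIntegral_mono_on
        ((integrableOn_sub_mul_ufun hα hfin hx0'.le hxr le_rfl).mono_set
          Set.Ico_subset_Icc_self)
        (integrable_const _) measurableSet_Ico fun z hz => ?_
      have hzr : (z : EReal) < r := lt_of_le_of_lt (EReal.coe_le_coe_iff.2 hz.2.le) hxr
      have h1 : ufun m α z ≤ ufun m α x0 := ufun_mono hα hfin (hz.2.le.trans hxx0) hx0r
      have h2 : 0 ≤ ufun m α z := zero_le_one.trans (ufun_ge_one hα hfin hz.1 hzr)
      have h3 : x - z ≤ x := by linarith [hz.1]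
      have h4 : 0 ≤ x - z := sub_nonneg.2 hz.2.le
      nlinarith
    rw [setIntegral_const, smul_eq_mul, Measure.real] at step
    rw [hT]
    linarith [step]
  have hTsmall : T < ε / K := by
    rw [hT]
    refine ENNReal.toReal_lt_of_lt_ofReal (lt_of_le_of_lt ?_ hk)
    have hsub : Set.Ico 0 x ⊆ {0} ∪ s k := by
      intro z hz
      rcases eq_or_lt_of_le hz.1 with h | h
      · exact Or.inl (by simp [← h])
      · exact Or.inr ⟨h, hz.2.trans_le hxd.le⟩
    calc m (Set.Ico 0 x) ≤ m ({0} ∪ s k) := measure_mono hsub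
      _ ≤ m {0} + m (s k) := measure_union_le _ _
      _ = m (s k) := by rw [hm0, zero_add]
  have hTnn : 0 ≤ T := ENNReal.toReal_nonneg
  rw [Real.dist_eq, sub_zero]
  have hval : (ufun m α x - 1) / x = 2 * α * I / x := by rw [hsol]; ring_nf
  have hnn : 0 ≤ (ufun m α x - 1) / x := by
    rw [hval]
    positivity
  rw [abs_of_nonneg hnn, hval]
  have hup : 2 * α * I / x ≤ K * T := by
    rw [div_le_iff₀ hx0']
    calc 2 * α * I ≤ 2 * α * (x * ufun m α x0 * T) := by nlinarith
      _ = K * T * x := by rw [hK]; ring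
  have hlast : K * T < ε := by
    calc K * T < K * (ε / K) := by exact mul_lt_mul_of_pos_left hTsmall hKpos
      _ = ε := by field_simp
  linarith

end aux

theorem stmt0 (r : EReal) (hr : 0 < r) (α : ℝ) (hα : 0 < α) (m : Measure ℝ)
    (hfin : ∀ x : ℝ, 0 ≤ x → (x : EReal) < r → m (Set.Icc 0 x) < ⊤)
    (hm0 : m ({0} : Set ℝ) = 0)
    (hm1 : ∀ ε : ℝ, 0 < ε → (ε : EReal) < r → 0 < m (Set.Ioo 0 ε))
    (hm2 : ∀ c : ℝ, 0 < c → (c : EReal) < r → 0 < m {y : ℝ | c < y ∧ (y : EReal) < r}) :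
    (∀ x : ℝ, 0 ≤ x → (x : EReal) < r →
        Summable (fun n : ℕ => (2 * α) ^ n * useq m n x)) ∧
    (∀ x : ℝ, 0 ≤ x → (x : EReal) < r → 0 < ufun m α x) ∧
    StrictMonoOn (ufun m α) {x : ℝ | 0 ≤ x ∧ (x : EReal) < r} ∧
    ufun m α 0 = 1 ∧
    IsSol m r α 1 0 (ufun m α) ∧
    Filter.Tendsto (fun x : ℝ => (ufun m α x - 1) / x)
      (nhdsWithin 0 (Set.Ioi 0)) (nhds 0) := by
  refine ⟨?_, ?_, ?_, ?_, ?_, ?_⟩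
  · exact fun x hx hxr => useq_summable hα hfin hx hxr
  · exact fun x hx hxr => ufun_pos hα hfin hx hxr
  · rintro x ⟨hx0, hxr⟩ y ⟨hy0, hyr⟩ hxy
    exact ufun_strict hα hfin hm1 hx0 hxy hyr
  · exact ufun_zero
  · intro x hx hxr
    rw [ufun_solution hα hfin hx hxr]
    ring
  · exact ufun_deriv_zero hα hr hfin hm0
end

section
/- For every f ∈ C_s there is a unique f̂ ∈ Ĉ such that f̂(s(x)) = f(x) for every x ∈ [0,r), f̂(s(x−)) = f(x−) for every x ∈ (0,r), and f̂(s(x+)) = f(x+) for every x ∈ (0,r) with s(x+) < r̂. The map T : C_s → Ĉ, Tf := f̂, is a linear bijection. Moreover, T maps C_s^* := {f ∈ C_s : lim_{x↑r} f(x) exists in ℝ} bijectively onto Ĉ^* := {f̂ ∈ Ĉ : lim_{x̂↑r̂} f̂(x̂) exists in ℝ}. -/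
open MeasureTheory Set Filter Topology
open scoped Classical

/-- The interval `[0, r)` inside `ℝ`, for `r ∈ (0, ∞]`. -/
def Ilt (r : EReal) : Set ℝ := {x : ℝ | 0 ≤ x ∧ (x : EReal) < r}

/-- `r̂ = s(r−)`, the supremum of `s` over `[0, r)`, as an extended real. -/
noncomputable def rhat (s : ℝ → ℝ) (r : EReal) : EReal :=
  sSup ((fun x : ℝ => (s x : EReal)) '' Ilt r)

/-- `s(x−)`, the left limit of the nondecreasing function `s` at `x` (with the
convention `s(0−) = s(0)`, and more generally `s(x−) = s(x)` when there is no
point of `I` below `x`). -/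
noncomputable def sminus (s : ℝ → ℝ) (I : Set ℝ) (x : ℝ) : ℝ :=
  if (I ∩ Set.Iio x).Nonempty then sSup (s '' (I ∩ Set.Iio x)) else s x

/-- `s(x+)`, the right limit of the nondecreasing function `s` at `x` (with the
convention `s(r+) = s(r)` when `r ∈ I`, and more generally `s(x+) = s(x)` when
there is no point of `I` above `x`). -/
noncomputable def splus (s : ℝ → ℝ) (I : Set ℝ) (x : ℝ) : ℝ :=
  if (I ∩ Set.Ioi x).Nonempty then sInf (s '' (I ∩ Set.Ioi x)) else s x

/-- `s(I)`, viewed inside `[−∞, ∞]`. -/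
def sImage (s : ℝ → ℝ) (I : Set ℝ) : Set EReal := (fun x : ℝ => (s x : EReal)) '' I

/-- `Î`: the closure of `s(I)` in `[−∞,∞]` if `r ∈ I`, and this closure with the
point `r̂` removed if `r ∉ I`. -/
noncomputable def Ihat (s : ℝ → ℝ) (I : Set ℝ) (r : EReal) : Set EReal :=
  if ∃ rr : ℝ, (rr : EReal) = r ∧ rr ∈ I then closure (sImage s I)
  else closure (sImage s I) \ {rhat s r}

/-- The interval `[0, r̂)` inside `ℝ`. -/
def Shat (s : ℝ → ℝ) (r : EReal) : Set ℝ := {x : ℝ | 0 ≤ x ∧ (x : EReal) < rhat s r}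

/-- The class `C_s` of `s`-continuous functions on `[0, r)`. -/
def Cs (s : ℝ → ℝ) (r : EReal) : Set (ℝ → ℝ) :=
  {f : ℝ → ℝ |
    Filter.Tendsto f (nhdsWithin 0 (Set.Ioi 0)) (nhds (f 0)) ∧
    (∀ x : ℝ, 0 < x → (x : EReal) < r →
      (∃ L : ℝ, Filter.Tendsto f (nhdsWithin x (Set.Iio x)) (nhds L)) ∧
      (∃ L : ℝ, Filter.Tendsto f (nhdsWithin x (Set.Ioi x)) (nhds L))) ∧
    (∀ x : ℝ, 0 < x → (x : EReal) < r →
      (Filter.Tendsto s (nhdsWithin x (Set.Ioi x)) (nhds (s x)) →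
        Filter.Tendsto f (nhdsWithin x (Set.Ioi x)) (nhds (f x))) ∧
      (Filter.Tendsto s (nhdsWithin x (Set.Iio x)) (nhds (s x)) →
        Filter.Tendsto f (nhdsWithin x (Set.Iio x)) (nhds (f x)))) ∧
    (∀ x y : ℝ, 0 ≤ x → x ≤ y → (y : EReal) < r → s x = s y → f x = f y)}

/-- The class `Ĉ` of continuous functions on `[0, r̂)` that are affine on the
connected components of `[0, r̂) ∖ Î`. -/
def Chat (s : ℝ → ℝ) (I : Set ℝ) (r : EReal) : Set (ℝ → ℝ) :=
  {fh : ℝ → ℝ |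
    ContinuousOn fh (Shat s r) ∧
    ∀ a b : ℝ, Set.Ioo a b ⊆ Shat s r \ {xh : ℝ | (xh : EReal) ∈ Ihat s I r} →
      ∀ x ∈ Set.Ioo a b, ∀ y ∈ Set.Ioo a b, ∀ t ∈ Set.Icc (0 : ℝ) 1,
        fh (t * x + (1 - t) * y) = t * fh x + (1 - t) * fh y}

/-- `fh` is the function on `[0, r̂)` corresponding to `f` under `T`:
`fh(s(x)) = f(x)`, `fh(s(x−)) = f(x−)` and, when `s(x+) < r̂`, `fh(s(x+)) = f(x+)`. -/
def MatchRel (s : ℝ → ℝ) (I : Set ℝ) (r : EReal) (f fh : ℝ → ℝ) : Prop :=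
  (∀ x ∈ Ilt r, fh (s x) = f x) ∧
  (∀ x : ℝ, 0 < x → (x : EReal) < r → ∀ L : ℝ,
    Filter.Tendsto f (nhdsWithin x (Set.Iio x)) (nhds L) → fh (sminus s I x) = L) ∧
  (∀ x : ℝ, 0 < x → (x : EReal) < r → ((splus s I x : ℝ) : EReal) < rhat s r →
    ∀ L : ℝ, Filter.Tendsto f (nhdsWithin x (Set.Ioi x)) (nhds L) →
      fh (splus s I x) = L)

/-!
`f̂` is built from the generalized inverse `exceed y = inf {x | s x > y}` of `s`: on the jump
`[s(x−), s(x+)]` of `s` at `x = exceed y`, it interpolates linearly between `f(x−)`, `f(x)` and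
`f(x+)`. So `f̂ y` is a convex combination of values of `f` near `exceed y`, which gives continuity
where `exceed` is continuous; elsewhere `f̂` is affine on one side of the point. A gap of `Î` lies
inside a single jump, so `f̂` is affine there. Conversely, an element of `Ĉ` is determined by its
values on `s([0, r))`, on their closure by continuity and on each gap by affinity; this gives the
uniqueness of `f̂` and shows that `f̂ ↦ f̂ ∘ s` inverts `T`.
-/

open Function

structure IsScale (r : EReal) (I : Set ℝ) (s : ℝ → ℝ) : Prop where
  pos : 0 < r
  dom : I = Ilt r ∨ ∃ rr : ℝ, r = (rr : EReal) ∧ I = Icc 0 rr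
  mono : MonotoneOn s I
  map_zero : s 0 = 0
  tendsto_zero : Tendsto s (𝓝[>] 0) (𝓝 0)
  lt_rhat : ∀ x ∈ Ilt r, ((s x : ℝ) : EReal) < rhat s r
  eq_rhat : ∀ rr : ℝ, r = (rr : EReal) → rr ∈ I → ((s rr : ℝ) : EReal) = rhat s r

variable {r : EReal} {I : Set ℝ} {s f : ℝ → ℝ}

lemma Icc_subset_Ilt {x : ℝ} (hx : x ∈ Ilt r) : Icc 0 x ⊆ Ilt r :=
  fun _ hz => ⟨hz.1, lt_of_le_of_lt (EReal.coe_le_coe_iff.2 hz.2) hx.2⟩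

lemma Ioo_subset_Ilt {p x : ℝ} (hp : 0 ≤ p) (hx : x ∈ Ilt r) : Ioo p x ⊆ Ilt r :=
  fun _ hz => Icc_subset_Ilt hx ⟨hp.trans hz.1.le, hz.2.le⟩

lemma exists_mem_Ilt_gt {x : ℝ} (hx : x ∈ Ilt r) : ∃ w ∈ Ilt r, x < w := by
  obtain ⟨w, hxw', hwr⟩ := EReal.exists_between_coe_real hx.2
  have hxw : x < w := EReal.coe_lt_coe_iff.1 hxw'
  exact ⟨w, ⟨hx.1.trans hxw.le, hwr⟩, hxw⟩

namespace IsScale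

lemma zero_mem_Ilt (H : IsScale r I s) : (0 : ℝ) ∈ Ilt r := ⟨le_rfl, by exact_mod_cast H.pos⟩

lemma Ilt_subset (H : IsScale r I s) : Ilt r ⊆ I := by
  rcases H.dom with h | ⟨rr, hrr, h⟩
  · exact h.ge
  · rintro x ⟨hx0, hxr⟩
    rw [hrr] at hxr
    exact h ▸ ⟨hx0, (EReal.coe_lt_coe_iff.1 hxr).le⟩

lemma zero_mem (H : IsScale r I s) : (0 : ℝ) ∈ I := H.Ilt_subset H.zero_mem_Ilt

lemma nonneg_of_mem (H : IsScale r I s) {x : ℝ} (hx : x ∈ I) : 0 ≤ x := by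
  rcases H.dom with h | ⟨_, _, h⟩ <;> rw [h] at hx <;> exact hx.1

lemma coe_le_of_mem (H : IsScale r I s) {x : ℝ} (hx : x ∈ I) : (x : EReal) ≤ r := by
  rcases H.dom with h | ⟨rr, hrr, h⟩
  · rw [h] at hx; exact hx.2.le
  · rw [h] at hx; rw [hrr]; exact_mod_cast hx.2

lemma mem_Ilt_or_eq_rhat (H : IsScale r I s) {z : ℝ} (hz : z ∈ I) :
    z ∈ Ilt r ∨ ((s z : ℝ) : EReal) = rhat s r := by
  rcases H.dom with h | ⟨rr, hrr, h⟩
  · exact Or.inl (h ▸ hz)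
  · rw [h] at hz
    rcases hz.2.lt_or_eq with h' | rfl
    · exact Or.inl ⟨hz.1, by rw [hrr]; exact_mod_cast h'⟩
    · exact Or.inr (H.eq_rhat z hrr (h ▸ ⟨hz.1, le_rfl⟩))

lemma map_nonneg (H : IsScale r I s) {x : ℝ} (hx : x ∈ I) : 0 ≤ s x :=
  H.map_zero ▸ H.mono H.zero_mem hx (H.nonneg_of_mem hx)

lemma map_mem_Shat (H : IsScale r I s) {x : ℝ} (hx : x ∈ Ilt r) : s x ∈ Shat s r :=
  ⟨H.map_nonneg (H.Ilt_subset hx), H.lt_rhat x hx⟩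

lemma zero_lt_rhat (H : IsScale r I s) : ((0 : ℝ) : EReal) < rhat s r :=
  H.map_zero ▸ H.lt_rhat 0 H.zero_mem_Ilt

/-! ### The one-sided limits `s(x−)` and `s(x+)` -/

lemma sminus_zero (H : IsScale r I s) : sminus s I 0 = 0 := by
  rw [sminus, if_neg, H.map_zero]
  rintro ⟨z, hzI, hz⟩
  exact (H.nonneg_of_mem hzI).not_gt hz

lemma sminus_eq_sSup (H : IsScale r I s) {x : ℝ} (hx : 0 < x) :
    sminus s I x = sSup (s '' (I ∩ Iio x)) := by
  rw [sminus, if_pos ⟨0, H.zero_mem, hx⟩]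

lemma bddAbove_image_Iio (H : IsScale r I s) {x : ℝ} (hx : x ∈ I) : BddAbove (s '' (I ∩ Iio x)) :=
  ⟨s x, by rintro _ ⟨z, ⟨hzI, hzx⟩, rfl⟩; exact H.mono hzI hx hzx.le⟩

lemma sminus_le (H : IsScale r I s) {x : ℝ} (hx : x ∈ I) : sminus s I x ≤ s x := by
  rw [sminus]
  split_ifs with h
  · exact csSup_le (h.image s) (by rintro _ ⟨z, ⟨hzI, hzx⟩, rfl⟩; exact H.mono hzI hx hzx.le)
  · exact le_rfl

lemma le_sminus (H : IsScale r I s) {x z : ℝ} (hx : x ∈ I) (hz : z ∈ I) (hzx : z < x) :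
    s z ≤ sminus s I x := by
  rw [sminus, if_pos ⟨z, hz, hzx⟩]
  exact le_csSup (H.bddAbove_image_Iio hx) ⟨z, ⟨hz, hzx⟩, rfl⟩

lemma sminus_nonneg (H : IsScale r I s) {x : ℝ} (hx : x ∈ I) : 0 ≤ sminus s I x := by
  rcases (H.nonneg_of_mem hx).eq_or_lt with rfl | h
  · exact H.sminus_zero.ge
  · exact H.map_zero ▸ H.le_sminus hx H.zero_mem h

lemma sminus_le_of_forall (H : IsScale r I s) {x c : ℝ} (hx : 0 < x)
    (h : ∀ z ∈ I ∩ Iio x, s z ≤ c) : sminus s I x ≤ c := by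
  rw [H.sminus_eq_sSup hx]
  exact csSup_le (Set.Nonempty.image s (⟨0, H.zero_mem, hx⟩ : (I ∩ Iio x).Nonempty))
    (by rintro _ ⟨z, hz, rfl⟩; exact h z hz)

lemma sminus_mem_Shat (H : IsScale r I s) {x : ℝ} (hx : x ∈ Ilt r) : sminus s I x ∈ Shat s r :=
  ⟨H.sminus_nonneg (H.Ilt_subset hx),
    lt_of_le_of_lt (EReal.coe_le_coe_iff.2 (H.sminus_le (H.Ilt_subset hx))) (H.lt_rhat x hx)⟩

lemma tendsto_sminus (H : IsScale r I s) {x : ℝ} (hx : x ∈ Ilt r) (hx0 : 0 < x) :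
    Tendsto s (𝓝[<] x) (𝓝 (sminus s I x)) := by
  refine tendsto_order.2 ⟨fun a ha => ?_, fun a ha => ?_⟩
  · rw [H.sminus_eq_sSup hx0] at ha
    obtain ⟨_, ⟨z, ⟨hzI, hzx⟩, rfl⟩, hz⟩ :=
      exists_lt_of_lt_csSup (Set.Nonempty.image s (⟨0, H.zero_mem, hx0⟩ : (I ∩ Iio x).Nonempty)) ha
    filter_upwards [Ioo_mem_nhdsLT hzx] with w hw
    exact hz.trans_le (H.mono hzI
      (H.Ilt_subset (Ioo_subset_Ilt (H.nonneg_of_mem hzI) hx hw)) hw.1.le)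
  · filter_upwards [Ioo_mem_nhdsLT hx0] with w hw
    exact (H.le_sminus (H.Ilt_subset hx)
      (H.Ilt_subset (Ioo_subset_Ilt le_rfl hx hw)) hw.2).trans_lt ha

lemma splus_eq_sInf (H : IsScale r I s) {x : ℝ} (hx : x ∈ Ilt r) :
    splus s I x = sInf (s '' (I ∩ Ioi x)) := by
  obtain ⟨w, hw, hxw⟩ := exists_mem_Ilt_gt hx
  rw [splus, if_pos ⟨w, H.Ilt_subset hw, hxw⟩]

lemma image_Ioi_nonempty (H : IsScale r I s) {x : ℝ} (hx : x ∈ Ilt r) :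
    (s '' (I ∩ Ioi x)).Nonempty := by
  obtain ⟨w, hw, hxw⟩ := exists_mem_Ilt_gt hx
  exact Nonempty.image s ⟨w, H.Ilt_subset hw, hxw⟩

lemma le_splus_of_forall (H : IsScale r I s) {x c : ℝ} (hx : x ∈ Ilt r)
    (h : ∀ z ∈ I ∩ Ioi x, c ≤ s z) : c ≤ splus s I x := by
  rw [H.splus_eq_sInf hx]
  exact le_csInf (H.image_Ioi_nonempty hx) (by rintro _ ⟨z, hz, rfl⟩; exact h z hz)

lemma le_splus (H : IsScale r I s) {x : ℝ} (hx : x ∈ Ilt r) : s x ≤ splus s I x :=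
  H.le_splus_of_forall hx fun _ hz => H.mono (H.Ilt_subset hx) hz.1 hz.2.le

lemma splus_le (H : IsScale r I s) {x z : ℝ} (hx : x ∈ Ilt r) (hz : z ∈ I) (hxz : x < z) :
    splus s I x ≤ s z := by
  rw [H.splus_eq_sInf hx]
  refine csInf_le ⟨s x, ?_⟩ ⟨z, ⟨hz, hxz⟩, rfl⟩
  rintro _ ⟨w, ⟨hwI, hxw⟩, rfl⟩
  exact H.mono (H.Ilt_subset hx) hwI hxw.le

lemma splus_lt_rhat (H : IsScale r I s) {x : ℝ} (hx : x ∈ Ilt r) :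
    ((splus s I x : ℝ) : EReal) < rhat s r := by
  obtain ⟨w, hw, hxw⟩ := exists_mem_Ilt_gt hx
  exact lt_of_le_of_lt (EReal.coe_le_coe_iff.2 (H.splus_le hx (H.Ilt_subset hw) hxw))
    (H.lt_rhat w hw)

lemma splus_mem_Shat (H : IsScale r I s) {x : ℝ} (hx : x ∈ Ilt r) : splus s I x ∈ Shat s r :=
  ⟨(H.map_nonneg (H.Ilt_subset hx)).trans (H.le_splus hx), H.splus_lt_rhat hx⟩

lemma tendsto_splus (H : IsScale r I s) {x : ℝ} (hx : x ∈ Ilt r) :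
    Tendsto s (𝓝[>] x) (𝓝 (splus s I x)) := by
  refine tendsto_order.2 ⟨fun a ha => ?_, fun a ha => ?_⟩
  · obtain ⟨w, hw, hxw⟩ := exists_mem_Ilt_gt hx
    filter_upwards [Ioo_mem_nhdsGT hxw] with z hz
    exact ha.trans_le (H.splus_le hx (H.Ilt_subset (Ioo_subset_Ilt hx.1 hw hz)) hz.1)
  · rw [H.splus_eq_sInf hx] at ha
    obtain ⟨_, ⟨z, ⟨hzI, hxz⟩, rfl⟩, hz⟩ := exists_lt_of_csInf_lt (H.image_Ioi_nonempty hx) ha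
    filter_upwards [Ioo_mem_nhdsGT hxz] with w hw
    have hwI : w ∈ I := H.Ilt_subset ⟨hx.1.trans hw.1.le,
      (EReal.coe_lt_coe_iff.2 hw.2).trans_le (H.coe_le_of_mem hzI)⟩
    exact (H.mono hwI hzI hw.2.le).trans_lt hz

lemma splus_zero (H : IsScale r I s) : splus s I 0 = 0 := by
  refine le_antisymm
    (le_of_tendsto_of_tendsto' (H.tendsto_splus H.zero_mem_Ilt) H.tendsto_zero fun _ => le_rfl) ?_
  have := H.le_splus H.zero_mem_Ilt
  rwa [H.map_zero] at this

end IsScale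

/-! ### Generalized inverses of `s` -/

/- `exceed` is the right-continuous and `reach` the left-continuous generalized inverse. -/
noncomputable def exceed (r : EReal) (s : ℝ → ℝ) (y : ℝ) : ℝ := sInf {z | z ∈ Ilt r ∧ y < s z}

noncomputable def reach (r : EReal) (s : ℝ → ℝ) (y : ℝ) : ℝ := sInf {z | z ∈ Ilt r ∧ y ≤ s z}

lemma exists_mem_Ilt_lt_map {y : ℝ} (hy : (y : EReal) < rhat s r) : ∃ z ∈ Ilt r, y < s z := by
  obtain ⟨_, ⟨z, hz, rfl⟩, hyz⟩ := lt_sSup_iff.1 hy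
  exact ⟨z, hz, EReal.coe_lt_coe_iff.1 hyz⟩

lemma exceed_le {y z : ℝ} (hz : z ∈ Ilt r) (h : y < s z) : exceed r s y ≤ z :=
  csInf_le ⟨0, fun _ hw => hw.1.1⟩ ⟨hz, h⟩

lemma exceed_nonneg (y : ℝ) : 0 ≤ exceed r s y := Real.sInf_nonneg fun _ hz => hz.1.1

lemma exceed_mem_Ilt {y : ℝ} (hy : (y : EReal) < rhat s r) : exceed r s y ∈ Ilt r := by
  obtain ⟨z, hz, hyz⟩ := exists_mem_Ilt_lt_map hy
  exact Icc_subset_Ilt hz ⟨exceed_nonneg y, exceed_le hz hyz⟩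

lemma map_le_of_lt_exceed {y z : ℝ} (hz : z ∈ Ilt r) (h : z < exceed r s y) : s z ≤ y :=
  not_lt.1 fun hyz => (exceed_le hz hyz).not_gt h

lemma le_exceed_of_forall {y x : ℝ} (hy : (y : EReal) < rhat s r)
    (h : ∀ z ∈ Ilt r, y < s z → x ≤ z) : x ≤ exceed r s y := by
  obtain ⟨z, hz, hyz⟩ := exists_mem_Ilt_lt_map hy
  exact le_csInf ⟨z, hz, hyz⟩ fun w hw => h w hw.1 hw.2

lemma exceed_le_of_forall {y x : ℝ} (hy : (y : EReal) < rhat s r) (hx : 0 ≤ x)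
    (h : ∀ z ∈ Ilt r, x < z → y < s z) : exceed r s y ≤ x := by
  by_contra! hlt
  obtain ⟨w, hxw, hw⟩ := exists_between hlt
  have hwIlt : w ∈ Ilt r := Icc_subset_Ilt (exceed_mem_Ilt hy) ⟨hx.trans hxw.le, hw.le⟩
  exact (exceed_le hwIlt (h w hwIlt hxw)).not_gt hw

lemma reach_le {y z : ℝ} (hz : z ∈ Ilt r) (h : y ≤ s z) : reach r s y ≤ z :=
  csInf_le ⟨0, fun _ hw => hw.1.1⟩ ⟨hz, h⟩

lemma reach_le_exceed {y : ℝ} (hy : (y : EReal) < rhat s r) : reach r s y ≤ exceed r s y :=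
  le_exceed_of_forall hy fun _ hz hyz => reach_le hz hyz.le

lemma reach_mem_Ilt {y : ℝ} (hy : (y : EReal) < rhat s r) : reach r s y ∈ Ilt r :=
  Icc_subset_Ilt (exceed_mem_Ilt hy)
    ⟨Real.sInf_nonneg fun _ hz => hz.1.1, reach_le_exceed hy⟩

lemma map_lt_of_lt_reach {y z : ℝ} (hz : z ∈ Ilt r) (h : z < reach r s y) : s z < y :=
  not_le.1 fun hyz => (reach_le hz hyz).not_gt h

namespace IsScale

lemma lt_map_of_exceed_lt (H : IsScale r I s) {y z : ℝ} (hy : (y : EReal) < rhat s r)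
    (hz : z ∈ Ilt r) (h : exceed r s y < z) : y < s z := by
  obtain ⟨w₀, hw₀, hyw₀⟩ := exists_mem_Ilt_lt_map hy
  obtain ⟨w, ⟨hw, hyw⟩, hwz⟩ :=
    exists_lt_of_csInf_lt (⟨w₀, hw₀, hyw₀⟩ : {z | z ∈ Ilt r ∧ y < s z}.Nonempty) h
  exact hyw.trans_le (H.mono (H.Ilt_subset hw) (H.Ilt_subset hz) hwz.le)

lemma le_map_of_reach_lt (H : IsScale r I s) {y z : ℝ} (hy : (y : EReal) < rhat s r)
    (hz : z ∈ Ilt r) (h : reach r s y < z) : y ≤ s z := by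
  obtain ⟨w₀, hw₀, hyw₀⟩ := exists_mem_Ilt_lt_map hy
  obtain ⟨w, ⟨hw, hyw⟩, hwz⟩ :=
    exists_lt_of_csInf_lt (⟨w₀, hw₀, hyw₀.le⟩ : {z | z ∈ Ilt r ∧ y ≤ s z}.Nonempty) h
  exact hyw.trans (H.mono (H.Ilt_subset hw) (H.Ilt_subset hz) hwz.le)

lemma sminus_le_of_map_le (H : IsScale r I s) {x y : ℝ} (hx : x ∈ Ilt r) (hy : 0 ≤ y)
    (h : ∀ z ∈ Ilt r, z < x → s z ≤ y) : sminus s I x ≤ y := by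
  rcases hx.1.eq_or_lt with rfl | hx0
  · exact H.sminus_zero.trans_le hy
  · exact H.sminus_le_of_forall hx0 fun z hz =>
      h z (Icc_subset_Ilt hx ⟨H.nonneg_of_mem hz.1, hz.2.le⟩) hz.2

lemma le_splus_of_le_map (H : IsScale r I s) {x y : ℝ} (hx : x ∈ Ilt r)
    (hy : (y : EReal) < rhat s r) (h : ∀ z ∈ Ilt r, x < z → y ≤ s z) : y ≤ splus s I x := by
  refine H.le_splus_of_forall hx fun z hz => ?_
  rcases H.mem_Ilt_or_eq_rhat hz.1 with hzI | hz'
  · exact h z hzI hz.2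
  · exact (EReal.coe_lt_coe_iff.1 (hy.trans_eq hz'.symm)).le

lemma sminus_exceed_le (H : IsScale r I s) {y : ℝ} (hy0 : 0 ≤ y) (hy : (y : EReal) < rhat s r) :
    sminus s I (exceed r s y) ≤ y :=
  H.sminus_le_of_map_le (exceed_mem_Ilt hy) hy0 fun _ hz h => map_le_of_lt_exceed hz h

lemma le_splus_exceed (H : IsScale r I s) {y : ℝ} (hy : (y : EReal) < rhat s r) :
    y ≤ splus s I (exceed r s y) :=
  H.le_splus_of_le_map (exceed_mem_Ilt hy) hy fun _ hz h => (H.lt_map_of_exceed_lt hy hz h).le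

lemma sminus_reach_le (H : IsScale r I s) {y : ℝ} (hy0 : 0 ≤ y) (hy : (y : EReal) < rhat s r) :
    sminus s I (reach r s y) ≤ y :=
  H.sminus_le_of_map_le (reach_mem_Ilt hy) hy0 fun _ hz h => (map_lt_of_lt_reach hz h).le

lemma le_splus_reach (H : IsScale r I s) {y : ℝ} (hy : (y : EReal) < rhat s r) :
    y ≤ splus s I (reach r s y) :=
  H.le_splus_of_le_map (reach_mem_Ilt hy) hy fun _ hz h => H.le_map_of_reach_lt hy hz h

lemma reach_pos (H : IsScale r I s) {y : ℝ} (hy0 : 0 < y) (hy : (y : EReal) < rhat s r) :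
    0 < reach r s y := by
  refine (reach_mem_Ilt hy).1.lt_of_ne fun h => ?_
  have := H.le_splus_reach hy
  rw [← h, H.splus_zero] at this
  exact this.not_gt hy0

lemma exceed_eq_of_mem_Ico (H : IsScale r I s) {x y : ℝ} (hx : x ∈ Ilt r)
    (hy : y ∈ Ico (sminus s I x) (splus s I x)) : exceed r s y = x := by
  have hyr : (y : EReal) < rhat s r := (EReal.coe_lt_coe_iff.2 hy.2).trans (H.splus_lt_rhat hx)
  refine le_antisymm (exceed_le_of_forall hyr hx.1 fun z hz hxz => ?_)
    (le_exceed_of_forall hyr fun z hz hyz => ?_)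
  · exact hy.2.trans_le (H.splus_le hx (H.Ilt_subset hz) hxz)
  · by_contra! hzx
    exact (H.le_sminus (H.Ilt_subset hx) (H.Ilt_subset hz) hzx).not_gt (hy.1.trans_lt hyz)

end IsScale

/-! ### One-sided limits of functions in `C_s` -/

lemma leftLim_eq_of_eqOn_Ioo {p x v : ℝ} (hpx : p < x) (h : ∀ z ∈ Ioo p x, f z = v) :
    leftLim f x = v :=
  leftLim_eq_of_tendsto <| tendsto_const_nhds.congr' <|
    eventually_of_mem (Ioo_mem_nhdsLT hpx) fun z hz => (h z hz).symm

lemma rightLim_eq_of_eqOn_Ioo {q x v : ℝ} (hxq : x < q) (h : ∀ z ∈ Ioo x q, f z = v) :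
    rightLim f x = v :=
  rightLim_eq_of_tendsto <| tendsto_const_nhds.congr' <|
    eventually_of_mem (Ioo_mem_nhdsGT hxq) fun z hz => (h z hz).symm

namespace Cs

lemma tendsto_leftLim (hf : f ∈ Cs s r) {x : ℝ} (hx : x ∈ Ilt r) (hx0 : 0 < x) :
    Tendsto f (𝓝[<] x) (𝓝 (leftLim f x)) := by
  obtain ⟨L, hL⟩ := (hf.2.1 x hx0 hx.2).1
  rwa [leftLim_eq_of_tendsto hL]

lemma rightLim_zero (hf : f ∈ Cs s r) : rightLim f 0 = f 0 := rightLim_eq_of_tendsto hf.1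

lemma tendsto_rightLim (hf : f ∈ Cs s r) {x : ℝ} (hx : x ∈ Ilt r) :
    Tendsto f (𝓝[>] x) (𝓝 (rightLim f x)) := by
  rcases hx.1.eq_or_lt with rfl | hx0
  · rw [rightLim_zero hf]
    exact hf.1
  · obtain ⟨L, hL⟩ := (hf.2.1 x hx0 hx.2).2
    rwa [rightLim_eq_of_tendsto hL]

lemma eq_of_map_eq (hf : f ∈ Cs s r) {z w : ℝ} (hz : z ∈ Ilt r) (hw : w ∈ Ilt r)
    (h : s z = s w) : f z = f w := by
  rcases le_total z w with hzw | hwz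
  · exact hf.2.2.2 z w hz.1 hzw hw.2 h
  · exact (hf.2.2.2 w z hw.1 hwz hz.2 h.symm).symm

lemma leftLim_eq_self (hf : f ∈ Cs s r) (H : IsScale r I s) {x : ℝ} (hx : x ∈ Ilt r)
    (hx0 : 0 < x) (h : sminus s I x = s x) : leftLim f x = f x :=
  leftLim_eq_of_tendsto ((hf.2.2.1 x hx0 hx.2).2 (h ▸ H.tendsto_sminus hx hx0))

lemma rightLim_eq_self (hf : f ∈ Cs s r) (H : IsScale r I s) {x : ℝ} (hx : x ∈ Ilt r)
    (h : splus s I x = s x) : rightLim f x = f x := by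
  rcases hx.1.eq_or_lt with rfl | hx0
  · exact rightLim_zero hf
  · exact rightLim_eq_of_tendsto ((hf.2.2.1 x hx0 hx.2).1 (h ▸ H.tendsto_splus hx))

end Cs

/-! ### The construction of `f̂` -/

/-- When `a = b` this is the constant `u`, since `x / 0 = 0`. -/
noncomputable def interp (a b u v y : ℝ) : ℝ := u + (y - a) / (b - a) * (v - u)

lemma interp_left (a b u v : ℝ) : interp a b u v a = u := by simp [interp]

lemma interp_right {a b u v : ℝ} (h : a = b → u = v) : interp a b u v b = v := by
  rcases eq_or_ne a b with rfl | hab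
  · rw [interp_left, h rfl]
  · rw [interp, div_self (sub_ne_zero.2 hab.symm)]
    ring

lemma continuous_interp (a b u v : ℝ) : Continuous (interp a b u v) := by
  unfold interp
  fun_prop

lemma interp_convex_comb (a b u v x y t : ℝ) :
    interp a b u v (t * x + (1 - t) * y) = t * interp a b u v x + (1 - t) * interp a b u v y := by
  simp only [interp]
  ring

lemma abs_interp_sub_le {a b u v y L ε : ℝ} (hy : y ∈ Icc a b) (hu : |u - L| ≤ ε)
    (hv : |v - L| ≤ ε) : |interp a b u v y - L| ≤ ε := by
  set t := (y - a) / (b - a)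
  have ht0 : 0 ≤ t := div_nonneg (sub_nonneg.2 hy.1) (sub_nonneg.2 (hy.1.trans hy.2))
  have ht1 : t ≤ 1 := div_le_one_of_le₀ (by linarith [hy.2]) (by linarith [hy.1, hy.2])
  calc |interp a b u v y - L| = |(1 - t) * (u - L) + t * (v - L)| := by
        show |u + t * (v - u) - L| = _
        ring_nf
    _ ≤ (1 - t) * |u - L| + t * |v - L| := by
        refine (abs_add_le _ _).trans_eq ?_
        rw [abs_mul, abs_mul, abs_of_nonneg (sub_nonneg.2 ht1), abs_of_nonneg ht0]
    _ ≤ (1 - t) * ε + t * ε := by gcongr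
    _ = ε := by ring

noncomputable def jumpInterp (I : Set ℝ) (s f : ℝ → ℝ) (x y : ℝ) : ℝ :=
  if y ≤ s x then interp (sminus s I x) (s x) (leftLim f x) (f x) y
  else interp (s x) (splus s I x) (f x) (rightLim f x) y

noncomputable def hatf (r : EReal) (I : Set ℝ) (s f : ℝ → ℝ) (y : ℝ) : ℝ :=
  if exceed r s y = 0 then f 0 else jumpInterp I s f (exceed r s y) y

lemma hatf_of_exceed_eq {x y : ℝ} (hx : exceed r s y = x) (hx0 : x ≠ 0) :
    hatf r I s f y = jumpInterp I s f x y := by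
  rw [hatf, if_neg (hx ▸ hx0), hx]

lemma jumpInterp_of_le {x y : ℝ} (h : y ≤ s x) :
    jumpInterp I s f x y = interp (sminus s I x) (s x) (leftLim f x) (f x) y := if_pos h

lemma jumpInterp_of_lt {x y : ℝ} (h : s x < y) :
    jumpInterp I s f x y = interp (s x) (splus s I x) (f x) (rightLim f x) y := if_neg h.not_ge

lemma abs_jumpInterp_sub_le {x y L ε : ℝ} (hy : y ∈ Icc (sminus s I x) (splus s I x))
    (hl : |leftLim f x - L| ≤ ε) (hm : |f x - L| ≤ ε) (hr : |rightLim f x - L| ≤ ε) :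
    |jumpInterp I s f x y - L| ≤ ε := by
  rcases le_or_gt y (s x) with h | h
  · rw [jumpInterp_of_le h]
    exact abs_interp_sub_le ⟨hy.1, h⟩ hl hm
  · rw [jumpInterp_of_lt h]
    exact abs_interp_sub_le ⟨h.le, hy.2⟩ hm hr

namespace IsScale

variable {x y : ℝ}

lemma hatf_of_flat (H : IsScale r I s) (hf : f ∈ Cs s r) (hx : x ∈ Ilt r)
    (hxy : x < exceed r s y) (hsx : s x = y) : hatf r I s f y = f x := by
  subst hsx
  have hx₀ := exceed_mem_Ilt (H.lt_rhat x hx)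
  have hflat : ∀ z ∈ Ioo x (exceed r s (s x)), s z = s x := fun z hz =>
    le_antisymm (map_le_of_lt_exceed (Ioo_subset_Ilt hx.1 hx₀ hz) hz.2)
      (H.mono (H.Ilt_subset hx) (H.Ilt_subset (Ioo_subset_Ilt hx.1 hx₀ hz)) hz.1.le)
  have hsm : sminus s I (exceed r s (s x)) = s x :=
    le_antisymm (H.sminus_exceed_le (H.map_nonneg (H.Ilt_subset hx)) (H.lt_rhat x hx))
      (H.le_sminus (H.Ilt_subset hx₀) (H.Ilt_subset hx) hxy)
  rw [hatf_of_exceed_eq rfl (hx.1.trans_lt hxy).ne',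
    jumpInterp_of_le (H.mono (H.Ilt_subset hx) (H.Ilt_subset hx₀) hxy.le), hsm,
    interp_left]
  exact leftLim_eq_of_eqOn_Ioo hxy fun z hz =>
    Cs.eq_of_map_eq hf (Ioo_subset_Ilt hx.1 hx₀ hz) hx (hflat z hz)

lemma hatf_map (H : IsScale r I s) (hf : f ∈ Cs s r) (hx : x ∈ Ilt r) :
    hatf r I s f (s x) = f x := by
  have hy := H.lt_rhat x hx
  have hxx₀ : x ≤ exceed r s (s x) := le_exceed_of_forall hy fun z hz hxz =>
    not_lt.1 fun hzx => (H.mono (H.Ilt_subset hz) (H.Ilt_subset hx) hzx.le).not_gt hxz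
  rcases hxx₀.lt_or_eq with hlt | heq
  · exact H.hatf_of_flat hf hx hlt rfl
  rcases hx.1.eq_or_lt with rfl | hx0
  · rw [hatf, if_pos heq.symm]
  rw [hatf_of_exceed_eq heq.symm hx0.ne', jumpInterp_of_le le_rfl]
  exact interp_right fun h => Cs.leftLim_eq_self hf H hx hx0 h

lemma hatf_sminus (H : IsScale r I s) (hf : f ∈ Cs s r) (hx : x ∈ Ilt r) (hx0 : 0 < x) :
    hatf r I s f (sminus s I x) = leftLim f x := by
  have hy : ((sminus s I x : ℝ) : EReal) < rhat s r := (H.sminus_mem_Shat hx).2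
  have hxx₀ : x ≤ exceed r s (sminus s I x) := le_exceed_of_forall hy fun z hz hxz =>
    not_lt.1 fun hzx => (H.le_sminus (H.Ilt_subset hx) (H.Ilt_subset hz) hzx).not_gt hxz
  rcases hxx₀.lt_or_eq with hlt | heq
  · have hsx : s x = sminus s I x :=
      le_antisymm (map_le_of_lt_exceed hx hlt) (H.sminus_le (H.Ilt_subset hx))
    rw [H.hatf_of_flat hf hx hlt hsx, Cs.leftLim_eq_self hf H hx hx0 hsx.symm]
  · rw [hatf_of_exceed_eq heq.symm hx0.ne', jumpInterp_of_le (H.sminus_le (H.Ilt_subset hx)),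
      interp_left]

lemma hatf_splus (H : IsScale r I s) (hf : f ∈ Cs s r) (hx : x ∈ Ilt r)
    (hy : ((splus s I x : ℝ) : EReal) < rhat s r) :
    hatf r I s f (splus s I x) = rightLim f x := by
  rcases (H.le_splus hx).eq_or_lt with hsx | hsx
  · rw [← hsx, H.hatf_map hf hx, Cs.rightLim_eq_self hf H hx hsx.symm]
  have hx₀ := exceed_mem_Ilt hy
  have hxx₀ : x ≤ exceed r s (splus s I x) := le_exceed_of_forall hy fun z hz hxz =>
    not_lt.1 fun hzx =>
      ((H.mono (H.Ilt_subset hz) (H.Ilt_subset hx) hzx.le).trans (H.le_splus hx)).not_gt hxz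
  rcases hxx₀.lt_or_eq with hlt | heq
  · obtain ⟨m, hxm, hm⟩ := exists_between hlt
    have hmIlt : m ∈ Ilt r := Ioo_subset_Ilt hx.1 hx₀ ⟨hxm, hm⟩
    have hflat : ∀ z ∈ Ioo x (exceed r s (splus s I x)), s z = splus s I x := fun z hz =>
      le_antisymm (map_le_of_lt_exceed (Ioo_subset_Ilt hx.1 hx₀ hz) hz.2)
        (H.splus_le hx (H.Ilt_subset (Ioo_subset_Ilt hx.1 hx₀ hz)) hz.1)
    rw [H.hatf_of_flat hf hmIlt hm (hflat m ⟨hxm, hm⟩)]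
    exact (rightLim_eq_of_eqOn_Ioo hxm fun z hz => Cs.eq_of_map_eq hf
      (Ioo_subset_Ilt hx.1 hmIlt hz) hmIlt
      (by rw [hflat z ⟨hz.1, hz.2.trans hm⟩, hflat m ⟨hxm, hm⟩])).symm
  · have hx0 : x ≠ 0 := by
      rintro rfl
      rw [H.splus_zero, H.map_zero] at hsx
      exact hsx.false
    rw [hatf_of_exceed_eq heq.symm hx0, jumpInterp_of_lt hsx]
    exact interp_right fun h => absurd h hsx.ne

end IsScale

/-! ### Continuity of `f̂` -/

lemma continuousWithinAt_Ici_of_eqOn {g φ : ℝ → ℝ} {a b : ℝ} (hab : a < b)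
    (h : EqOn g φ (Icc a b)) (hφ : Continuous φ) : ContinuousWithinAt g (Ici a) a :=
  (hφ.continuousWithinAt.congr_of_mem (fun _ hy => h hy)
    (left_mem_Icc.2 hab.le)).mono_of_mem_nhdsWithin (Icc_mem_nhdsGE hab)

lemma continuousWithinAt_Iic_of_eqOn {g φ : ℝ → ℝ} {a b : ℝ} (hab : a < b)
    (h : EqOn g φ (Icc a b)) (hφ : Continuous φ) : ContinuousWithinAt g (Iic b) b :=
  (hφ.continuousWithinAt.congr_of_mem (fun _ hy => h hy)
    (right_mem_Icc.2 hab.le)).mono_of_mem_nhdsWithin (Icc_mem_nhdsLE hab)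

lemma tendsto_of_forall_eventually_abs_sub_le {g : ℝ → ℝ} {l : Filter ℝ} {L : ℝ}
    (h : ∀ ε > 0, ∀ᶠ y in l, |g y - L| ≤ ε) : Tendsto g l (𝓝 L) :=
  Metric.tendsto_nhds.2 fun ε hε => (h (ε / 2) (half_pos hε)).mono fun y hy => by
    rw [Real.dist_eq]
    linarith

lemma exceed_mono {y y' : ℝ} (hy' : (y' : EReal) < rhat s r) (h : y ≤ y') :
    exceed r s y ≤ exceed r s y' :=
  le_exceed_of_forall hy' fun _ hz hyz => exceed_le hz (h.trans_lt hyz)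

namespace IsScale

variable {x y : ℝ}

lemma le_exceed_of_map_lt (H : IsScale r I s) {w : ℝ} (hw : w ∈ I) (hy : (y : EReal) < rhat s r)
    (h : s w < y) : w ≤ exceed r s y :=
  le_exceed_of_forall hy fun _ hz hyz =>
    not_lt.1 fun hzw => (H.mono (H.Ilt_subset hz) hw hzw.le).not_gt (h.trans hyz)

lemma hatf_eqOn_interp_left (H : IsScale r I s) (hf : f ∈ Cs s r) (hx : x ∈ Ilt r)
    (hx0 : 0 < x) :
    EqOn (hatf r I s f) (interp (sminus s I x) (s x) (leftLim f x) (f x))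
      (Icc (sminus s I x) (s x)) := by
  intro y hy
  rcases hy.2.lt_or_eq with hlt | rfl
  · rw [hatf_of_exceed_eq (H.exceed_eq_of_mem_Ico hx ⟨hy.1, hlt.trans_le (H.le_splus hx)⟩)
      hx0.ne', jumpInterp_of_le hlt.le]
  · rw [H.hatf_map hf hx]
    exact (interp_right fun h => Cs.leftLim_eq_self hf H hx hx0 h).symm

lemma hatf_eqOn_interp_right (H : IsScale r I s) (hf : f ∈ Cs s r) (hx : x ∈ Ilt r)
    (hx0 : 0 < x) :
    EqOn (hatf r I s f) (interp (s x) (splus s I x) (f x) (rightLim f x))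
      (Icc (s x) (splus s I x)) := by
  intro y hy
  rcases hy.1.eq_or_lt with rfl | hxy
  · rw [H.hatf_map hf hx, interp_left]
  rcases hy.2.lt_or_eq with hlt | rfl
  · rw [hatf_of_exceed_eq (H.exceed_eq_of_mem_Ico hx
      ⟨(H.sminus_le (H.Ilt_subset hx)).trans hxy.le, hlt⟩) hx0.ne', jumpInterp_of_lt hxy]
  · rw [H.hatf_splus hf hx (H.splus_lt_rhat hx)]
    exact (interp_right fun h => absurd h hxy.ne).symm

/-- `f̂ y` is a convex combination of `f(x−)`, `f(x)` and `f(x+)` at `x = exceed y`. -/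
lemma abs_hatf_sub_le (H : IsScale r I s) (hf : f ∈ Cs s r) {a b L ε : ℝ} (ha : 0 ≤ a)
    (hfab : ∀ z ∈ Ilt r, z ∈ Ioo a b → |f z - L| ≤ ε) (hy0 : 0 ≤ y)
    (hy : (y : EReal) < rhat s r) (hx : exceed r s y ∈ Ioo a b) :
    |hatf r I s f y - L| ≤ ε := by
  set x := exceed r s y
  have hxIlt : x ∈ Ilt r := exceed_mem_Ilt hy
  have hx0 : 0 < x := ha.trans_lt hx.1
  obtain ⟨w, hw, hxw⟩ := exists_mem_Ilt_gt hxIlt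
  rw [hatf_of_exceed_eq rfl hx0.ne']
  refine abs_jumpInterp_sub_le ⟨H.sminus_exceed_le hy0 hy, H.le_splus_exceed hy⟩ ?_
    (hfab x hxIlt hx) ?_
  · refine le_of_tendsto ((Cs.tendsto_leftLim hf hxIlt hx0).sub_const L).abs ?_
    filter_upwards [Ioo_mem_nhdsLT hx.1] with z hz
    exact hfab z (Ioo_subset_Ilt ha hxIlt hz) ⟨hz.1, hz.2.trans hx.2⟩
  · refine le_of_tendsto ((Cs.tendsto_rightLim hf hxIlt).sub_const L).abs ?_
    filter_upwards [Ioo_mem_nhdsGT (lt_min hx.2 hxw)] with z hz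
    exact hfab z (Ioo_subset_Ilt hxIlt.1 hw ⟨hz.1, hz.2.trans_le (min_le_right _ _)⟩)
      ⟨hx.1.trans hz.1, hz.2.trans_le (min_le_left _ _)⟩

lemma tendsto_hatf_nhdsGT (H : IsScale r I s) (hf : f ∈ Cs s r) (hy0 : 0 ≤ y)
    (hy : (y : EReal) < rhat s r) (hsy : splus s I (exceed r s y) = y) :
    Tendsto (hatf r I s f) (𝓝[>] y) (𝓝 (rightLim f (exceed r s y))) := by
  set x := exceed r s y
  have hxIlt : x ∈ Ilt r := exceed_mem_Ilt hy
  refine tendsto_of_forall_eventually_abs_sub_le fun ε hε => ?_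
  obtain ⟨q, hxq, hq⟩ := mem_nhdsGT_iff_exists_Ioo_subset.1
    (Metric.tendsto_nhds.1 (Cs.tendsto_rightLim hf hxIlt) ε hε)
  obtain ⟨w₂, hw₂, hxw₂⟩ := exists_mem_Ilt_gt hxIlt
  obtain ⟨w, hxw, hw⟩ := exists_between (lt_min hxq hxw₂)
  have hwIlt : w ∈ Ilt r := Ioo_subset_Ilt hxIlt.1 hw₂ ⟨hxw, hw.trans_le (min_le_right _ _)⟩
  -- for `y' ∈ (y, s w)`, `exceed y'` lies in `(x, w]`, where `f` is close to `f(x+)`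
  filter_upwards [Ioo_mem_nhdsGT (H.lt_map_of_exceed_lt hy hwIlt hxw)] with y' hy'
  have hy'r : (y' : EReal) < rhat s r := (EReal.coe_lt_coe_iff.2 hy'.2).trans (H.lt_rhat w hwIlt)
  refine H.abs_hatf_sub_le hf hxIlt.1
    (fun z _ hz => (by simpa [Real.dist_eq] using hq hz : _ < ε).le)
    (hy0.trans hy'.1.le) hy'r ⟨(exceed_mono hy'r hy'.1.le).lt_of_ne fun h => ?_,
      (exceed_le hwIlt hy'.2).trans_lt (hw.trans_le (min_le_left _ _))⟩
  have := H.le_splus_exceed hy'r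
  rw [← h, hsy] at this
  exact this.not_gt hy'.1

lemma tendsto_hatf_nhdsLT (H : IsScale r I s) (hf : f ∈ Cs s r) (hy0 : 0 < y)
    (hy : (y : EReal) < rhat s r) (hsy : sminus s I (reach r s y) = y) :
    Tendsto (hatf r I s f) (𝓝[<] y) (𝓝 (leftLim f (reach r s y))) := by
  set σ := reach r s y
  have hσ : σ ∈ Ilt r := reach_mem_Ilt hy
  have hσ0 : 0 < σ := H.reach_pos hy0 hy
  refine tendsto_of_forall_eventually_abs_sub_le fun ε hε => ?_
  obtain ⟨p, hpσ, hp⟩ := mem_nhdsLT_iff_exists_Ioo_subset.1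
    (Metric.tendsto_nhds.1 (Cs.tendsto_leftLim hf hσ hσ0) ε hε)
  obtain ⟨w, hpw, hwσ⟩ := exists_between (max_lt hpσ hσ0)
  have hwIlt : w ∈ Ilt r := Ioo_subset_Ilt (le_max_right _ _) hσ ⟨hpw, hwσ⟩
  -- for `y' ∈ (s w, y)`, `exceed y'` lies in `[w, σ)`, where `f` is close to `f(σ−)`
  filter_upwards [Ioo_mem_nhdsLT (map_lt_of_lt_reach hwIlt hwσ)] with y' hy'
  have hy'r : (y' : EReal) < rhat s r := (EReal.coe_lt_coe_iff.2 hy'.2).trans hy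
  have hy'0 : 0 ≤ y' := (H.map_nonneg (H.Ilt_subset hwIlt)).trans hy'.1.le
  refine H.abs_hatf_sub_le hf (le_max_right p 0) (fun z _ hz => (by
    simpa [Real.dist_eq] using hp ⟨(le_max_left _ _).trans_lt hz.1, hz.2⟩ : _ < ε).le) hy'0 hy'r
    ⟨hpw.trans_le (H.le_exceed_of_map_lt (H.Ilt_subset hwIlt) hy'r hy'.1), ?_⟩
  refine (exceed_le hσ (hy'.2.trans_le ?_)).lt_of_ne fun h => ?_
  · exact hsy ▸ H.sminus_le (H.Ilt_subset hσ)
  · have := H.sminus_exceed_le hy'0 hy'r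
    rw [h, hsy] at this
    exact this.not_gt hy'.2

lemma continuousWithinAt_hatf_Ici (H : IsScale r I s) (hf : f ∈ Cs s r) (hy : y ∈ Shat s r) :
    ContinuousWithinAt (hatf r I s f) (Ici y) y := by
  have hx := exceed_mem_Ilt hy.2
  rcases (H.le_splus_exceed hy.2).lt_or_eq with hlt | heq
  · have hx0 : 0 < exceed r s y := hx.1.lt_of_ne fun h => by
      rw [← h, H.splus_zero] at hlt
      exact hlt.not_ge hy.1
    rcases lt_or_ge y (s (exceed r s y)) with hys | hsy
    · exact continuousWithinAt_Ici_of_eqOn hys ((H.hatf_eqOn_interp_left hf hx hx0).mono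
        (Icc_subset_Icc_left (H.sminus_exceed_le hy.1 hy.2))) (continuous_interp _ _ _ _)
    · exact continuousWithinAt_Ici_of_eqOn hlt ((H.hatf_eqOn_interp_right hf hx hx0).mono
        (Icc_subset_Icc_left hsy)) (continuous_interp _ _ _ _)
  · rw [← continuousWithinAt_Ioi_iff_Ici, ContinuousWithinAt]
    convert H.tendsto_hatf_nhdsGT hf hy.1 hy.2 heq.symm using 2
    conv_lhs => rw [heq]
    exact H.hatf_splus hf hx (heq ▸ hy.2)

lemma continuousWithinAt_hatf_Iic (H : IsScale r I s) (hf : f ∈ Cs s r) (hy0 : 0 < y)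
    (hy : (y : EReal) < rhat s r) : ContinuousWithinAt (hatf r I s f) (Iic y) y := by
  set σ := reach r s y
  have hσ : σ ∈ Ilt r := reach_mem_Ilt hy
  have hσ0 : 0 < σ := H.reach_pos hy0 hy
  rcases (H.sminus_reach_le hy0.le hy).lt_or_eq with hlt | heq
  · rcases le_or_gt y (s σ) with hys | hsy
    · exact continuousWithinAt_Iic_of_eqOn hlt ((H.hatf_eqOn_interp_left hf hσ hσ0).mono
        (Icc_subset_Icc_right hys)) (continuous_interp _ _ _ _)
    · exact continuousWithinAt_Iic_of_eqOn hsy ((H.hatf_eqOn_interp_right hf hσ hσ0).mono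
        (Icc_subset_Icc_right (H.le_splus_reach hy))) (continuous_interp _ _ _ _)
  · rw [← continuousWithinAt_Iio_iff_Iic, ContinuousWithinAt]
    convert H.tendsto_hatf_nhdsLT hf hy0 hy heq using 2
    conv_lhs => rw [← heq]
    exact H.hatf_sminus hf hσ hσ0

lemma continuousOn_hatf (H : IsScale r I s) (hf : f ∈ Cs s r) :
    ContinuousOn (hatf r I s f) (Shat s r) := by
  intro y hy
  rcases hy.1.eq_or_lt with rfl | hy0
  · exact (H.continuousWithinAt_hatf_Ici hf hy).mono fun z hz => hz.1
  · exact (continuousAt_iff_continuous_left_right.2 ⟨H.continuousWithinAt_hatf_Iic hf hy0 hy.2,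
      H.continuousWithinAt_hatf_Ici hf hy⟩).continuousWithinAt

end IsScale

/-! ### `f̂` is affine on the gaps of `Î` -/

lemma coe_mem_Ihat_iff {p : ℝ} (hp : (p : EReal) < rhat s r) :
    (p : EReal) ∈ Ihat s I r ↔ p ∈ closure (s '' I) := by
  have hcl : p ∈ closure (s '' I) ↔ (p : EReal) ∈ closure (sImage s I) := by
    rw [EReal.isEmbedding_coe.closure_eq_preimage_closure_image, image_image]
    rfl
  rw [hcl, Ihat]
  split_ifs
  · rfl
  · exact ⟨fun h => h.1, fun h => ⟨h, hp.ne⟩⟩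

lemma exceed_eq_of_gap {a b p q : ℝ} (hgap : ∀ z ∈ Ilt r, s z ∉ Ioo a b) (hp : p ∈ Ioo a b)
    (hq : q ∈ Ioo a b) : exceed r s p = exceed r s q := by
  have key : ∀ p ∈ Ioo a b, ∀ q ∈ Ioo a b, ∀ z ∈ Ilt r, p < s z → q < s z :=
    fun p hp q hq z hz hpz => hq.2.trans_le (not_lt.1 fun hzb => hgap z hz ⟨hp.1.trans hpz, hzb⟩)
  simp only [exceed]
  congr 1
  ext z
  exact and_congr_right fun hz => ⟨key p hp q hq z hz, key q hq p hp z hz⟩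

namespace IsScale

lemma hatf_eqOn_interp_of_gap (H : IsScale r I s) {a b : ℝ} (hab : a < b)
    (hsub : Ioo a b ⊆ Shat s r \ {xh : ℝ | (xh : EReal) ∈ Ihat s I r}) :
    ∃ a' b' u v : ℝ, EqOn (hatf r I s f) (interp a' b' u v) (Ioo a b) := by
  have hnot : ∀ p ∈ Ioo a b, p ∉ closure (s '' I) := fun p hp hc =>
    (hsub hp).2 ((coe_mem_Ihat_iff (hsub hp).1.2).2 hc)
  have hgap : ∀ z ∈ I, s z ∉ Ioo a b := fun z hz hmem =>
    hnot _ hmem (subset_closure (mem_image_of_mem s hz))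
  obtain ⟨q, haq, hqb⟩ := exists_between hab
  obtain ⟨p, hap, hpq⟩ := exists_between haq
  have hq : q ∈ Ioo a b := ⟨haq, hqb⟩
  have hexceed : ∀ y ∈ Ioo a b, exceed r s y = exceed r s q := fun y hy =>
    exceed_eq_of_gap (fun z hz => hgap z (H.Ilt_subset hz)) hy hq
  have hx := exceed_mem_Ilt (hsub hq).1.2
  have hx0 : exceed r s q ≠ 0 := fun h => by
    have := H.le_splus_exceed (hsub hq).1.2
    rw [h, H.splus_zero] at this
    exact this.not_gt (((hsub ⟨hap, hpq.trans hqb⟩).1.1).trans_lt hpq)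
  rcases le_or_gt (s (exceed r s q)) a with hleft | hright
  · exact ⟨_, _, _, _, fun y hy => by
      rw [hatf_of_exceed_eq (hexceed y hy) hx0, jumpInterp_of_lt (hleft.trans_lt hy.1)]⟩
  · have hb : b ≤ s (exceed r s q) :=
      not_lt.1 fun h => hgap _ (H.Ilt_subset hx) ⟨hright, h⟩
    exact ⟨_, _, _, _, fun y hy => by
      rw [hatf_of_exceed_eq (hexceed y hy) hx0, jumpInterp_of_le (hy.2.le.trans hb)]⟩

lemma hatf_mem_Chat (H : IsScale r I s) (hf : f ∈ Cs s r) : hatf r I s f ∈ Chat s I r := by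
  refine ⟨H.continuousOn_hatf hf, fun a b hsub x hx y hy t ht => ?_⟩
  obtain ⟨a', b', u, v, hφ⟩ := H.hatf_eqOn_interp_of_gap (f := f) (hx.1.trans hx.2) hsub
  have hmem : t * x + (1 - t) * y ∈ Ioo a b := by
    simpa only [smul_eq_mul] using convex_Ioo a b hx hy ht.1 (sub_nonneg.2 ht.2) (by ring)
  rw [hφ hmem, hφ hx, hφ hy, interp_convex_comb]

end IsScale

/-! ### Uniqueness of `f̂` -/

/-- Pass to the limit `h → 0⁺` in `g y = c g(A + h) + (1 - c) g(B - h)`, where `c` is such that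
`y = c (A + h) + (1 - c) (B - h)`. -/
lemma eq_interp_of_convex_comb {g : ℝ → ℝ} {A B y : ℝ} (hy : y ∈ Ioo A B)
    (hcomb : ∀ x ∈ Ioo A B, ∀ z ∈ Ioo A B, ∀ t ∈ Icc (0 : ℝ) 1,
      g (t * x + (1 - t) * z) = t * g x + (1 - t) * g z)
    (hA : Tendsto g (𝓝[>] A) (𝓝 (g A))) (hB : Tendsto g (𝓝[<] B) (𝓝 (g B))) :
    g y = interp A B (g A) (g B) y := by
  obtain ⟨hAy, hyB⟩ := hy
  have hAB : B - A ≠ 0 := (sub_pos.2 (hAy.trans hyB)).ne'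
  let c : ℝ → ℝ := fun h => (B - h - y) / (B - h - (A + h))
  have hc : Tendsto c (𝓝[>] 0) (𝓝 ((B - y) / (B - A))) := by
    have : ContinuousAt c 0 := ContinuousAt.div (by fun_prop) (by fun_prop) (by simpa using hAB)
    simpa [c] using this.tendsto.mono_left nhdsWithin_le_nhds
  have hleft : Tendsto (fun h => A + h) (𝓝[>] 0) (𝓝[>] A) := by
    refine tendsto_nhdsWithin_iff.2 ⟨?_, eventually_nhdsWithin_of_forall fun h (hh : 0 < h) =>
      show A < A + h by linarith⟩
    exact ((continuous_const_add A).tendsto' 0 A (add_zero A)).mono_left nhdsWithin_le_nhds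
  have hright : Tendsto (fun h => B - h) (𝓝[>] 0) (𝓝[<] B) := by
    refine tendsto_nhdsWithin_iff.2 ⟨?_, eventually_nhdsWithin_of_forall fun h (hh : 0 < h) =>
      show B - h < B by linarith⟩
    exact ((continuous_sub_left B).tendsto' 0 B (sub_zero B)).mono_left nhdsWithin_le_nhds
  have hlim := (hc.mul (hA.comp hleft)).add
    ((tendsto_const_nhds (x := (1 : ℝ)) |>.sub hc).mul (hB.comp hright))
  have hev : ∀ᶠ h in 𝓝[>] 0, c h * g (A + h) + (1 - c h) * g (B - h) = g y := by
    have hδ : (0 : ℝ) < min (y - A) (B - y) := lt_min (sub_pos.2 hAy) (sub_pos.2 hyB)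
    filter_upwards [Ioo_mem_nhdsGT hδ] with h hh
    have h1 : A + h < y := by linarith [hh.2.trans_le (min_le_left _ _)]
    have h2 : y < B - h := by linarith [hh.2.trans_le (min_le_right _ _)]
    have hden : 0 < B - h - (A + h) := by linarith
    rw [← hcomb (A + h) ⟨by linarith [hh.1], by linarith⟩ (B - h) ⟨by linarith, by linarith [hh.1]⟩
      (c h) ⟨div_nonneg (by linarith) hden.le, div_le_one_of_le₀ (by linarith) hden.le⟩]
    congr 1
    simp only [c]
    field_simp
    ring
  rw [← tendsto_nhds_unique (hlim.congr' hev) tendsto_const_nhds, interp]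
  field_simp
  ring

lemma exists_gap_of_notMem {K : Set ℝ} (hK : IsClosed K) {a b y : ℝ} (ha : a ∈ K) (hb : b ∈ K)
    (hy : y ∈ Icc a b) (hyK : y ∉ K) :
    ∃ A ∈ K, ∃ B ∈ K, a ≤ A ∧ B ≤ b ∧ y ∈ Ioo A B ∧ ∀ k ∈ K, k ∉ Ioo A B := by
  have hcA : IsCompact (K ∩ Icc a y) := isCompact_Icc.inter_left hK
  have hcB : IsCompact (K ∩ Icc y b) := isCompact_Icc.inter_left hK
  have hA := hcA.sSup_mem ⟨a, ha, le_rfl, hy.1⟩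
  have hB := hcB.sInf_mem ⟨b, hb, hy.2, le_rfl⟩
  refine ⟨_, hA.1, _, hB.1, hA.2.1, hB.2.2,
    ⟨hA.2.2.lt_of_ne fun h => hyK (h ▸ hA.1), hB.2.1.lt_of_ne fun h => hyK (h ▸ hB.1)⟩,
    fun k hk hkAB => ?_⟩
  rcases le_total k y with hky | hyk
  · exact (le_csSup hcA.bddAbove ⟨hk, hA.2.1.trans hkAB.1.le, hky⟩).not_gt hkAB.1
  · exact (csInf_le hcB.bddBelow ⟨hk, hyk, hkAB.2.le.trans hB.2.2⟩).not_gt hkAB.2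

namespace IsScale

lemma mem_closure_of_mem_closure_image (H : IsScale r I s) {p : ℝ} (hp : (p : EReal) < rhat s r)
    (hc : p ∈ closure (s '' I)) : p ∈ closure (s '' Ilt r) := by
  have hsub : s '' I ⊆ s '' Ilt r ∪ {q | (q : EReal) = rhat s r} := by
    rintro _ ⟨z, hz, rfl⟩
    exact (H.mem_Ilt_or_eq_rhat hz).imp (mem_image_of_mem s) id
  have hclosed : IsClosed {q : ℝ | (q : EReal) = rhat s r} :=
    isClosed_eq continuous_coe_real_ereal continuous_const
  rcases closure_minimal (hsub.trans (union_subset_union_left _ subset_closure))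
    (isClosed_closure.union hclosed) hc with h | h
  · exact h
  · exact absurd h hp.ne

lemma eqOn_of_mem_Chat (H : IsScale r I s) {g₁ g₂ : ℝ → ℝ} (h₁ : g₁ ∈ Chat s I r)
    (h₂ : g₂ ∈ Chat s I r) (heq : ∀ x ∈ Ilt r, g₁ (s x) = g₂ (s x)) :
    EqOn g₁ g₂ (Shat s r) := by
  set K := closure (s '' Ilt r)
  have hKeq : EqOn g₁ g₂ (Shat s r ∩ K) := by
    refine EqOn.of_subset_closure (s := s '' Ilt r) (by rintro _ ⟨x, hx, rfl⟩; exact heq x hx)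
      (h₁.1.mono inter_subset_left) (h₂.1.mono inter_subset_left) ?_ inter_subset_right
    rintro _ ⟨x, hx, rfl⟩
    exact ⟨H.map_mem_Shat hx, subset_closure (mem_image_of_mem s hx)⟩
  intro y hy
  by_cases hyK : y ∈ K
  · exact hKeq ⟨hy, hyK⟩
  obtain ⟨x, hx, hyx⟩ := exists_mem_Ilt_lt_map hy.2
  obtain ⟨A, hAK, B, hBK, hA0, hBx, hyAB, hgap⟩ := exists_gap_of_notMem isClosed_closure
    (subset_closure (mem_image_of_mem s H.zero_mem_Ilt)) (subset_closure (mem_image_of_mem s hx))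
    ⟨by rw [H.map_zero]; exact hy.1, hyx.le⟩ hyK
  have hA : A ∈ Shat s r := ⟨H.map_zero ▸ hA0, (EReal.coe_lt_coe_iff.2 hyAB.1).trans hy.2⟩
  have hB : B ∈ Shat s r := ⟨hy.1.trans hyAB.2.le,
    (EReal.coe_le_coe_iff.2 hBx).trans_lt (H.lt_rhat x hx)⟩
  have hsub : Ioo A B ⊆ Shat s r \ {xh : ℝ | (xh : EReal) ∈ Ihat s I r} := fun p hp => by
    have hpS : p ∈ Shat s r := ⟨hA.1.trans hp.1.le, (EReal.coe_lt_coe_iff.2 hp.2).trans hB.2⟩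
    exact ⟨hpS, fun hpI => hgap p (H.mem_closure_of_mem_closure_image hpS.2
      ((coe_mem_Ihat_iff hpS.2).1 hpI)) hp⟩
  have hinterp : ∀ g ∈ Chat s I r, g y = interp A B (g A) (g B) y := fun g hg =>
    eq_interp_of_convex_comb hyAB (hg.2 A B hsub)
      (((hg.1 A hA).mono (hsub.trans sdiff_subset)).tendsto.mono_left
        (nhdsWithin_Ioo_eq_nhdsGT (hyAB.1.trans hyAB.2)).ge)
      (((hg.1 B hB).mono (hsub.trans sdiff_subset)).tendsto.mono_left
        (nhdsWithin_Ioo_eq_nhdsLT (hyAB.1.trans hyAB.2)).ge)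
  rw [hinterp g₁ h₁, hinterp g₂ h₂, hKeq ⟨hA, hAK⟩, hKeq ⟨hB, hBK⟩]

end IsScale

/-! ### The map `T` and its inverse -/

lemma eventually_mem_Ilt_nhdsLT {x : ℝ} (hx : x ∈ Ilt r) (hx0 : 0 < x) :
    ∀ᶠ z in 𝓝[<] x, z ∈ Ilt r :=
  eventually_of_mem (Ioo_mem_nhdsLT hx0) fun _ hz => Ioo_subset_Ilt le_rfl hx hz

lemma eventually_mem_Ilt_nhdsGT {x : ℝ} (hx : x ∈ Ilt r) : ∀ᶠ z in 𝓝[>] x, z ∈ Ilt r := by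
  obtain ⟨w, hw, hxw⟩ := exists_mem_Ilt_gt hx
  exact eventually_of_mem (Ioo_mem_nhdsGT hxw) fun _ hz => Ioo_subset_Ilt hx.1 hw hz

namespace IsScale

variable {fh : ℝ → ℝ}

lemma matchRel_hatf (H : IsScale r I s) (hf : f ∈ Cs s r) : MatchRel s I r f (hatf r I s f) :=
  ⟨fun _ hx => H.hatf_map hf hx,
    fun _ hx0 hxr _ hL => (H.hatf_sminus hf ⟨hx0.le, hxr⟩ hx0).trans (leftLim_eq_of_tendsto hL),
    fun _ hx0 hxr hsx _ hL => (H.hatf_splus hf ⟨hx0.le, hxr⟩ hsx).trans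
      (rightLim_eq_of_tendsto hL)⟩

lemma tendsto_comp {l : Filter ℝ} (H : IsScale r I s) (hfh : ContinuousOn fh (Shat s r)) {p : ℝ}
    (hp : p ∈ Shat s r) (hs : Tendsto s l (𝓝 p)) (hl : ∀ᶠ z in l, z ∈ Ilt r) :
    Tendsto (fun z => fh (s z)) l (𝓝 (fh p)) :=
  (hfh p hp).tendsto.comp (tendsto_nhdsWithin_iff.2 ⟨hs, hl.mono fun _ hz => H.map_mem_Shat hz⟩)

lemma comp_mem_Cs (H : IsScale r I s) (hfh : fh ∈ Chat s I r) :
    (fun x => fh (s x)) ∈ Cs s r := by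
  refine ⟨H.tendsto_comp hfh.1 (H.map_mem_Shat H.zero_mem_Ilt)
    (by rw [H.map_zero]; exact H.tendsto_zero)
    (eventually_mem_Ilt_nhdsGT H.zero_mem_Ilt), fun x hx0 hxr => ?_, fun x hx0 hxr => ?_,
    fun x y _ _ _ hxy => congrArg fh hxy⟩
  · exact ⟨⟨_, H.tendsto_comp hfh.1 (H.sminus_mem_Shat ⟨hx0.le, hxr⟩)
        (H.tendsto_sminus ⟨hx0.le, hxr⟩ hx0) (eventually_mem_Ilt_nhdsLT ⟨hx0.le, hxr⟩ hx0)⟩,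
      ⟨_, H.tendsto_comp hfh.1 (H.splus_mem_Shat ⟨hx0.le, hxr⟩) (H.tendsto_splus ⟨hx0.le, hxr⟩)
        (eventually_mem_Ilt_nhdsGT ⟨hx0.le, hxr⟩)⟩⟩
  · exact ⟨fun hs => H.tendsto_comp hfh.1 (H.map_mem_Shat ⟨hx0.le, hxr⟩) hs
        (eventually_mem_Ilt_nhdsGT ⟨hx0.le, hxr⟩),
      fun hs => H.tendsto_comp hfh.1 (H.map_mem_Shat ⟨hx0.le, hxr⟩) hs
        (eventually_mem_Ilt_nhdsLT ⟨hx0.le, hxr⟩ hx0)⟩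

lemma matchRel_comp (H : IsScale r I s) (hfh : fh ∈ Chat s I r) :
    MatchRel s I r (fun x => fh (s x)) fh :=
  ⟨fun _ _ => rfl,
    fun _ hx0 hxr _ hL => tendsto_nhds_unique (H.tendsto_comp hfh.1
      (H.sminus_mem_Shat ⟨hx0.le, hxr⟩) (H.tendsto_sminus ⟨hx0.le, hxr⟩ hx0)
      (eventually_mem_Ilt_nhdsLT ⟨hx0.le, hxr⟩ hx0)) hL,
    fun _ hx0 hxr _ _ hL => tendsto_nhds_unique (H.tendsto_comp hfh.1
      (H.splus_mem_Shat ⟨hx0.le, hxr⟩) (H.tendsto_splus ⟨hx0.le, hxr⟩)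
      (eventually_mem_Ilt_nhdsGT ⟨hx0.le, hxr⟩)) hL⟩

end IsScale

/-! ### Linearity -/

lemma Cs.const_mul_add_mem {g : ℝ → ℝ} (hf : f ∈ Cs s r) (hg : g ∈ Cs s r) (c : ℝ) :
    (fun x => c * f x + g x) ∈ Cs s r := by
  refine ⟨(hf.1.const_mul c).add hg.1, fun x hx0 hxr => ?_, fun x hx0 hxr => ?_,
    fun x y hx0 hxy hyr hs => ?_⟩
  · obtain ⟨⟨_, hfl⟩, ⟨_, hfr⟩⟩ := hf.2.1 x hx0 hxr
    obtain ⟨⟨_, hgl⟩, ⟨_, hgr⟩⟩ := hg.2.1 x hx0 hxr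
    exact ⟨⟨_, (hfl.const_mul c).add hgl⟩, ⟨_, (hfr.const_mul c).add hgr⟩⟩
  · exact ⟨fun h => (((hf.2.2.1 x hx0 hxr).1 h).const_mul c).add ((hg.2.2.1 x hx0 hxr).1 h),
      fun h => (((hf.2.2.1 x hx0 hxr).2 h).const_mul c).add ((hg.2.2.1 x hx0 hxr).2 h)⟩
  · simp only [hf.2.2.2 x y hx0 hxy hyr hs, hg.2.2.2 x y hx0 hxy hyr hs]

lemma Chat.const_mul_add_mem {fh gh : ℝ → ℝ} (hfh : fh ∈ Chat s I r) (hgh : gh ∈ Chat s I r)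
    (c : ℝ) : (fun y => c * fh y + gh y) ∈ Chat s I r := by
  refine ⟨(continuousOn_const.mul hfh.1).add hgh.1, fun a b hsub x hx y hy t ht => ?_⟩
  simp only [hfh.2 a b hsub x hx y hy t ht, hgh.2 a b hsub x hx y hy t ht]
  ring

lemma MatchRel.const_mul_add {g fh gh : ℝ → ℝ} (hf : f ∈ Cs s r) (hg : g ∈ Cs s r)
    (hmf : MatchRel s I r f fh) (hmg : MatchRel s I r g gh) (c : ℝ) :
    MatchRel s I r (fun x => c * f x + g x) (fun y => c * fh y + gh y) := by
  refine ⟨fun x hx => by simp only [hmf.1 x hx, hmg.1 x hx], fun x hx0 hxr L hL => ?_,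
    fun x hx0 hxr hsx L hL => ?_⟩
  · obtain ⟨L₁, h₁⟩ := (hf.2.1 x hx0 hxr).1
    obtain ⟨L₂, h₂⟩ := (hg.2.1 x hx0 hxr).1
    rw [tendsto_nhds_unique hL ((h₁.const_mul c).add h₂)]
    simp only [hmf.2.1 x hx0 hxr L₁ h₁, hmg.2.1 x hx0 hxr L₂ h₂]
  · obtain ⟨L₁, h₁⟩ := (hf.2.1 x hx0 hxr).2
    obtain ⟨L₂, h₂⟩ := (hg.2.1 x hx0 hxr).2
    rw [tendsto_nhds_unique hL ((h₁.const_mul c).add h₂)]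
    simp only [hmf.2.2 x hx0 hxr hsx L₁ h₁, hmg.2.2 x hx0 hxr hsx L₂ h₂]

/-! ### Limits at the right endpoint -/

lemma eventually_mem_Ilt_gt_comap {x : ℝ} (hx : x ∈ Ilt r) :
    ∀ᶠ z in comap (fun z : ℝ => (z : EReal)) (𝓝[<] r), z ∈ Ilt r ∧ x < z :=
  mem_of_superset (preimage_mem_comap (Ioo_mem_nhdsLT hx.2)) fun _ hz =>
    ⟨⟨hx.1.trans (EReal.coe_lt_coe_iff.1 hz.1).le, hz.2⟩, EReal.coe_lt_coe_iff.1 hz.1⟩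

lemma exists_forall_of_eventually_comap (hr : 0 < r) {P : ℝ → Prop}
    (h : ∀ᶠ z in comap (fun z : ℝ => (z : EReal)) (𝓝[<] r), P z) :
    ∃ w ∈ Ilt r, ∀ z ∈ Ilt r, w < z → P z := by
  obtain ⟨V, hV, hVP⟩ := mem_comap.1 h
  obtain ⟨M, hM, hMV⟩ := (mem_nhdsLT_iff_exists_Ioo_subset' ((EReal.bot_lt_coe 0).trans hr)).1 hV
  obtain ⟨w, hMw, hwr⟩ := EReal.exists_between_coe_real (max_lt hM hr)
  have hw0 : (0 : ℝ) ≤ w := by exact_mod_cast (le_max_right M 0).trans hMw.le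
  exact ⟨w, ⟨hw0, hwr⟩, fun z hz hwz => hVP (hMV
    ⟨(le_max_left M 0).trans_lt (hMw.trans (EReal.coe_lt_coe_iff.2 hwz)), hz.2⟩)⟩

namespace IsScale

lemma eventually_mem_Shat (H : IsScale r I s) :
    ∀ᶠ y in comap (fun y : ℝ => (y : EReal)) (𝓝[<] rhat s r), y ∈ Shat s r :=
  mem_of_superset (preimage_mem_comap (Ioo_mem_nhdsLT H.zero_lt_rhat)) fun _ hy =>
    ⟨(EReal.coe_lt_coe_iff.1 hy.1).le, hy.2⟩

lemma tendsto_comap_nhdsLT (H : IsScale r I s) :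
    Tendsto s (comap (fun x : ℝ => (x : EReal)) (𝓝[<] r))
      (comap (fun y : ℝ => (y : EReal)) (𝓝[<] rhat s r)) := by
  refine tendsto_comap_iff.2 (tendsto_nhdsWithin_iff.2 ⟨tendsto_order.2 ⟨fun a ha => ?_,
    fun a ha => ?_⟩, ?_⟩)
  · obtain ⟨_, ⟨x, hx, rfl⟩, hax⟩ := lt_sSup_iff.1 ha
    filter_upwards [eventually_mem_Ilt_gt_comap hx] with z hz
    exact hax.trans_le (EReal.coe_le_coe_iff.2
      (H.mono (H.Ilt_subset hx) (H.Ilt_subset hz.1) hz.2.le))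
  · filter_upwards [eventually_mem_Ilt_gt_comap H.zero_mem_Ilt] with z hz
    exact (H.lt_rhat z hz.1).trans ha
  · filter_upwards [eventually_mem_Ilt_gt_comap H.zero_mem_Ilt] with z hz
    exact H.lt_rhat z hz.1

lemma tendsto_hatf_comap (H : IsScale r I s) (hf : f ∈ Cs s r) {L : ℝ}
    (hL : Tendsto f (comap (fun x : ℝ => (x : EReal)) (𝓝[<] r)) (𝓝 L)) :
    Tendsto (hatf r I s f) (comap (fun y : ℝ => (y : EReal)) (𝓝[<] rhat s r)) (𝓝 L) := by
  refine tendsto_of_forall_eventually_abs_sub_le fun ε hε => ?_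
  obtain ⟨w₀, hw₀Ilt, hw₀⟩ := exists_forall_of_eventually_comap H.pos
    ((Metric.tendsto_nhds.1 hL ε hε).mono fun z hz => (Real.dist_eq (f z) L ▸ hz).le)
  obtain ⟨w, hw, hw₀w⟩ := exists_mem_Ilt_gt hw₀Ilt
  filter_upwards [preimage_mem_comap (Ioo_mem_nhdsLT (H.lt_rhat w hw))] with y hy
  have hwy : s w < y := EReal.coe_lt_coe_iff.1 hy.1
  exact H.abs_hatf_sub_le hf hw₀Ilt.1 (fun z hz hzab => hw₀ z hz hzab.1)
    ((H.map_nonneg (H.Ilt_subset hw)).trans hwy.le) hy.2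
    ⟨hw₀w.trans_le (H.le_exceed_of_map_lt (H.Ilt_subset hw) hy.2 hwy), lt_add_one _⟩

lemma tendsto_of_tendsto_comap (H : IsScale r I s) {g fh : ℝ → ℝ} {L : ℝ}
    (hL : Tendsto fh (comap (fun y : ℝ => (y : EReal)) (𝓝[<] rhat s r)) (𝓝 L))
    (hm : ∀ x ∈ Ilt r, fh (s x) = g x) :
    Tendsto g (comap (fun x : ℝ => (x : EReal)) (𝓝[<] r)) (𝓝 L) :=
  (hL.comp H.tendsto_comap_nhdsLT).congr' <|
    (eventually_mem_Ilt_gt_comap H.zero_mem_Ilt).mono fun x hx => hm x hx.1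

end IsScale

theorem stmt9_general (r : EReal) (hr : 0 < r) (I : Set ℝ)
    (hI : I = Ilt r ∨ ∃ rr : ℝ, r = (rr : EReal) ∧ I = Set.Icc 0 rr)
    (s : ℝ → ℝ) (hmono : MonotoneOn s I) (hs0 : s 0 = 0)
    (hs0' : Filter.Tendsto s (nhdsWithin 0 (Set.Ioi 0)) (nhds 0))
    (hslt : ∀ x ∈ Ilt r, ((s x : ℝ) : EReal) < rhat s r)
    (hsr : ∀ rr : ℝ, r = (rr : EReal) → rr ∈ I → ((s rr : ℝ) : EReal) = rhat s r) :
    -- existence and uniqueness of `f̂ = Tf`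
    (∀ f ∈ Cs s r, ∃ fh ∈ Chat s I r, MatchRel s I r f fh ∧
      ∀ gh ∈ Chat s I r, MatchRel s I r f gh → Set.EqOn fh gh (Shat s r)) ∧
    -- `T` is injective
    (∀ f ∈ Cs s r, ∀ g ∈ Cs s r, ∀ fh ∈ Chat s I r,
      MatchRel s I r f fh → MatchRel s I r g fh → Set.EqOn f g (Ilt r)) ∧
    -- `T` is surjective onto `Ĉ`
    (∀ fh ∈ Chat s I r, ∃ f ∈ Cs s r, MatchRel s I r f fh) ∧
    -- `T` is linear
    (∀ f ∈ Cs s r, ∀ g ∈ Cs s r, ∀ fh ∈ Chat s I r, ∀ gh ∈ Chat s I r, ∀ c : ℝ,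
      MatchRel s I r f fh → MatchRel s I r g gh →
        (fun x : ℝ => c * f x + g x) ∈ Cs s r ∧
        (fun xh : ℝ => c * fh xh + gh xh) ∈ Chat s I r ∧
        MatchRel s I r (fun x : ℝ => c * f x + g x)
          (fun xh : ℝ => c * fh xh + gh xh)) ∧
    -- `T` maps `C_s^*` bijectively onto `Ĉ^*`
    (∀ f ∈ Cs s r, ∀ fh ∈ Chat s I r, MatchRel s I r f fh →
      ((∃ L : ℝ, Filter.Tendsto f
          (Filter.comap (fun x : ℝ => (x : EReal)) (nhdsWithin r (Set.Iio r)))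
          (nhds L)) ↔
        (∃ L : ℝ, Filter.Tendsto fh
          (Filter.comap (fun xh : ℝ => (xh : EReal))
            (nhdsWithin (rhat s r) (Set.Iio (rhat s r)))) (nhds L)))) := by
  have H : IsScale r I s := ⟨hr, hI, hmono, hs0, hs0', hslt, hsr⟩
  have huniq : ∀ f ∈ Cs s r, ∀ gh ∈ Chat s I r, MatchRel s I r f gh →
      EqOn (hatf r I s f) gh (Shat s r) := fun f hf gh hgh hm =>
    H.eqOn_of_mem_Chat (H.hatf_mem_Chat hf) hgh fun x hx =>
      (H.hatf_map hf hx).trans (hm.1 x hx).symm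
  refine ⟨fun f hf => ⟨_, H.hatf_mem_Chat hf, H.matchRel_hatf hf, huniq f hf⟩,
    fun f _ g _ fh _ hmf hmg x hx => (hmf.1 x hx).symm.trans (hmg.1 x hx),
    fun fh hfh => ⟨_, H.comp_mem_Cs hfh, H.matchRel_comp hfh⟩,
    fun f hf g hg fh hfh gh hgh c hmf hmg => ⟨Cs.const_mul_add_mem hf hg c,
      Chat.const_mul_add_mem hfh hgh c, MatchRel.const_mul_add hf hg hmf hmg c⟩,
    fun f hf fh hfh hm => ⟨fun ⟨L, hL⟩ => ⟨L, ?_⟩,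
      fun ⟨L, hL⟩ => ⟨L, H.tendsto_of_tendsto_comap hL hm.1⟩⟩⟩
  refine (H.tendsto_hatf_comap hf hL).congr' ?_
  filter_upwards [H.eventually_mem_Shat] with y hy using huniq f hf fh hfh hm hy

theorem stmt9 (r : EReal) (hr : 0 < r) (I : Set ℝ)
    (hI : I = Ilt r ∨ ∃ rr : ℝ, r = (rr : EReal) ∧ I = Set.Icc 0 rr)
    (s : ℝ → ℝ) (hmono : MonotoneOn s I) (hs0 : s 0 = 0)
    (hs0' : Filter.Tendsto s (nhdsWithin 0 (Set.Ioi 0)) (nhds 0))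
    (hspos : ∀ x ∈ I, 0 < x → 0 < s x)
    (hslt : ∀ x ∈ Ilt r, ((s x : ℝ) : EReal) < rhat s r)
    (hsr : ∀ rr : ℝ, r = (rr : EReal) → rr ∈ I → ((s rr : ℝ) : EReal) = rhat s r) :
    -- existence and uniqueness of `f̂ = Tf`
    (∀ f ∈ Cs s r, ∃ fh ∈ Chat s I r, MatchRel s I r f fh ∧
      ∀ gh ∈ Chat s I r, MatchRel s I r f gh → Set.EqOn fh gh (Shat s r)) ∧
    -- `T` is injective
    (∀ f ∈ Cs s r, ∀ g ∈ Cs s r, ∀ fh ∈ Chat s I r,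
      MatchRel s I r f fh → MatchRel s I r g fh → Set.EqOn f g (Ilt r)) ∧
    -- `T` is surjective onto `Ĉ`
    (∀ fh ∈ Chat s I r, ∃ f ∈ Cs s r, MatchRel s I r f fh) ∧
    -- `T` is linear
    (∀ f ∈ Cs s r, ∀ g ∈ Cs s r, ∀ fh ∈ Chat s I r, ∀ gh ∈ Chat s I r, ∀ c : ℝ,
      MatchRel s I r f fh → MatchRel s I r g gh →
        (fun x : ℝ => c * f x + g x) ∈ Cs s r ∧
        (fun xh : ℝ => c * fh xh + gh xh) ∈ Chat s I r ∧
        MatchRel s I r (fun x : ℝ => c * f x + g x)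
          (fun xh : ℝ => c * fh xh + gh xh)) ∧
    -- `T` maps `C_s^*` bijectively onto `Ĉ^*`
    (∀ f ∈ Cs s r, ∀ fh ∈ Chat s I r, MatchRel s I r f fh →
      ((∃ L : ℝ, Filter.Tendsto f
          (Filter.comap (fun x : ℝ => (x : EReal)) (nhdsWithin r (Set.Iio r)))
          (nhds L)) ↔
        (∃ L : ℝ, Filter.Tendsto fh
          (Filter.comap (fun xh : ℝ => (xh : EReal))
            (nhdsWithin (rhat s r) (Set.Iio (rhat s r)))) (nhds L)))) :=
  stmt9_general r hr I hI s hmono hs0 hs0' hslt hsr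
end

section
/- Let g ∈ L¹_loc([0,r), m) and f ∈ C_s. Then there exist a,b ∈ ℝ with f(x) = a + b·s(x) + ∫_{[0,x)} (s(x)−s(y)) g(y) m(dy) for all x ∈ (0,r) if and only if there exist â,b̂ ∈ ℝ with (Tf)(x̂) = â + b̂·x̂ + ∫_{[0,x̂)} (x̂−ŷ) g̃(ŷ) m̂(dŷ) for all x̂ ∈ (0,r̂). -/
open MeasureTheory Set Filter Topology
open scoped Classical

/-- The function `g̃` on `[0, r̂)` induced by `g ∈ L¹_loc([0,r), m)`: `g̃(x̂) = g(x)`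
if `s⁻¹({x̂}) = {x}` is a singleton in `I`; the `m`-average of `g` over `s⁻¹({x̂})`
if the preimage is not a singleton and has positive `m`-measure; and `0` otherwise. -/
noncomputable def gtilde (m : Measure ℝ) (I : Set ℝ) (s : ℝ → ℝ) (g : ℝ → ℝ)
    (xh : ℝ) : ℝ :=
  if h : ∃! x : ℝ, x ∈ I ∧ s x = xh then g h.choose
  else if 0 < m {x : ℝ | x ∈ I ∧ s x = xh} then
    (∫ x in {x : ℝ | x ∈ I ∧ s x = xh}, g x ∂m) / (m {x : ℝ | x ∈ I ∧ s x = xh}).toReal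
  else 0


-- L0 basics
section Basics
variable {r : EReal} {I : Set ℝ}

lemma Ilt_subset_I (hr : 0 < r) (hI : I = Ilt r ∨ ∃ rr : ℝ, r = (rr : EReal) ∧ I = Set.Icc 0 rr) :
    Ilt r ⊆ I := by
  rcases hI with h | ⟨rr, hrr, h⟩
  · rw [h]
  · rw [h]; rintro x ⟨hx0, hxr⟩
    exact ⟨hx0, by exact_mod_cast hrr ▸ hxr |>.le⟩

lemma I_nonneg (hI : I = Ilt r ∨ ∃ rr : ℝ, r = (rr : EReal) ∧ I = Set.Icc 0 rr) :
    ∀ y ∈ I, (0:ℝ) ≤ y := by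
  rcases hI with h | ⟨rr, hrr, h⟩ <;> subst h <;> intro y hy
  · exact hy.1
  · exact hy.1

lemma I_conv (hI : I = Ilt r ∨ ∃ rr : ℝ, r = (rr : EReal) ∧ I = Set.Icc 0 rr) :
    ∀ ⦃a b q : ℝ⦄, a ∈ I → b ∈ I → a ≤ q → q ≤ b → q ∈ I := by
  rcases hI with h | ⟨rr, hrr, h⟩ <;> subst h <;> intro a b q ha hb haq hqb
  · exact ⟨ha.1.trans haq, lt_of_le_of_lt (by exact_mod_cast hqb) hb.2⟩
  · exact ⟨ha.1.trans haq, hqb.trans hb.2⟩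

lemma measurableSet_Ilt (r : EReal) : MeasurableSet (Ilt r) := by
  have : Ilt r = Set.Ici (0:ℝ) ∩ ((fun x : ℝ => (x : EReal)) ⁻¹' Set.Iio r) := by
    ext x; simp [Ilt]
  rw [this]
  exact measurableSet_Ici.inter ((measurable_coe_real_ereal) measurableSet_Iio)

lemma measurableSet_I (hI : I = Ilt r ∨ ∃ rr : ℝ, r = (rr : EReal) ∧ I = Set.Icc 0 rr) :
    MeasurableSet I := by
  rcases hI with h | ⟨rr, hrr, h⟩ <;> subst h
  · exact measurableSet_Ilt r
  · exact measurableSet_Icc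

lemma zero_mem_I (hr : 0 < r) (hI : I = Ilt r ∨ ∃ rr : ℝ, r = (rr : EReal) ∧ I = Set.Icc 0 rr) :
    (0:ℝ) ∈ I := by
  apply Ilt_subset_I hr hI
  exact ⟨le_refl 0, by exact_mod_cast hr⟩

lemma s_nonneg {s : ℝ → ℝ} (hr : 0 < r)
    (hI : I = Ilt r ∨ ∃ rr : ℝ, r = (rr : EReal) ∧ I = Set.Icc 0 rr)
    (hmono : MonotoneOn s I) (hs0 : s 0 = 0) : ∀ y ∈ I, 0 ≤ s y := by
  intro y hy
  have h0 : (0:ℝ) ∈ I := zero_mem_I hr hI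
  have := hmono h0 hy (I_nonneg hI y hy)
  simpa [hs0] using this

lemma exists_z {s : ℝ → ℝ} {xh : ℝ} (hx : (xh : EReal) < rhat s r) :
    ∃ z ∈ Ilt r, xh < s z := by
  rw [rhat, lt_sSup_iff] at hx
  obtain ⟨e, ⟨z, hz, rfl⟩, he⟩ := hx
  exact ⟨z, hz, by simpa using (EReal.coe_lt_coe_iff.mp he)⟩

end Basics

-- L1 countability of the multi-fiber set
def Dset (I : Set ℝ) (s : ℝ → ℝ) : Set ℝ :=
  {t | ∃ x₁ ∈ I, ∃ x₂ ∈ I, x₁ < x₂ ∧ s x₁ = t ∧ s x₂ = t}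

lemma countable_Dset {I : Set ℝ} {s : ℝ → ℝ}
    (hIconv : ∀ ⦃a b q : ℝ⦄, a ∈ I → b ∈ I → a ≤ q → q ≤ b → q ∈ I)
    (hmono : MonotoneOn s I) : (Dset I s).Countable := by
  have key : ∀ t ∈ Dset I s, ∃ q : ℚ, (q:ℝ) ∈ I ∧ s (q:ℝ) = t := by
    rintro t ⟨x₁, h1, x₂, h2, hlt, hs1, hs2⟩
    obtain ⟨q, hq1, hq2⟩ := exists_rat_btwn hlt
    have hqI : (q:ℝ) ∈ I := hIconv h1 h2 hq1.le hq2.le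
    refine ⟨q, hqI, le_antisymm ?_ ?_⟩
    · have := hmono hqI h2 hq2.le; rw [hs2] at this; exact this
    · have := hmono h1 hqI hq1.le; rw [hs1] at this; exact this
  apply Set.Countable.mono _ (Set.countable_range (fun q : ℚ => s (q:ℝ)))
  rintro t ht
  obtain ⟨q, _, hqs⟩ := key t ht
  exact ⟨q, hqs⟩

-- σ : generalized inverse, parametric in z
noncomputable def sigmaInv (I : Set ℝ) (s : ℝ → ℝ) (z : ℝ) : ℝ → ℝ :=
  fun t => sInf ({y | (y ∈ I ∧ y ∈ Set.Icc 0 z) ∧ t ≤ s y} ∪ {z + 1})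

lemma sigmaInv_mono {I : Set ℝ} {s : ℝ → ℝ} {z : ℝ} (hz : 0 ≤ z) :
    Monotone (sigmaInv I s z) := by
  intro t₁ t₂ h
  apply csInf_le_csInf
  · refine ⟨min 0 (z+1), ?_⟩
    rintro y (⟨⟨-, hy⟩, -⟩ | hy)
    · exact le_trans (min_le_left _ _) hy.1
    · simp only [Set.mem_singleton_iff] at hy; subst hy; exact min_le_right _ _
  · exact ⟨z + 1, Or.inr rfl⟩
  · rintro y (⟨hy1, hy2⟩ | hy)
    · exact Or.inl ⟨hy1, h.trans hy2⟩
    · exact Or.inr hy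

lemma sigmaInv_singleton {I : Set ℝ} {s : ℝ → ℝ} {z : ℝ} {y : ℝ}
    (hmono : MonotoneOn s I) (hyI : y ∈ I) (hy0 : 0 ≤ y) (hyz : y ≤ z)
    (huniq : ∀ y' ∈ I, s y' = s y → y' = y) :
    sigmaInv I s z (s y) = y := by
  apply le_antisymm
  · apply csInf_le
    · refine ⟨min 0 (z+1), ?_⟩
      rintro w (⟨⟨-, hw⟩, -⟩ | hw)
      · exact le_trans (min_le_left _ _) hw.1
      · simp only [Set.mem_singleton_iff] at hw; subst hw; exact min_le_right _ _
    · exact Or.inl ⟨⟨hyI, hy0, hyz⟩, le_refl _⟩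
  · apply le_csInf ⟨z + 1, Or.inr rfl⟩
    rintro w (⟨⟨hwI, hw0, hwz⟩, hws⟩ | hw)
    · by_contra hlt
      push_neg at hlt
      have h1 : s w ≤ s y := hmono hwI hyI hlt.le
      have h2 : s w = s y := le_antisymm h1 hws
      exact absurd (huniq w hwI h2) (ne_of_lt hlt)
    · simp only [Set.mem_singleton_iff] at hw; subst hw; linarith

-- measurability of a function vanishing off a countable set
lemma measurable_of_countable_support {u : ℝ → ℝ} {D : Set ℝ} (hD : D.Countable)
    (hu : ∀ t ∉ D, u t = 0) : Measurable u := by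
  intro A hA
  by_cases h0 : (0:ℝ) ∈ A
  · have : u ⁻¹' A = (u ⁻¹' A ∩ D) ∪ Dᶜ := by
      ext t; constructor
      · intro ht; by_cases htD : t ∈ D
        · exact Or.inl ⟨ht, htD⟩
        · exact Or.inr htD
      · rintro (⟨ht, -⟩ | ht)
        · exact ht
        · simp only [Set.mem_preimage, hu t ht]; exact h0
    rw [this]
    exact ((hD.mono Set.inter_subset_right).measurableSet).union (hD.measurableSet.compl)
  · have : u ⁻¹' A = u ⁻¹' A ∩ D := by
      ext t; refine ⟨fun ht => ⟨ht, ?_⟩, fun ht => ht.1⟩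
      by_contra htD
      rw [Set.mem_preimage, hu t htD] at ht
      exact h0 ht
    rw [this]
    exact (hD.mono Set.inter_subset_right).measurableSet

def Efib (I : Set ℝ) (s : ℝ → ℝ) (c : ℝ) : Set ℝ := {y | y ∈ I ∧ s y < c}

noncomputable def Kfun (m : Measure ℝ) (I : Set ℝ) (s g : ℝ → ℝ) (c : ℝ) : ℝ :=
  ∫ y in Efib I s c, (c - s y) * g y ∂m

lemma transfer
    {r : EReal} {I : Set ℝ}
    (hr : 0 < r)
    (hI : I = Ilt r ∨ ∃ rr : ℝ, r = (rr:EReal) ∧ I = Set.Icc 0 rr)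
    {s : ℝ → ℝ} (hmono : MonotoneOn s I) (hs0 : s 0 = 0) (hmeas : Measurable s)
    {m : Measure ℝ} (hmI : m Iᶜ = 0)
    {g : ℝ → ℝ}
    {z : ℝ} (hzI : z ∈ I) (hgz : MeasureTheory.IntegrableOn g (Set.Icc 0 z) m)
    (hfinz : m (Set.Icc 0 z) < ⊤)
    {xh : ℝ} (hxh : 0 < xh) (hxz : xh < s z) :
    (∫ yh in Set.Ico 0 xh, (xh - yh) * gtilde m I s g yh ∂(Measure.map s m))
      = ∫ y in Efib I s xh, (xh - s y) * g y ∂m := by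
  have hImeas : MeasurableSet I := measurableSet_I hI
  have hIconv : ∀ ⦃a b q : ℝ⦄, a ∈ I → b ∈ I → a ≤ q → q ≤ b → q ∈ I := I_conv hI
  have hInn : ∀ y ∈ I, (0:ℝ) ≤ y := I_nonneg hI
  have hsnn : ∀ y ∈ I, 0 ≤ s y := s_nonneg hr hI hmono hs0
  have hz0 : 0 ≤ z := hInn z hzI
  have hD : (Dset I s).Countable := countable_Dset hIconv hmono
  -- the measurable version of g on Icc 0 z
  set g' : ℝ → ℝ := (hgz.1).mk g with hg'def
  have hg'sm : StronglyMeasurable g' := hgz.1.stronglyMeasurable_mk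
  have hg'meas : Measurable g' := hg'sm.measurable
  have hgg' : g =ᵐ[m.restrict (Set.Icc 0 z)] g' := hgz.1.ae_eq_mk
  have hg'int : MeasureTheory.IntegrableOn g' (Set.Icc 0 z) m := hgz.congr hgg'
  -- null set where g and g' differ
  set N : Set ℝ := toMeasurable (m.restrict (Set.Icc 0 z)) {y | g y ≠ g' y} with hNdef
  have hNmeas : MeasurableSet N := measurableSet_toMeasurable _ _
  have hNnull : m (N ∩ Set.Icc 0 z) = 0 := by
    have h1 : (m.restrict (Set.Icc 0 z)) {y | g y ≠ g' y} = 0 := hgg'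
    have h2 : (m.restrict (Set.Icc 0 z)) N = 0 := by
      rw [hNdef, measure_toMeasurable]; exact h1
    rwa [Measure.restrict_apply' measurableSet_Icc] at h2
  have hNsub : {y | g y ≠ g' y} ⊆ N := subset_toMeasurable _ _
  -- σ, u, w
  set σ : ℝ → ℝ := sigmaInv I s z with hσdef
  have hσmeas : Measurable σ := (sigmaInv_mono hz0).measurable
  set u : ℝ → ℝ := fun t => if t ∈ Dset I s then gtilde m I s g t else 0 with hudef
  have humeas : Measurable u :=
    measurable_of_countable_support hD (fun t ht => by simp [hudef, ht])
  set w : ℝ → ℝ := fun t =>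
    if t ∈ Dset I s then u t else if σ t ∈ I ∧ s (σ t) = t then g' (σ t) else 0 with hwdef
  have hwmeas : Measurable w := by
    apply Measurable.ite hD.measurableSet humeas
    apply Measurable.ite _ (hg'meas.comp hσmeas) measurable_const
    exact (hσmeas hImeas).inter (measurableSet_eq_fun (hmeas.comp hσmeas) measurable_id)
  -- fibers
  set F : ℝ → Set ℝ := fun t => {y | y ∈ I ∧ s y = t} with hFdef
  have hFmeas : ∀ t, MeasurableSet (F t) :=
    fun t => hImeas.inter (hmeas (measurableSet_singleton t))
  have hFz : ∀ t, t < xh → F t ⊆ Set.Icc 0 z := by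
    intro t ht y hy
    refine ⟨hInn y hy.1, ?_⟩
    by_contra hyz
    push_neg at hyz
    have := hmono hzI hy.1 hyz.le
    rw [hy.2] at this
    linarith
  -- singleton fibers off Dset
  have huniq : ∀ t, t ∉ Dset I s → ∀ y ∈ I, s y = t → ∀ y' ∈ I, s y' = t → y' = y := by
    intro t htD y hyI hys y' hy'I hy's
    by_contra hne
    rcases lt_or_gt_of_ne hne with h | h
    · exact htD ⟨y', hy'I, y, hyI, h, hy's, hys⟩
    · exact htD ⟨y, hyI, y', hy'I, h, hys, hy's⟩
  -- w agrees with gtilde a.e. on Ico 0 xh w.r.t. the image measure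
  have hae : (fun t => (xh - t) * gtilde m I s g t)
      =ᵐ[(Measure.map s m).restrict (Set.Ico 0 xh)] (fun t => (xh - t) * w t) := by
    suffices hgw : (fun t => gtilde m I s g t) =ᵐ[(Measure.map s m).restrict (Set.Ico 0 xh)] w by
      filter_upwards [hgw] with t ht
      exact congrArg (fun v => (xh - t) * v) ht
    rw [Filter.EventuallyEq, ae_iff]
    rw [Measure.restrict_apply' measurableSet_Ico]
    set B : Set ℝ := σ ⁻¹' N ∩ (Dset I s)ᶜ ∩ Set.Ico 0 xh with hBdef
    have hBmeas : MeasurableSet B :=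
      ((hσmeas hNmeas).inter hD.measurableSet.compl).inter measurableSet_Ico
    have hsub : {t | ¬ gtilde m I s g t = w t} ∩ Set.Ico 0 xh ⊆ B := by
      rintro t ⟨hbad, ht0, htx⟩
      simp only [Set.mem_setOf_eq] at hbad
      have htD : t ∉ Dset I s := by
        intro htD
        apply hbad
        simp [hwdef, hudef, htD]
      by_cases hfib : ∃ y ∈ I, s y = t
      · obtain ⟨y, hyI, hys⟩ := hfib
        have hyz : y ≤ z := by
          by_contra hyz
          push_neg at hyz
          have := hmono hzI hyI hyz.le
          rw [hys] at this
          linarith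
        have hun : ∀ y' ∈ I, s y' = s y → y' = y := by
          intro y' hy' hsy'
          exact huniq t htD y hyI hys y' hy' (by rw [hsy', hys])
        have hσt : σ t = y := by
          rw [← hys]
          exact sigmaInv_singleton hmono hyI (hInn y hyI) hyz hun
        have hwt : w t = g' y := by
          rw [hwdef]
          simp only [htD, if_false]
          rw [if_pos ⟨by rw [hσt]; exact hyI, by rw [hσt, hys]⟩, hσt]
        have hex : ∃! x : ℝ, x ∈ I ∧ s x = t :=
          ⟨y, ⟨hyI, hys⟩, fun x hx => huniq t htD y hyI hys x hx.1 hx.2⟩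
        have hgt : gtilde m I s g t = g y := by
          rw [gtilde, dif_pos hex]
          congr 1
          exact huniq t htD y hyI hys _ hex.choose_spec.1.1 hex.choose_spec.1.2
        have hyN : y ∈ N := by
          apply hNsub
          intro hgy
          exact hbad (by rw [hgt, hwt, hgy])
        refine ⟨⟨by rw [Set.mem_preimage, hσt]; exact hyN, htD⟩, ht0, htx⟩
      · exfalso
        push_neg at hfib
        have hwt : w t = 0 := by
          rw [hwdef]
          simp only [htD, if_false]
          rw [if_neg]
          rintro ⟨hσI, hσs⟩
          exact hfib (σ t) hσI hσs
        have hgt : gtilde m I s g t = 0 := by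
          rw [gtilde, dif_neg, if_neg]
          · have : {x : ℝ | x ∈ I ∧ s x = t} = ∅ := by
              ext x
              simp only [Set.mem_setOf_eq, Set.mem_empty_iff_false, iff_false]
              rintro ⟨hxI, hxs⟩
              exact hfib x hxI hxs
            rw [this]
            simp
          · rintro ⟨x, ⟨hxI, hxs⟩, -⟩
            exact hfib x hxI hxs
        exact hbad (by rw [hgt, hwt])
    apply measure_mono_null hsub
    rw [Measure.map_apply hmeas hBmeas]
    apply measure_mono_null (t := (N ∩ Set.Icc 0 z) ∪ Iᶜ)
    · intro y₀ hy₀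
      simp only [Set.mem_preimage, hBdef, Set.mem_inter_iff, Set.mem_compl_iff,
        Set.mem_Ico] at hy₀
      obtain ⟨⟨hσN, htD⟩, ht0, htx⟩ := hy₀
      by_cases hy₀I : y₀ ∈ I
      · left
        have hyz : y₀ ≤ z := by
          by_contra hyz
          push_neg at hyz
          have := hmono hzI hy₀I hyz.le
          linarith
        have hun : ∀ y' ∈ I, s y' = s y₀ → y' = y₀ :=
          fun y' hy' hsy' => huniq (s y₀) htD y₀ hy₀I rfl y' hy' hsy'
        have hσt : σ (s y₀) = y₀ := sigmaInv_singleton hmono hy₀I (hInn y₀ hy₀I) hyz hun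
        rw [hσt] at hσN
        exact ⟨hσN, hInn y₀ hy₀I, hyz⟩
      · right
        exact hy₀I
    · rw [measure_union_null_iff]
      exact ⟨hNnull, hmI⟩
  -- change of variables
  have hwint : Measurable (fun t => (xh - t) * w t) :=
    (measurable_const.sub measurable_id).mul hwmeas
  have step1 : (∫ yh in Set.Ico 0 xh, (xh - yh) * gtilde m I s g yh ∂(Measure.map s m))
      = ∫ y in s ⁻¹' (Set.Ico 0 xh), (xh - s y) * w (s y) ∂m := by
    rw [integral_congr_ae hae]
    exact setIntegral_map measurableSet_Ico hwint.aestronglyMeasurable hmeas.aemeasurable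
  -- restrict the domain to I
  set E : Set ℝ := Efib I s xh with hEdef
  have hEmeas : MeasurableSet E := hImeas.inter (hmeas measurableSet_Iio)
  have hEsub : E ⊆ Set.Icc 0 z := by
    rintro y ⟨hyI, hys⟩
    refine ⟨hInn y hyI, ?_⟩
    by_contra hyz
    push_neg at hyz
    have := hmono hzI hyI hyz.le
    linarith
  have step2 : (∫ y in s ⁻¹' (Set.Ico 0 xh), (xh - s y) * w (s y) ∂m)
      = ∫ y in E, (xh - s y) * w (s y) ∂m := by
    apply setIntegral_congr_set
    rw [MeasureTheory.ae_eq_set]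
    constructor
    · apply measure_mono_null (t := Iᶜ) _ hmI
      rintro y ⟨hy, hyE⟩
      intro hyI
      exact hyE ⟨hyI, hy.2⟩
    · apply measure_mono_null (t := (∅ : Set ℝ)) _ (by simp)
      rintro y ⟨⟨hyI, hys⟩, hy⟩
      exact hy ⟨hsnn y hyI, hys⟩
  -- fiber decomposition
  set Dc : Set ℝ := Dset I s ∩ Set.Ico 0 xh with hDcdef
  have hDc : Dc.Countable := hD.mono Set.inter_subset_left
  haveI : Countable ↥Dc := hDc.to_subtype
  set Nn : Set ℝ := ⋃ (t : ↥Dc), F t.val with hNndef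
  have hNnmeas : MeasurableSet Nn := MeasurableSet.iUnion (fun t => hFmeas t.val)
  have hNnE : Nn ⊆ E := by
    rintro y hy
    simp only [hNndef, Set.mem_iUnion] at hy
    obtain ⟨⟨t, htD, ht0, htx⟩, hyI, hys⟩ := hy
    exact ⟨hyI, by rw [hys]; exact htx⟩
  have hdisj : Pairwise (Function.onFun Disjoint fun t : ↥Dc => F t.val) := by
    intro i j hij
    rw [Function.onFun, Set.disjoint_left]
    rintro y ⟨-, hyi⟩ ⟨-, hyj⟩
    exact hij (Subtype.ext (hyi ▸ hyj))
  set P : Set ℝ := E \ Nn with hPdef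
  have hPmeas : MeasurableSet P := hEmeas.diff hNnmeas
  have hPsub : P ⊆ Set.Icc 0 z := (Set.diff_subset).trans hEsub
  -- pointwise identification on P
  have hPw : ∀ y ∈ P, w (s y) = g' y := by
    rintro y ⟨⟨hyI, hys⟩, hyN⟩
    have htD : s y ∉ Dset I s := by
      intro htD
      apply hyN
      simp only [hNndef, Set.mem_iUnion]
      exact ⟨⟨s y, htD, hsnn y hyI, hys⟩, hyI, rfl⟩
    have hyz : y ≤ z := (hEsub ⟨hyI, hys⟩).2
    have hun : ∀ y' ∈ I, s y' = s y → y' = y :=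
      fun y' hy' hsy' => huniq (s y) htD y hyI rfl y' hy' hsy'
    have hσt : σ (s y) = y := sigmaInv_singleton hmono hyI (hInn y hyI) hyz hun
    rw [hwdef]
    simp only [htD, if_false]
    rw [if_pos ⟨by rw [hσt]; exact hyI, by rw [hσt]⟩, hσt]
  -- integrability facts
  have hsE : ∀ y ∈ E, |xh - s y| ≤ xh := by
    rintro y ⟨hyI, hys⟩
    have := hsnn y hyI
    rw [abs_le]
    constructor <;> linarith
  have hθint : MeasureTheory.IntegrableOn (fun y => (xh - s y) * g y) E m := by
    apply MeasureTheory.Integrable.mono'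
      (g := fun y => xh * ‖g y‖)
      ((hgz.norm.const_mul xh).mono_measure (Measure.restrict_mono hEsub le_rfl))
    · exact ((measurable_const.sub hmeas).aestronglyMeasurable).mul
        ((hgz.1).mono_measure (Measure.restrict_mono hEsub le_rfl))
    · rw [MeasureTheory.ae_restrict_iff' hEmeas]
      filter_upwards with y hy
      rw [norm_mul]
      apply mul_le_mul_of_nonneg_right _ (norm_nonneg _)
      exact hsE y hy
  have hθ'int : MeasureTheory.IntegrableOn (fun y => (xh - s y) * g' y) E m := by
    apply MeasureTheory.Integrable.mono'
      (g := fun y => xh * ‖g' y‖)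
      ((hg'int.norm.const_mul xh).mono_measure (Measure.restrict_mono hEsub le_rfl))
    · exact ((measurable_const.sub hmeas).mul hg'meas).aestronglyMeasurable
    · rw [MeasureTheory.ae_restrict_iff' hEmeas]
      filter_upwards with y hy
      rw [norm_mul]
      apply mul_le_mul_of_nonneg_right _ (norm_nonneg _)
      exact hsE y hy
  have hψP : MeasureTheory.IntegrableOn (fun y => (xh - s y) * w (s y)) P m := by
    apply (hθ'int.mono_set Set.diff_subset).congr_fun _ hPmeas
    intro y hy
    dsimp only
    rw [hPw y hy]
  -- the P parts agree
  have hPeq : (∫ y in P, (xh - s y) * w (s y) ∂m) = ∫ y in P, (xh - s y) * g y ∂m := by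
    rw [MeasureTheory.setIntegral_congr_fun hPmeas (fun y hy => by rw [hPw y hy])]
    apply integral_congr_ae
    have : g' =ᵐ[m.restrict P] g :=
      Filter.EventuallyEq.symm (ae_restrict_of_ae_restrict_of_subset hPsub hgg')
    filter_upwards [this] with y hy
    rw [hy]
  -- per-fiber facts
  have hFfacts : ∀ tc : ↥Dc,
      (∀ y ∈ F tc.val, (xh - s y) * w (s y) = (xh - tc.val) * gtilde m I s g tc.val) ∧
      F tc.val ⊆ Set.Icc 0 z := by
    rintro ⟨t, htD, ht0, htx⟩
    constructor
    · rintro y ⟨hyI, hys⟩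
      rw [hys, hwdef]
      simp only [htD, if_true, hudef]
    · exact hFz t htx
  -- gtilde value on multi-fibers with positive measure
  have hgt_fiber : ∀ tc : ↥Dc, 0 < m (F tc.val) →
      gtilde m I s g tc.val = (∫ x in F tc.val, g x ∂m) / (m (F tc.val)).toReal := by
    rintro ⟨t, htD, ht0, htx⟩ hpos
    have hnex : ¬ ∃! x : ℝ, x ∈ I ∧ s x = t := by
      rintro ⟨x₀, hx₀, hun⟩
      obtain ⟨x₁, h1, x₂, h2, hlt, hs1, hs2⟩ := htD
      have e1 : x₁ = x₀ := hun x₁ ⟨h1, hs1⟩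
      have e2 : x₂ = x₀ := hun x₂ ⟨h2, hs2⟩
      rw [e1, e2] at hlt
      exact lt_irrefl _ hlt
    rw [gtilde, dif_neg hnex, if_pos hpos]
  -- fiber average bound
  have hfib_bound : ∀ tc : ↥Dc,
      ∫⁻ y in F tc.val, ‖(xh - s y) * w (s y)‖₊ ∂m
        ≤ ENNReal.ofReal xh * ∫⁻ y in F tc.val, ‖g y‖₊ ∂m := by
    rintro tc
    obtain ⟨heq, hsub⟩ := hFfacts tc
    obtain ⟨t, htD, ht0, htx⟩ := tc
    rw [MeasureTheory.setLIntegral_congr_fun (hFmeas t)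
      (fun y hy => by
        rw [heq y hy])]
    rw [MeasureTheory.setLIntegral_const]
    rcases eq_or_lt_of_le (zero_le : (0:ENNReal) ≤ m (F t)) with hm0 | hmpos
    · rw [← hm0, mul_zero]
      exact zero_le
    · have hmfin : m (F t) < ⊤ := lt_of_le_of_lt (measure_mono hsub) hfinz
      have hgint_t : MeasureTheory.IntegrableOn g (F t) m := hgz.mono_set hsub
      have hLfin : (∫⁻ y in F t, ‖g y‖₊ ∂m) < ⊤ := hgint_t.2
      set L : ENNReal := ∫⁻ y in F t, ‖g y‖₊ ∂m with hLdef
      have hnormval : ∫ y in F t, ‖g y‖ ∂m = L.toReal := by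
        rw [hLdef]
        exact integral_norm_eq_lintegral_enorm
          ((hgz.1).mono_measure (Measure.restrict_mono hsub le_rfl))
      have hgtv := hgt_fiber ⟨t, htD, ht0, htx⟩ hmpos
      simp only at hgtv
      have habs : |gtilde m I s g t| ≤ L.toReal / (m (F t)).toReal := by
        rw [hgtv, abs_div, abs_of_nonneg ENNReal.toReal_nonneg]
        gcongr
        calc |∫ x in F t, g x ∂m| = ‖∫ x in F t, g x ∂m‖ := (Real.norm_eq_abs _).symm
            _ ≤ ∫ x in F t, ‖g x‖ ∂m := norm_integral_le_integral_norm _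
            _ = L.toReal := hnormval
      -- now conclude in ENNReal
      have h1 : (‖(xh - t) * gtilde m I s g t‖₊ : ENNReal)
          = ENNReal.ofReal |xh - t| * ENNReal.ofReal |gtilde m I s g t| := by
        rw [← ENNReal.ofReal_mul (abs_nonneg _), ← abs_mul]
        rw [← Real.enorm_eq_ofReal_abs]
        exact (enorm_eq_nnnorm _).symm
      rw [h1]
      have h2 : ENNReal.ofReal |xh - t| ≤ ENNReal.ofReal xh := by
        apply ENNReal.ofReal_le_ofReal
        rw [abs_of_nonneg (by linarith)]
        linarith
      have h3 : ENNReal.ofReal |gtilde m I s g t| * m (F t) ≤ L := by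
        calc ENNReal.ofReal |gtilde m I s g t| * m (F t)
            ≤ ENNReal.ofReal (L.toReal / (m (F t)).toReal) * m (F t) := by
              exact mul_le_mul_left (ENNReal.ofReal_le_ofReal habs) _
          _ = L / m (F t) * m (F t) := by
              rw [ENNReal.ofReal_div_of_pos (ENNReal.toReal_pos hmpos.ne' hmfin.ne),
                ENNReal.ofReal_toReal hLfin.ne, ENNReal.ofReal_toReal hmfin.ne]
          _ = L := ENNReal.div_mul_cancel hmpos.ne' hmfin.ne
      calc ENNReal.ofReal |xh - t| * ENNReal.ofReal |gtilde m I s g t| * m (F t)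
          = ENNReal.ofReal |xh - t| * (ENNReal.ofReal |gtilde m I s g t| * m (F t)) := by ring
        _ ≤ ENNReal.ofReal xh * L := mul_le_mul' h2 h3
  -- integrability of the w-integrand on Nn
  have hgNn_lint : (∫⁻ y in Nn, ‖g y‖₊ ∂m) < ⊤ := by
    apply lt_of_le_of_lt _ hgz.2
    exact lintegral_mono_set (hNnE.trans hEsub)
  have hψNn : MeasureTheory.IntegrableOn (fun y => (xh - s y) * w (s y)) Nn m := by
    constructor
    · exact (((measurable_const.sub hmeas).mul (hwmeas.comp hmeas)).aestronglyMeasurable)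
    · rw [MeasureTheory.hasFiniteIntegral_def, hNndef,
        lintegral_iUnion (fun t : ↥Dc => hFmeas t.val) hdisj]
      calc (∑' tc : ↥Dc, ∫⁻ y in F tc.val, ‖(xh - s y) * w (s y)‖₊ ∂m)
          ≤ ∑' tc : ↥Dc, ENNReal.ofReal xh * ∫⁻ y in F tc.val, ‖g y‖₊ ∂m :=
            ENNReal.tsum_le_tsum hfib_bound
        _ = ENNReal.ofReal xh * ∑' tc : ↥Dc, ∫⁻ y in F tc.val, ‖g y‖₊ ∂m :=
            ENNReal.tsum_mul_left
        _ = ENNReal.ofReal xh * ∫⁻ y in Nn, ‖g y‖₊ ∂m := by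
            rw [hNndef, lintegral_iUnion (fun t : ↥Dc => hFmeas t.val) hdisj]
        _ < ⊤ := ENNReal.mul_lt_top ENNReal.ofReal_lt_top hgNn_lint
  have hθNn : MeasureTheory.IntegrableOn (fun y => (xh - s y) * g y) Nn m :=
    hθint.mono_set hNnE
  -- the Nn parts agree
  have hNneq : (∫ y in Nn, (xh - s y) * w (s y) ∂m) = ∫ y in Nn, (xh - s y) * g y ∂m := by
    rw [hNndef, integral_iUnion (fun t : ↥Dc => hFmeas t.val) hdisj (hNndef ▸ hψNn),
      integral_iUnion (fun t : ↥Dc => hFmeas t.val) hdisj (hNndef ▸ hθNn)]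
    apply tsum_congr
    rintro tc
    obtain ⟨heq, hsub⟩ := hFfacts tc
    have hmfin : m (F tc.val) < ⊤ := lt_of_le_of_lt (measure_mono hsub) hfinz
    rw [MeasureTheory.setIntegral_congr_fun (hFmeas tc.val) (fun y hy => heq y hy)]
    rw [MeasureTheory.setIntegral_const]
    have : (∫ y in F tc.val, (xh - s y) * g y ∂m)
        = ∫ y in F tc.val, (xh - tc.val) * g y ∂m := by
      apply MeasureTheory.setIntegral_congr_fun (hFmeas tc.val)
      rintro y ⟨hyI, hys⟩
      dsimp only
      rw [hys]
    rw [this, MeasureTheory.integral_const_mul]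
    rcases eq_or_lt_of_le (zero_le : (0:ENNReal) ≤ m (F tc.val)) with hm0 | hmpos
    · rw [measureReal_def, ← hm0]
      have : m.restrict (F tc.val) = 0 := by
        rw [Measure.restrict_eq_zero]
        exact hm0.symm
      rw [this]
      simp
    · rw [hgt_fiber tc hmpos, smul_eq_mul, measureReal_def]
      have hne : (m (F tc.val)).toReal ≠ 0 := (ENNReal.toReal_pos hmpos.ne' hmfin.ne).ne'
      field_simp
  -- assemble
  have hEeq : E = P ∪ Nn := by
    rw [hPdef, Set.diff_union_of_subset hNnE]
  have hθP : MeasureTheory.IntegrableOn (fun y => (xh - s y) * g y) P m :=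
    hθint.mono_set Set.diff_subset
  have hdisjPN : Disjoint P Nn := Set.disjoint_sdiff_left
  calc (∫ yh in Set.Ico 0 xh, (xh - yh) * gtilde m I s g yh ∂(Measure.map s m))
      = ∫ y in E, (xh - s y) * w (s y) ∂m := by rw [step1, step2]
    _ = (∫ y in P, (xh - s y) * w (s y) ∂m) + ∫ y in Nn, (xh - s y) * w (s y) ∂m := by
        rw [hEeq, MeasureTheory.setIntegral_union hdisjPN hNnmeas hψP hψNn]
    _ = (∫ y in P, (xh - s y) * g y ∂m) + ∫ y in Nn, (xh - s y) * g y ∂m := by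
        rw [hPeq, hNneq]
    _ = ∫ y in E, (xh - s y) * g y ∂m := by
        rw [hEeq, MeasureTheory.setIntegral_union hdisjPN hNnmeas hθP hθNn]
lemma bridge
    {r : EReal} {I : Set ℝ}
    (hr : 0 < r)
    (hI : I = Ilt r ∨ ∃ rr : ℝ, r = (rr:EReal) ∧ I = Set.Icc 0 rr)
    {s : ℝ → ℝ} (hmono : MonotoneOn s I) (hs0 : s 0 = 0) (hmeas : Measurable s)
    {m : Measure ℝ} (hmI : m Iᶜ = 0)
    {g : ℝ → ℝ} {x : ℝ} (hx : 0 < x) (hxI : x ∈ Ilt r)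
    (hgx : MeasureTheory.IntegrableOn g (Set.Icc 0 x) m) :
    (∫ y in Set.Ico 0 x, (s x - s y) * g y ∂m) = Kfun m I s g (s x) := by
  have hImeas : MeasurableSet I := measurableSet_I hI
  have hInn : ∀ y ∈ I, (0:ℝ) ≤ y := I_nonneg hI
  have hsnn : ∀ y ∈ I, 0 ≤ s y := s_nonneg hr hI hmono hs0
  have hxI' : x ∈ I := Ilt_subset_I hr hI hxI
  set A : Set ℝ := Set.Ico 0 x ∩ I with hAdef
  have hAmeas : MeasurableSet A := measurableSet_Ico.inter hImeas
  have step1 : (∫ y in Set.Ico 0 x, (s x - s y) * g y ∂m)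
      = ∫ y in A, (s x - s y) * g y ∂m := by
    apply (setIntegral_congr_set _).symm
    rw [MeasureTheory.ae_eq_set]
    constructor
    · apply measure_mono_null (t := (∅ : Set ℝ)) _ (by simp)
      rintro y ⟨⟨hy1, -⟩, hy2⟩
      exact hy2 hy1
    · apply measure_mono_null (t := Iᶜ) _ hmI
      rintro y ⟨hy1, hy2⟩
      intro hyI
      exact hy2 ⟨hy1, hyI⟩
  set E : Set ℝ := Efib I s (s x) with hEdef
  have hEmeas : MeasurableSet E := hImeas.inter (hmeas measurableSet_Iio)
  have hEsubA : E ⊆ A := by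
    rintro y ⟨hyI, hys⟩
    refine ⟨⟨hInn y hyI, ?_⟩, hyI⟩
    by_contra hyx
    push_neg at hyx
    have := hmono hxI' hyI hyx
    linarith
  set Z : Set ℝ := A \ E with hZdef
  have hZmeas : MeasurableSet Z := hAmeas.diff hEmeas
  have hZval : ∀ y ∈ Z, s y = s x := by
    rintro y ⟨⟨⟨hy0, hyx⟩, hyI⟩, hyE⟩
    have h1 : s y ≤ s x := hmono hyI hxI' hyx.le
    rcases eq_or_lt_of_le h1 with h | h
    · exact h
    · exact absurd ⟨hyI, h⟩ hyE
  have hAsub : A ⊆ Set.Icc 0 x := fun y hy => ⟨hy.1.1, hy.1.2.le⟩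
  have hintA : MeasureTheory.IntegrableOn (fun y => (s x - s y) * g y) A m := by
    apply MeasureTheory.Integrable.mono'
      (g := fun y => (s x) * ‖g y‖)
      ((hgx.norm.const_mul (s x)).mono_measure (Measure.restrict_mono hAsub le_rfl))
    · exact ((measurable_const.sub hmeas).aestronglyMeasurable).mul
        ((hgx.1).mono_measure (Measure.restrict_mono hAsub le_rfl))
    · rw [MeasureTheory.ae_restrict_iff' hAmeas]
      filter_upwards with y hy
      rw [norm_mul]
      apply mul_le_mul_of_nonneg_right _ (norm_nonneg _)
      have h1 : 0 ≤ s y := hsnn y hy.2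
      have h2 : s y ≤ s x := hmono hy.2 hxI' hy.1.2.le
      rw [Real.norm_eq_abs, abs_le]
      constructor <;> linarith
  have hAeq : A = E ∪ Z := by
    rw [hZdef, Set.union_diff_cancel hEsubA]
  have hdisj : Disjoint E Z := Set.disjoint_sdiff_right
  have hZzero : (∫ y in Z, (s x - s y) * g y ∂m) = 0 := by
    rw [MeasureTheory.setIntegral_congr_fun hZmeas
      (g := fun _ => (0:ℝ)) (fun y hy => by dsimp only; rw [hZval y hy]; ring)]
    simp
  rw [step1, hAeq, MeasureTheory.setIntegral_union hdisj hZmeas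
    (hintA.mono_set (hAeq ▸ Set.subset_union_left))
    (hintA.mono_set (hAeq ▸ Set.subset_union_right)), hZzero, add_zero]
  rfl

section KfunAnalysis
variable {r : EReal} {I : Set ℝ} {s : ℝ → ℝ} {m : Measure ℝ} {g : ℝ → ℝ}

lemma Efib_subset_Icc
    (hI : I = Ilt r ∨ ∃ rr : ℝ, r = (rr:EReal) ∧ I = Set.Icc 0 rr)
    (hmono : MonotoneOn s I) {z c : ℝ} (hzI : z ∈ I) (hcz : c ≤ s z) :
    Efib I s c ⊆ Set.Icc 0 z := by
  rintro y ⟨hyI, hys⟩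
  refine ⟨I_nonneg hI y hyI, ?_⟩
  by_contra hyz
  push_neg at hyz
  have := hmono hzI hyI hyz.le
  linarith

lemma krepr
    (hr : 0 < r)
    (hI : I = Ilt r ∨ ∃ rr : ℝ, r = (rr:EReal) ∧ I = Set.Icc 0 rr)
    (hmono : MonotoneOn s I) (hs0 : s 0 = 0) (hmeas : Measurable s)
    {z xh : ℝ} (hzI : z ∈ I) (hgz : MeasureTheory.IntegrableOn g (Set.Icc 0 z) m)
    (hxh : 0 < xh) (hxz : xh ≤ s z) :
    Kfun m I s g xh = ∫ y in Efib I s (s z), max (xh - s y) 0 * g y ∂m := by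
  have hImeas : MeasurableSet I := measurableSet_I hI
  have hsnn : ∀ y ∈ I, 0 ≤ s y := s_nonneg hr hI hmono hs0
  set Ec : Set ℝ := Efib I s (s z) with hEcdef
  have hEcmeas : MeasurableSet Ec := hImeas.inter (hmeas measurableSet_Iio)
  have hEmeas : MeasurableSet (Efib I s xh) := hImeas.inter (hmeas measurableSet_Iio)
  have hEsub : Efib I s xh ⊆ Ec := fun y hy => ⟨hy.1, lt_of_lt_of_le hy.2 hxz⟩
  have hEcsub : Ec ⊆ Set.Icc 0 z := Efib_subset_Icc hI hmono hzI le_rfl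
  have hint : MeasureTheory.IntegrableOn (fun y => max (xh - s y) 0 * g y) Ec m := by
    apply MeasureTheory.Integrable.mono'
      (g := fun y => xh * ‖g y‖)
      ((hgz.norm.const_mul xh).mono_measure (Measure.restrict_mono hEcsub le_rfl))
    · exact (((measurable_const.sub hmeas).max measurable_const).aestronglyMeasurable).mul
        ((hgz.1).mono_measure (Measure.restrict_mono hEcsub le_rfl))
    · rw [MeasureTheory.ae_restrict_iff' hEcmeas]
      filter_upwards with y hy
      rw [norm_mul]
      apply mul_le_mul_of_nonneg_right _ (norm_nonneg _)
      have h1 : 0 ≤ s y := hsnn y hy.1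
      rw [Real.norm_eq_abs, abs_le]
      constructor
      · have : (0:ℝ) ≤ max (xh - s y) 0 := le_max_right _ _
        linarith
      · apply max_le (by linarith) (by linarith)
  have hsplit : Ec = Efib I s xh ∪ (Ec \ Efib I s xh) :=
    (Set.union_diff_cancel hEsub).symm
  have hdisj : Disjoint (Efib I s xh) (Ec \ Efib I s xh) := Set.disjoint_sdiff_right
  rw [hsplit, MeasureTheory.setIntegral_union hdisj (hEcmeas.diff hEmeas)
    (hint.mono_set hEsub) (hint.mono_set Set.diff_subset)]
  have h2 : (∫ y in Ec \ Efib I s xh, max (xh - s y) 0 * g y ∂m) = 0 := by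
    rw [MeasureTheory.setIntegral_congr_fun (hEcmeas.diff hEmeas)
      (g := fun _ => (0:ℝ))]
    · simp
    · rintro y ⟨hyEc, hyE⟩
      dsimp only
      have : ¬ s y < xh := fun h => hyE ⟨hyEc.1, h⟩
      push_neg at this
      rw [max_eq_right (by linarith)]
      ring
  have h1 : (∫ y in Efib I s xh, max (xh - s y) 0 * g y ∂m) = Kfun m I s g xh := by
    apply MeasureTheory.setIntegral_congr_fun hEmeas
    rintro y ⟨hyI, hys⟩
    dsimp only
    rw [max_eq_left (by linarith)]
  rw [h1, h2, add_zero]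

lemma klip
    (hr : 0 < r)
    (hI : I = Ilt r ∨ ∃ rr : ℝ, r = (rr:EReal) ∧ I = Set.Icc 0 rr)
    (hmono : MonotoneOn s I) (hs0 : s 0 = 0) (hmeas : Measurable s)
    {z u v : ℝ} (hzI : z ∈ I) (hgz : MeasureTheory.IntegrableOn g (Set.Icc 0 z) m)
    (hu : 0 < u) (huv : u ≤ v) (hvz : v ≤ s z) :
    |Kfun m I s g v - Kfun m I s g u|
      ≤ (v - u) * ∫ y in Efib I s (s z), |g y| ∂m := by
  have hImeas : MeasurableSet I := measurableSet_I hI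
  set Ec : Set ℝ := Efib I s (s z) with hEcdef
  have hEcmeas : MeasurableSet Ec := hImeas.inter (hmeas measurableSet_Iio)
  have hEcsub : Ec ⊆ Set.Icc 0 z := Efib_subset_Icc hI hmono hzI le_rfl
  have hgEc : MeasureTheory.IntegrableOn g Ec m := hgz.mono_set hEcsub
  have hsnn : ∀ y ∈ I, 0 ≤ s y := s_nonneg hr hI hmono hs0
  have hint : ∀ c : ℝ, 0 < c → c ≤ s z →
      MeasureTheory.IntegrableOn (fun y => max (c - s y) 0 * g y) Ec m := by
    intro c hc hcz
    apply MeasureTheory.Integrable.mono'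
      (g := fun y => c * ‖g y‖)
      ((hgz.norm.const_mul c).mono_measure (Measure.restrict_mono hEcsub le_rfl))
    · exact (((measurable_const.sub hmeas).max measurable_const).aestronglyMeasurable).mul
        ((hgz.1).mono_measure (Measure.restrict_mono hEcsub le_rfl))
    · rw [MeasureTheory.ae_restrict_iff' hEcmeas]
      filter_upwards with y hy
      rw [norm_mul]
      apply mul_le_mul_of_nonneg_right _ (norm_nonneg _)
      have h1 : 0 ≤ s y := hsnn y hy.1
      rw [Real.norm_eq_abs, abs_le]
      constructor
      · have : (0:ℝ) ≤ max (c - s y) 0 := le_max_right _ _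
        linarith
      · apply max_le (by linarith) (by linarith)
  rw [krepr hr hI hmono hs0 hmeas hzI hgz hu (huv.trans hvz),
    krepr hr hI hmono hs0 hmeas hzI hgz (lt_of_lt_of_le hu huv) hvz,
    ← MeasureTheory.integral_sub (hint v (lt_of_lt_of_le hu huv) hvz) (hint u hu (huv.trans hvz))]
  have hbound : ∀ y ∈ Ec,
      ‖max (v - s y) 0 * g y - max (u - s y) 0 * g y‖ ≤ (v - u) * |g y| := by
    intro y hy
    rw [← sub_mul, norm_mul, Real.norm_eq_abs, Real.norm_eq_abs]
    apply mul_le_mul_of_nonneg_right _ (abs_nonneg _)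
    have := abs_max_sub_max_le_abs (v - s y) (u - s y) 0
    calc |max (v - s y) 0 - max (u - s y) 0| ≤ |v - s y - (u - s y)| := this
      _ = v - u := by rw [show v - s y - (u - s y) = v - u by ring, abs_of_nonneg (by linarith)]
  calc |∫ y in Ec, (max (v - s y) 0 * g y - max (u - s y) 0 * g y) ∂m|
      ≤ ∫ y in Ec, (v - u) * |g y| ∂m := by
        rw [← Real.norm_eq_abs]
        apply norm_integral_le_of_norm_le
        · exact (hgEc.abs.const_mul (v - u))
        · rw [MeasureTheory.ae_restrict_iff' hEcmeas]
          filter_upwards with y hy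
          exact hbound y hy
    _ = (v - u) * ∫ y in Ec, |g y| ∂m := MeasureTheory.integral_const_mul _ _

end KfunAnalysis

def Ffib (I : Set ℝ) (s : ℝ → ℝ) (t : ℝ) : Set ℝ := {y | y ∈ I ∧ s y = t}

lemma kgap
    {r : EReal} {I : Set ℝ} {s : ℝ → ℝ} {m : Measure ℝ} {g : ℝ → ℝ}
    (hr : 0 < r)
    (hI : I = Ilt r ∨ ∃ rr : ℝ, r = (rr:EReal) ∧ I = Set.Icc 0 rr)
    (hmono : MonotoneOn s I) (hs0 : s 0 = 0) (hmeas : Measurable s)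
    {z α β : ℝ} (hzI : z ∈ I) (hgz : MeasureTheory.IntegrableOn g (Set.Icc 0 z) m)
    (hα : 0 < α) (hαβ : α < β) (hβz : β ≤ s z)
    (hgapI : ∀ y ∈ I, s y < β → s y ≤ α) :
    ∀ xh : ℝ, α < xh → xh ≤ β →
      Kfun m I s g xh = Kfun m I s g α
        + (xh - α) * ((∫ y in Efib I s α, g y ∂m) + ∫ y in Ffib I s α, g y ∂m) := by
  intro xh hαx hxβ
  have hImeas : MeasurableSet I := measurableSet_I hI
  have hsnn : ∀ y ∈ I, 0 ≤ s y := s_nonneg hr hI hmono hs0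
  have hEαmeas : MeasurableSet (Efib I s α) := hImeas.inter (hmeas measurableSet_Iio)
  have hFαmeas : MeasurableSet (Ffib I s α) :=
    hImeas.inter (hmeas (measurableSet_singleton α))
  have hEαsub : Efib I s α ⊆ Set.Icc 0 z :=
    Efib_subset_Icc hI hmono hzI (by linarith)
  have hFαsub : Ffib I s α ⊆ Set.Icc 0 z := by
    rintro y ⟨hyI, hys⟩
    refine ⟨I_nonneg hI y hyI, ?_⟩
    by_contra hyz
    push_neg at hyz
    have := hmono hzI hyI hyz.le
    linarith
  have hgEα : MeasureTheory.IntegrableOn g (Efib I s α) m := hgz.mono_set hEαsub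
  have hgFα : MeasureTheory.IntegrableOn g (Ffib I s α) m := hgz.mono_set hFαsub
  have hsplit : Efib I s xh = Efib I s α ∪ Ffib I s α := by
    ext y
    constructor
    · rintro ⟨hyI, hys⟩
      have h1 : s y ≤ α := hgapI y hyI (lt_of_lt_of_le hys hxβ)
      rcases eq_or_lt_of_le h1 with h | h
      · exact Or.inr ⟨hyI, h⟩
      · exact Or.inl ⟨hyI, h⟩
    · rintro (⟨hyI, hys⟩ | ⟨hyI, hys⟩)
      · exact ⟨hyI, by linarith⟩
      · exact ⟨hyI, by rw [hys]; linarith⟩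
  have hdisj : Disjoint (Efib I s α) (Ffib I s α) := by
    rw [Set.disjoint_left]
    rintro y ⟨-, h1⟩ ⟨-, h2⟩
    rw [h2] at h1
    exact lt_irrefl _ h1
  -- integrability of the kernels
  have hintE : ∀ c : ℝ, MeasureTheory.IntegrableOn (fun y => (c - s y) * g y) (Efib I s α) m := by
    intro c
    apply MeasureTheory.Integrable.mono'
      (g := fun y => (|c| + α) * ‖g y‖)
      ((hgEα.norm.const_mul (|c| + α)))
    · exact ((measurable_const.sub hmeas).aestronglyMeasurable).mul
        ((hgz.1).mono_measure (Measure.restrict_mono hEαsub le_rfl))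
    · rw [MeasureTheory.ae_restrict_iff' hEαmeas]
      filter_upwards with y hy
      rw [norm_mul]
      apply mul_le_mul_of_nonneg_right _ (norm_nonneg _)
      have h1 : 0 ≤ s y := hsnn y hy.1
      have h2 : s y < α := hy.2
      rw [Real.norm_eq_abs]
      have := abs_nonneg c
      have := neg_abs_le c
      have := le_abs_self c
      rw [abs_le]
      constructor <;> linarith
  have hintF : ∀ c : ℝ, MeasureTheory.IntegrableOn (fun y => (c - s y) * g y) (Ffib I s α) m := by
    intro c
    apply MeasureTheory.IntegrableOn.congr_fun (hgFα.const_mul (c - α)) _ hFαmeas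
    rintro y ⟨hyI, hys⟩
    dsimp only
    rw [hys]
  -- compute Kfun xh
  have hKxh : Kfun m I s g xh
      = (∫ y in Efib I s α, (xh - s y) * g y ∂m) + (xh - α) * ∫ y in Ffib I s α, g y ∂m := by
    rw [Kfun, hsplit, MeasureTheory.setIntegral_union hdisj hFαmeas (hintE xh) (hintF xh)]
    congr 1
    rw [MeasureTheory.setIntegral_congr_fun hFαmeas
      (g := fun y => (xh - α) * g y) (fun y hy => by dsimp only; rw [hy.2])]
    exact MeasureTheory.integral_const_mul _ _
  have hlin : (∫ y in Efib I s α, (xh - s y) * g y ∂m)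
      = (∫ y in Efib I s α, (α - s y) * g y ∂m) + (xh - α) * ∫ y in Efib I s α, g y ∂m := by
    rw [← MeasureTheory.integral_const_mul, ← MeasureTheory.integral_add (hintE α)
      (hgEα.const_mul (xh - α))]
    apply MeasureTheory.setIntegral_congr_fun hEαmeas
    intro y hy
    dsimp only
    ring
  rw [hKxh, hlin]
  have : Kfun m I s g α = ∫ y in Efib I s α, (α - s y) * g y ∂m := rfl
  rw [this]
  ring


theorem stmt10 (r : EReal) (hr : 0 < r) (I : Set ℝ)
    (hI : I = Ilt r ∨ ∃ rr : ℝ, r = (rr : EReal) ∧ I = Set.Icc 0 rr)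
    (s : ℝ → ℝ) (hmono : MonotoneOn s I) (hs0 : s 0 = 0)
    (hs0' : Filter.Tendsto s (nhdsWithin 0 (Set.Ioi 0)) (nhds 0))
    (hspos : ∀ x ∈ I, 0 < x → 0 < s x)
    (hslt : ∀ x ∈ Ilt r, ((s x : ℝ) : EReal) < rhat s r)
    (hsr : ∀ rr : ℝ, r = (rr : EReal) → rr ∈ I → ((s rr : ℝ) : EReal) = rhat s r)
    (hmeas : Measurable s)
    (m : Measure ℝ) (hmI : m Iᶜ = 0)
    (hfin : ∀ x ∈ I, m (Set.Icc 0 x) < ⊤)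
    (hm0 : m ({0} : Set ℝ) = 0)
    (hmpos1 : ∀ x ∈ I, x ≠ 0 → 0 < m (Set.Ioc 0 x))
    (hmpos2 : ∀ c : ℝ, 0 < c → (c : EReal) < r → 0 < m {y : ℝ | c < y ∧ (y : EReal) < r})
    (g : ℝ → ℝ) (hg : ∀ x ∈ Ilt r, MeasureTheory.IntegrableOn g (Set.Icc 0 x) m)
    (f : ℝ → ℝ) (hf : f ∈ Cs s r)
    (fh : ℝ → ℝ) (hfh : fh ∈ Chat s I r) (hrel : MatchRel s I r f fh) :
    (∃ a b : ℝ, ∀ x : ℝ, 0 < x → (x : EReal) < r →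
        f x = a + b * s x + ∫ y in Set.Ico 0 x, (s x - s y) * g y ∂m) ↔
    (∃ ah bh : ℝ, ∀ xh : ℝ, 0 < xh → ((xh : ℝ) : EReal) < rhat s r →
        fh xh = ah + bh * xh +
          ∫ yh in Set.Ico 0 xh, (xh - yh) * gtilde m I s g yh ∂(Measure.map s m)) := by

  classical
  have hIltI : Ilt r ⊆ I := Ilt_subset_I hr hI
  have hInn : ∀ y ∈ I, (0:ℝ) ≤ y := I_nonneg hI
  have hsnn : ∀ y ∈ I, 0 ≤ s y := s_nonneg hr hI hmono hs0
  set K : ℝ → ℝ := Kfun m I s g with hKdef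
  -- transfer of the integral expressions
  have htrans : ∀ xh : ℝ, 0 < xh → (xh : EReal) < rhat s r →
      (∫ yh in Set.Ico 0 xh, (xh - yh) * gtilde m I s g yh ∂(Measure.map s m)) = K xh := by
    intro xh hxh hxr
    obtain ⟨z, hz, hxz⟩ := exists_z hxr
    exact transfer hr hI hmono hs0 hmeas hmI (hIltI hz) (hg z hz) (hfin z (hIltI hz)) hxh hxz
  have hbridge : ∀ x : ℝ, 0 < x → (x : EReal) < r →
      (∫ y in Set.Ico 0 x, (s x - s y) * g y ∂m) = K (s x) := by
    intro x hx hxr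
    exact bridge hr hI hmono hs0 hmeas hmI hx ⟨hx.le, hxr⟩ (hg x ⟨hx.le, hxr⟩)
  have hsx : ∀ x : ℝ, 0 < x → (x : EReal) < r → 0 < s x ∧ ((s x : ℝ) : EReal) < rhat s r := by
    intro x hx hxr
    exact ⟨hspos x (hIltI ⟨hx.le, hxr⟩) hx, hslt x ⟨hx.le, hxr⟩⟩
  constructor
  · -- forward direction
    rintro ⟨a, b, hL⟩
    refine ⟨a, b, ?_⟩
    intro xh hxh hxr
    rw [htrans xh hxh hxr]
    -- the real image of s on [0, r)
    set Simg : Set ℝ := s '' (Ilt r) with hSimgdef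
    have hstep1 : ∀ t ∈ Simg, 0 < t → fh t = a + b * t + K t := by
      rintro t ⟨x, hxIlt, rfl⟩ ht
      have hx : 0 < x := by
        rcases eq_or_lt_of_le hxIlt.1 with h | h
        · rw [← h, hs0] at ht; exact absurd ht (lt_irrefl 0)
        · exact h
      have h1 : fh (s x) = f x := hrel.1 x hxIlt
      rw [h1, hL x hx hxIlt.2, hbridge x hx hxIlt.2]
    have hKcont : ∀ p : ℝ, 0 < p → (p : EReal) < rhat s r → ∀ tn : ℕ → ℝ,
        Filter.Tendsto tn Filter.atTop (nhds p) →
        Filter.Tendsto (fun n => K (tn n)) Filter.atTop (nhds (K p)) := by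
      intro p hp hpr tn htn
      obtain ⟨z, hz, hpz⟩ := exists_z hpr
      have hzI : z ∈ I := hIltI hz
      have hgz := hg z hz
      set C : ℝ := ∫ y in Efib I s (s z), |g y| ∂m with hCdef
      have hC : 0 ≤ C := MeasureTheory.integral_nonneg (fun y => abs_nonneg _)
      have hev : ∀ᶠ n in Filter.atTop, tn n ∈ Set.Ioo 0 (s z) :=
        htn (isOpen_Ioo.mem_nhds ⟨hp, hpz⟩)
      have hbnd : ∀ᶠ n in Filter.atTop, |K (tn n) - K p| ≤ |tn n - p| * C := by
        filter_upwards [hev] with n ⟨h0, h1⟩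
        rcases le_total (tn n) p with h | h
        · rw [abs_sub_comm]
          calc |K p - K (tn n)| ≤ (p - tn n) * C :=
                klip hr hI hmono hs0 hmeas hzI hgz h0 h hpz.le
            _ ≤ |tn n - p| * C := by
                apply mul_le_mul_of_nonneg_right _ hC
                rw [abs_sub_comm, abs_of_nonneg (by linarith)]
        · calc |K (tn n) - K p| ≤ (tn n - p) * C :=
                klip hr hI hmono hs0 hmeas hzI hgz hp h h1.le
            _ ≤ |tn n - p| * C := by
                apply mul_le_mul_of_nonneg_right _ hC
                rw [abs_of_nonneg (by linarith)]
      have hz0 : Filter.Tendsto (fun n => |tn n - p| * C) Filter.atTop (nhds 0) := by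
        have h1 : Filter.Tendsto (fun n => tn n - p) Filter.atTop (nhds 0) := by
          have := htn.sub (tendsto_const_nhds (x := p))
          simpa using this
        have := (h1.abs).mul_const C
        simpa using this
      have hsq : Filter.Tendsto (fun n => |K (tn n) - K p|) Filter.atTop (nhds 0) :=
        squeeze_zero' (Filter.Eventually.of_forall (fun n => abs_nonneg _)) hbnd hz0
      have : Filter.Tendsto (fun n => K (tn n) - K p) Filter.atTop (nhds 0) :=
        (tendsto_zero_iff_abs_tendsto_zero _).mpr hsq
      have := this.add (tendsto_const_nhds (x := K p))
      simpa using this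
    have hclosure : ∀ p : ℝ, 0 < p → (p : EReal) < rhat s r → p ∈ closure Simg →
        fh p = a + b * p + K p := by
      intro p hp hpr hpc
      obtain ⟨tn, htnS, htn⟩ := mem_closure_iff_seq_limit.mp hpc
      have hevpos : ∀ᶠ n in Filter.atTop, 0 < tn n :=
        htn (isOpen_Ioi.mem_nhds hp)
      have hShat : ∀ n, tn n ∈ Shat s r := by
        intro n
        obtain ⟨x, hxIlt, hx⟩ := htnS n
        exact ⟨hx ▸ hsnn x (hIltI hxIlt), hx ▸ hslt x hxIlt⟩
      have hfhlim : Filter.Tendsto (fun n => fh (tn n)) Filter.atTop (nhds (fh p)) := by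
        have hcwa : ContinuousWithinAt fh (Shat s r) p := hfh.1 p ⟨hp.le, hpr⟩
        apply hcwa.tendsto.comp
        apply tendsto_nhdsWithin_of_tendsto_nhds_of_eventually_within _ htn
        exact Filter.Eventually.of_forall hShat
      have hKlim : Filter.Tendsto (fun n => a + b * tn n + K (tn n)) Filter.atTop
          (nhds (a + b * p + K p)) := by
        apply Filter.Tendsto.add
        · exact (tendsto_const_nhds.add ((tendsto_const_nhds (x := b)).mul htn))
        · exact hKcont p hp hpr tn htn
      have heq : ∀ᶠ n in Filter.atTop, fh (tn n) = a + b * tn n + K (tn n) := by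
        filter_upwards [hevpos] with n hn
        exact hstep1 (tn n) (htnS n) hn
      apply tendsto_nhds_unique hfhlim
      exact Filter.Tendsto.congr' (by filter_upwards [heq] with n hn; exact hn.symm) hKlim
    by_cases hcl : xh ∈ closure Simg
    · exact hclosure xh hxh hxr hcl
    · -- the gap case
      have hex_below : ∃ t0, t0 ∈ Simg ∧ 0 < t0 ∧ t0 < xh := by
        have hεex : ∃ ε : ℝ, 0 < ε ∧ ∀ x : ℝ, 0 < x → x < ε → (x:EReal) < r := by
          induction r with
          | bot => exact absurd hr (by simp)
          | coe rr =>
            refine ⟨rr, by exact_mod_cast hr, fun x _ hx => ?_⟩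
            exact_mod_cast hx
          | top => exact ⟨1, one_pos, fun x _ _ => EReal.coe_lt_top x⟩
        obtain ⟨ε, hε, hεr⟩ := hεex
        have h1 : ∀ᶠ x in nhdsWithin 0 (Set.Ioi 0), s x < xh :=
          hs0'.eventually_lt_const hxh
        have h2 : ∀ᶠ x in nhdsWithin 0 (Set.Ioi 0), x < ε :=
          Filter.Eventually.filter_mono nhdsWithin_le_nhds (gt_mem_nhds hε)
        have h3 : ∀ᶠ x in nhdsWithin (0:ℝ) (Set.Ioi 0), x ∈ Set.Ioi (0:ℝ) :=
          eventually_mem_nhdsWithin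
        obtain ⟨x, hx1, hx2, hx3⟩ := (h1.and (h2.and h3)).exists
        have hx0 : (0:ℝ) < x := hx3
        have hxIlt : x ∈ Ilt r := ⟨le_of_lt hx0, hεr x hx0 hx2⟩
        exact ⟨s x, ⟨x, hxIlt, rfl⟩, hspos x (hIltI hxIlt) hx0, hx1⟩
      have hex_above : ∃ t1, t1 ∈ Simg ∧ xh < t1 ∧ (t1:EReal) < rhat s r := by
        obtain ⟨z, hz, hxz⟩ := exists_z hxr
        exact ⟨s z, ⟨z, hz, rfl⟩, hxz, hslt z hz⟩
      obtain ⟨t0, ht0S, ht0pos, ht0x⟩ := hex_below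
      obtain ⟨t1, ht1S, hxt1, ht1r⟩ := hex_above
      set α : ℝ := sSup (Simg ∩ Set.Iic xh) with hαdef
      set β : ℝ := sInf (Simg ∩ Set.Ici xh) with hβdef
      have hAne : (Simg ∩ Set.Iic xh).Nonempty := ⟨t0, ht0S, ht0x.le⟩
      have hAbdd : BddAbove (Simg ∩ Set.Iic xh) := ⟨xh, fun t ht => ht.2⟩
      have hBne : (Simg ∩ Set.Ici xh).Nonempty := ⟨t1, ht1S, hxt1.le⟩
      have hBbdd : BddBelow (Simg ∩ Set.Ici xh) := ⟨xh, fun t ht => ht.2⟩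
      have hαcl : α ∈ closure Simg :=
        closure_mono Set.inter_subset_left (csSup_mem_closure hAne hAbdd)
      have hα_le : α ≤ xh := csSup_le hAne (fun t ht => ht.2)
      have hα_pos : 0 < α := lt_of_lt_of_le ht0pos (le_csSup hAbdd ⟨ht0S, ht0x.le⟩)
      have hα_lt : α < xh := lt_of_le_of_ne hα_le (fun h => hcl (h ▸ hαcl))
      have hβcl : β ∈ closure Simg :=
        closure_mono Set.inter_subset_left (csInf_mem_closure hBne hBbdd)
      have hβ_ge : xh ≤ β := le_csInf hBne (fun t ht => ht.2)
      have hβ_le_t1 : β ≤ t1 := csInf_le hBbdd ⟨ht1S, hxt1.le⟩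
      have hβ_gt : xh < β := lt_of_le_of_ne hβ_ge (fun h => hcl (h ▸ hβcl))
      have hβr : (β:EReal) < rhat s r :=
        lt_of_le_of_lt (EReal.coe_le_coe_iff.mpr hβ_le_t1) ht1r
      have hαβ : α < β := hα_lt.trans hβ_gt
      have hgapS : ∀ t ∈ Simg, ¬(α < t ∧ t < β) := by
        rintro t htS ⟨h1, h2⟩
        rcases le_total t xh with h | h
        · exact absurd (le_csSup hAbdd ⟨htS, h⟩) (not_le.mpr h1)
        · exact absurd (csInf_le hBbdd ⟨htS, h⟩) (not_le.mpr h2)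
      have hgapI : ∀ y ∈ I, s y < β → s y ≤ α := by
        intro y hyI hyβ
        by_contra hlt
        push_neg at hlt
        by_cases hyIlt : y ∈ Ilt r
        · exact hgapS (s y) ⟨y, hyIlt, rfl⟩ ⟨hlt, hyβ⟩
        · rcases hI with hI' | ⟨rr, hrr, hI'⟩
          · rw [hI'] at hyI
            exact hyIlt hyI
          · have hy0 : (0:ℝ) ≤ y := hInn y hyI
            have hnlt : ¬((y:EReal) < r) := fun h => hyIlt ⟨hy0, h⟩
            have hyrr : y = rr := by
              apply le_antisymm ((hI' ▸ hyI).2)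
              by_contra hc
              push_neg at hc
              exact hnlt (hrr ▸ EReal.coe_lt_coe_iff.mpr hc)
            have hrrI : rr ∈ I := by
              rw [hI']
              refine ⟨?_, le_rfl⟩
              have : ((0:ℝ):EReal) < (rr:EReal) := by rw [← hrr]; exact_mod_cast hr
              exact_mod_cast this.le
            have h2 : ((s y:ℝ):EReal) = rhat s r := by rw [hyrr]; exact hsr rr hrr hrrI
            have h3 : ((s y:ℝ):EReal) < (β:EReal) := EReal.coe_lt_coe_iff.mpr hyβ
            rw [h2] at h3
            exact absurd (h3.trans hβr) (lt_irrefl _)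
      obtain ⟨z', hz', hβz'⟩ := exists_z hβr
      have hz'I : z' ∈ I := hIltI hz'
      have hkg := kgap hr hI hmono hs0 hmeas hz'I (hg z' hz') hα_pos hαβ hβz'.le hgapI
      set Cg : ℝ := (∫ y in Efib I s α, g y ∂m) + ∫ y in Ffib I s α, g y ∂m with hCgdef
      have hαr : (α:EReal) < rhat s r :=
        lt_trans (EReal.coe_lt_coe_iff.mpr hα_lt) hxr
      have hFα : fh α = a + b * α + K α := hclosure α hα_pos hαr hαcl
      have hFβ : fh β = a + b * β + K β := hclosure β (hxh.trans hβ_gt) hβr hβcl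
      -- the gap is inside Shat and outside Ihat
      have hsub : Set.Ioo α β ⊆ Shat s r \ {x : ℝ | (x:EReal) ∈ Ihat s I r} := by
        rintro t ⟨h1, h2⟩
        constructor
        · exact ⟨le_of_lt (hα_pos.trans h1),
            lt_trans (EReal.coe_lt_coe_iff.mpr h2) hβr⟩
        · intro htI
          simp only [Set.mem_setOf_eq] at htI
          have hIc : (t:EReal) ∈ closure (sImage s I) := by
            rw [Ihat] at htI
            split_ifs at htI with h
            · exact htI
            · exact htI.1
          have hU : IsOpen (Set.Ioo ((α:ℝ):EReal) ((β:ℝ):EReal)) := isOpen_Ioo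
          have hmem : (t:EReal) ∈ Set.Ioo ((α:ℝ):EReal) ((β:ℝ):EReal) :=
            ⟨EReal.coe_lt_coe_iff.mpr h1, EReal.coe_lt_coe_iff.mpr h2⟩
          obtain ⟨e, heU, heS⟩ := mem_closure_iff.mp hIc _ hU hmem
          obtain ⟨x, hxI, rfl⟩ := heS
          have hsx1 : α < s x := EReal.coe_lt_coe_iff.mp heU.1
          have hsx2 : s x < β := EReal.coe_lt_coe_iff.mp heU.2
          exact absurd (hgapI x hxI hsx2) (not_le.mpr hsx1)
      -- the approximating sequences
      set un : ℕ → ℝ := fun n => α + (xh - α) * ((n:ℝ)+2)⁻¹ with hundef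
      set wn : ℕ → ℝ := fun n => β - (β - xh) * ((n:ℝ)+2)⁻¹ with hwndef
      have hinv : ∀ n : ℕ, 0 < ((n:ℝ)+2)⁻¹ ∧ ((n:ℝ)+2)⁻¹ < 1 := by
        intro n
        have h2 : (1:ℝ) < (n:ℝ)+2 := by
          have : (0:ℝ) ≤ (n:ℝ) := Nat.cast_nonneg n
          linarith
        constructor
        · positivity
        · rw [inv_lt_one_iff₀]
          right
          exact h2
      have hun_mem : ∀ n, α < un n ∧ un n < xh := by
        intro n
        obtain ⟨hp, hl⟩ := hinv n
        constructor
        · have : 0 < (xh - α) * ((n:ℝ)+2)⁻¹ := mul_pos (by linarith) hp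
          simp only [hundef]
          linarith
        · have : (xh - α) * ((n:ℝ)+2)⁻¹ < (xh - α) * 1 := by
            apply mul_lt_mul_of_pos_left hl (by linarith)
          simp only [hundef]
          linarith
      have hwn_mem : ∀ n, xh < wn n ∧ wn n < β := by
        intro n
        obtain ⟨hp, hl⟩ := hinv n
        constructor
        · have : (β - xh) * ((n:ℝ)+2)⁻¹ < (β - xh) * 1 := by
            apply mul_lt_mul_of_pos_left hl (by linarith)
          simp only [hwndef]
          linarith
        · have : 0 < (β - xh) * ((n:ℝ)+2)⁻¹ := mul_pos (by linarith) hp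
          simp only [hwndef]
          linarith
      set tns : ℕ → ℝ := fun n => (wn n - xh)/(wn n - un n) with htnsdef
      have htn_mem : ∀ n, tns n ∈ Set.Icc (0:ℝ) 1 := by
        intro n
        obtain ⟨hu1, hu2⟩ := hun_mem n
        obtain ⟨hw1, hw2⟩ := hwn_mem n
        constructor
        · apply div_nonneg (by linarith) (by linarith)
        · rw [div_le_one (by linarith)]
          linarith
      have hcomb : ∀ n, tns n * un n + (1 - tns n) * wn n = xh := by
        intro n
        obtain ⟨hu1, hu2⟩ := hun_mem n
        obtain ⟨hw1, hw2⟩ := hwn_mem n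
        have hden : wn n - un n ≠ 0 := by linarith
        simp only [htnsdef]
        field_simp
        ring
      have hfh_eq : ∀ n, fh xh = tns n * fh (un n) + (1 - tns n) * fh (wn n) := by
        intro n
        have := hfh.2 α β hsub (un n) ⟨(hun_mem n).1, (hun_mem n).2.trans hβ_gt⟩
          (wn n) ⟨hα_lt.trans (hwn_mem n).1, (hwn_mem n).2⟩ (tns n) (htn_mem n)
        rw [hcomb n] at this
        exact this
      -- limits
      have hinvlim : Filter.Tendsto (fun n : ℕ => ((n:ℝ)+2)⁻¹) Filter.atTop (nhds 0) := by
        apply Filter.Tendsto.inv_tendsto_atTop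
        exact tendsto_atTop_add_const_right _ 2 tendsto_natCast_atTop_atTop
      have hun_lim : Filter.Tendsto un Filter.atTop (nhds α) := by
        have := (tendsto_const_nhds (x := α)).add
          (((tendsto_const_nhds (x := xh - α)).mul hinvlim))
        simpa using this
      have hwn_lim : Filter.Tendsto wn Filter.atTop (nhds β) := by
        have := (tendsto_const_nhds (x := β)).sub
          (((tendsto_const_nhds (x := β - xh)).mul hinvlim))
        simpa using this
      have hβα : β - α ≠ 0 := by linarith
      have htn_lim : Filter.Tendsto tns Filter.atTop (nhds ((β - xh)/(β - α))) := by
        apply Filter.Tendsto.div (hwn_lim.sub_const xh) (hwn_lim.sub hun_lim) hβα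
      have hαShat : α ∈ Shat s r := ⟨hα_pos.le, hαr⟩
      have hβShat : β ∈ Shat s r := ⟨(hxh.trans hβ_gt).le, hβr⟩
      have hfh_un : Filter.Tendsto (fun n => fh (un n)) Filter.atTop (nhds (fh α)) := by
        apply (hfh.1 α hαShat).tendsto.comp
        apply tendsto_nhdsWithin_of_tendsto_nhds_of_eventually_within _ hun_lim
        apply Filter.Eventually.of_forall
        intro n
        exact (hsub ⟨(hun_mem n).1, (hun_mem n).2.trans hβ_gt⟩).1
      have hfh_wn : Filter.Tendsto (fun n => fh (wn n)) Filter.atTop (nhds (fh β)) := by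
        apply (hfh.1 β hβShat).tendsto.comp
        apply tendsto_nhdsWithin_of_tendsto_nhds_of_eventually_within _ hwn_lim
        apply Filter.Eventually.of_forall
        intro n
        exact (hsub ⟨hα_lt.trans (hwn_mem n).1, (hwn_mem n).2⟩).1
      have hRlim : Filter.Tendsto (fun n => tns n * fh (un n) + (1 - tns n) * fh (wn n))
          Filter.atTop
          (nhds ((β - xh)/(β - α) * fh α + (1 - (β - xh)/(β - α)) * fh β)) := by
        apply Filter.Tendsto.add
        · exact htn_lim.mul hfh_un
        · exact (((tendsto_const_nhds (x := (1:ℝ))).sub htn_lim).mul hfh_wn)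
      have hconst : fh xh = (β - xh)/(β - α) * fh α + (1 - (β - xh)/(β - α)) * fh β := by
        apply tendsto_nhds_unique (f := fun _ : ℕ => fh xh) (l := Filter.atTop)
          tendsto_const_nhds
        exact hRlim.congr (fun n => (hfh_eq n).symm)
      have hKxh : K xh = K α + (xh - α) * Cg := hkg xh hα_lt hβ_gt.le
      have hKβ : K β = K α + (β - α) * Cg := hkg β hαβ le_rfl
      rw [hconst, hFα, hFβ, hKβ, hKxh]
      field_simp
      ring
  · -- backward direction
    rintro ⟨ah, bh, hR⟩
    refine ⟨ah, bh, ?_⟩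
    intro x hx hxr
    obtain ⟨hsxpos, hsxlt⟩ := hsx x hx hxr
    have h1 : fh (s x) = f x := hrel.1 x ⟨hx.le, hxr⟩
    have h2 := hR (s x) hsxpos hsxlt
    rw [htrans (s x) hsxpos hsxlt] at h2
    rw [hbridge x hx hxr, ← h1, h2]
end
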